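/- arXiv:1608.06797 — 2 statements merged into one kernel-verified Lean document; each statement's English description precedes it below -/
import Mathlib

section
/- Let G=(V,E) be a finite simple graph with Gallai–Edmonds decomposition V = X ∪ Y ∪ Z, and let (M,y,c) be a feasible MFASP solution satisfying properties (a)–(d). Let K be a nontrivial connected component of G[X] that contains a vertex u with y_u = 0, and suppose there is an edge e' = {v,w} ∈ M with v ∈ V(K), w ∈ Y, and y_w ≥ 1/2. Then ∑_{e ∈ E(K)} c_e + c_{e'} ≥ y_w. -/
open Finset
open scoped Classical

noncomputable section

namespace Stab

variable {V : Type*}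

/-- A matching of `G`: a finite set of edges of `G` that are pairwise vertex-disjoint. -/
def IsMatching (G : SimpleGraph V) (M : Finset (Sym2 V)) : Prop :=
  (∀ e ∈ M, e ∈ G.edgeSet) ∧
    ∀ e ∈ M, ∀ f ∈ M, e ≠ f → ∀ v : V, v ∈ e → v ∉ f

/-- `v` is exposed by `M` (no edge of `M` contains it). -/
def Exposed (M : Finset (Sym2 V)) (v : V) : Prop := ∀ e ∈ M, v ∉ e

/-- total `w`-weight of a finite set of edges -/
def weight (w : Sym2 V → ℝ) (M : Finset (Sym2 V)) : ℝ := ∑ e ∈ M, w e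

/-- the edge set of `G`, as a finset -/
def edgeFin [Fintype V] [DecidableEq V] (G : SimpleGraph V) : Finset (Sym2 V) :=
  Finset.univ.filter fun e => e ∈ G.edgeSet

/-- the edges of `G` having both endpoints in `S` -/
def edgesIn [Fintype V] [DecidableEq V] (G : SimpleGraph V) (S : Set V) : Finset (Sym2 V) :=
  Finset.univ.filter fun e => e ∈ G.edgeSet ∧ ∀ v ∈ e, v ∈ S

/-- `ν(G,w)`: the maximum total `w`-weight of a matching of `G` -/
def nuW (G : SimpleGraph V) (w : Sym2 V → ℝ) : ℝ :=
  sSup {x | ∃ M, IsMatching G M ∧ x = weight w M}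

/-- `y` is a fractional `w`-vertex cover of `G` -/
def IsFracCover (G : SimpleGraph V) (w : Sym2 V → ℝ) (y : V → ℝ) : Prop :=
  (∀ v, 0 ≤ y v) ∧ ∀ u v : V, G.Adj u v → w s(u, v) ≤ y u + y v

/-- `τ_f(G,w)`: the minimum value of a fractional `w`-vertex cover of `G` -/
def tauW [Fintype V] (G : SimpleGraph V) (w : Sym2 V → ℝ) : ℝ :=
  sInf {x | ∃ y, IsFracCover G w y ∧ x = ∑ v, y v}

/-- the weighted graph `(G,w)` is stable -/
def IsStable [Fintype V] (G : SimpleGraph V) (w : Sym2 V → ℝ) : Prop :=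
  nuW G w = tauW G w

/-- `c` is a fractional additive stabilizer for the unit-weight graph `G` -/
def IsStabilizer [Fintype V] [DecidableEq V] (G : SimpleGraph V) (c : Sym2 V → ℝ) : Prop :=
  (∀ e ∈ edgeFin G, 0 ≤ c e) ∧ IsStable G fun e => 1 + c e

/-- the cost `∑_{e ∈ E} c_e` of `c` -/
def cost [Fintype V] [DecidableEq V] (G : SimpleGraph V) (c : Sym2 V → ℝ) : ℝ :=
  ∑ e ∈ edgeFin G, c e

/-- `c` is a minimum fractional additive stabilizer of `G` -/
def IsMinStabilizer [Fintype V] [DecidableEq V] (G : SimpleGraph V) (c : Sym2 V → ℝ) : Prop :=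
  IsStabilizer G c ∧ ∀ c', IsStabilizer G c' → cost G c ≤ cost G c'

/-- `OPT`: the minimum cost of a fractional additive stabilizer of `G` -/
def optCost [Fintype V] [DecidableEq V] (G : SimpleGraph V) : ℝ :=
  sInf {x | ∃ c, IsStabilizer G c ∧ x = cost G c}

/-- `ν(G)`: the maximum cardinality of a matching of `G` -/
def nu (G : SimpleGraph V) : ℕ :=
  sSup {n | ∃ M, IsMatching G M ∧ M.card = n}

/-- `M` is a maximum-cardinality matching of `G` -/
def IsMaxMatching (G : SimpleGraph V) (M : Finset (Sym2 V)) : Prop :=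
  IsMatching G M ∧ ∀ M', IsMatching G M' → M'.card ≤ M.card

/-- `M` is a matching of maximum `w`-weight in `G` -/
def IsMaxWeightMatching (G : SimpleGraph V) (w : Sym2 V → ℝ) (M : Finset (Sym2 V)) : Prop :=
  IsMatching G M ∧ ∀ M', IsMatching G M' → weight w M' ≤ weight w M

/-- a feasible solution `(M,y,c)` of MFASP on `G` -/
def FeasSol [Fintype V] [DecidableEq V] (G : SimpleGraph V)
    (M : Finset (Sym2 V)) (y : V → ℝ) (c : Sym2 V → ℝ) : Prop :=
  IsMatching G M ∧ (∀ e ∈ edgeFin G, 0 ≤ c e) ∧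
    IsFracCover G (fun e => 1 + c e) y ∧
    (∑ e ∈ M, (1 + c e)) = ∑ v, y v

/-- an optimal solution of MFASP on `G` -/
def OptSol [Fintype V] [DecidableEq V] (G : SimpleGraph V)
    (M : Finset (Sym2 V)) (y : V → ℝ) (c : Sym2 V → ℝ) : Prop :=
  FeasSol G M y c ∧ IsMinStabilizer G c

/-- `v` is inessential: some maximum-cardinality matching exposes `v` -/
def Inessential (G : SimpleGraph V) (v : V) : Prop :=
  ∃ M, IsMaxMatching G M ∧ Exposed M v

/-- the set `X` of the Gallai–Edmonds decomposition -/
def geX (G : SimpleGraph V) : Set V := {v | Inessential G v}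

/-- the Tutte set `Y = N(X) \ X` of the Gallai–Edmonds decomposition -/
def geY (G : SimpleGraph V) : Set V := {v | v ∉ geX G ∧ ∃ u ∈ geX G, G.Adj u v}

/-- the set `Z = V \ (X ∪ Y)` of the Gallai–Edmonds decomposition -/
def geZ (G : SimpleGraph V) : Set V := {v | v ∉ geX G ∧ v ∉ geY G}

/-- `K` is a connected component of the subgraph of `G` induced on `X`. -/
def IsCompOf (G : SimpleGraph V) (X : Set V) (K : Set V) : Prop :=
  K ⊆ X ∧ (G.induce K).Connected ∧ ∀ u ∈ K, ∀ v ∈ X, G.Adj u v → v ∈ K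

/-- properties (a)–(d) of a feasible MFASP solution `(M,y,c)` -/
def PropsABCD [Fintype V] [DecidableEq V] (G : SimpleGraph V)
    (M : Finset (Sym2 V)) (y : V → ℝ) (c : Sym2 V → ℝ) : Prop :=
  (∀ e ∈ edgeFin G, e ∉ M → c e = 0) ∧
  (∀ e ∈ M, 0 ≤ c e ∧ c e ≤ 1) ∧
  M.card = nu G ∧
  (∀ e ∈ edgeFin G, ∃ z : ℤ, 2 * c e = (z : ℝ)) ∧
  (∀ v : V, y v = 0 ∨ y v = 1 / 2 ∨ y v = 1) ∧
  (∀ v ∈ geY G, 1 / 2 ≤ y v)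

/-- a graph is factor-critical if deleting any vertex leaves a graph with a perfect matching -/
def IsFactorCritical (G : SimpleGraph V) : Prop :=
  ∀ v : V, ∃ M, IsMatching G M ∧ Exposed M v ∧ ∀ u : V, u ≠ v → ¬ Exposed M u

/-- the neighbourhood `N_G(K)` of a vertex set `K` (outside of `K`) -/
def nbhd (G : SimpleGraph V) (K : Set V) : Set V :=
  {v | v ∉ K ∧ ∃ u ∈ K, G.Adj u v}

end Stab

namespace Stab

variable {G : SimpleGraph V} {M N M1 M2 : Finset (Sym2 V)} {e f : Sym2 V} {x : V}

lemma matching_unique (hM : IsMatching G M) (he : e ∈ M) (hf : f ∈ M)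
    (hxe : x ∈ e) (hxf : x ∈ f) : e = f := by
  by_contra h
  exact hM.2 e he f hf h x hxe hxf

lemma matching_subset (hM : IsMatching G M) (hN : N ⊆ M) : IsMatching G N :=
  ⟨fun e he => hM.1 e (hN he), fun e he f hf hef v hv => hM.2 e (hN he) f (hN hf) hef v hv⟩

lemma exposed_subset (h : Exposed M x) (hN : N ⊆ M) : Exposed N x :=
  fun e he => h e (hN he)

lemma exposed_union_subset (h1 : Exposed M1 x) (h2 : Exposed M2 x)
    (hN : N ⊆ M1 ∪ M2) : Exposed N x := by
  intro e he
  rcases Finset.mem_union.mp (hN he) with h | h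
  · exact h1 e h
  · exact h2 e h

lemma matching_insert (hM : IsMatching G M) (he : e ∈ G.edgeSet)
    (hexp : ∀ q ∈ e, Exposed M q) : IsMatching G (insert e M) := by
  constructor
  · intro f hf
    rcases Finset.mem_insert.mp hf with rfl | hf
    · exact he
    · exact hM.1 f hf
  · intro f hf g hg hfg v hvf hvg
    rcases Finset.mem_insert.mp hf with hfe | hf
    · subst hfe
      rcases Finset.mem_insert.mp hg with hge | hg
      · exact absurd hge.symm hfg
      · exact hexp v hvf g hg hvg
    · rcases Finset.mem_insert.mp hg with hge | hg
      · exact hexp v (hge ▸ hvg) f hf hvf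
      · exact hM.2 f hf g hg hfg v hvf hvg

/-- other endpoint of an edge -/
lemma exists_other (he : e ∈ G.edgeSet) (hx : x ∈ e) :
    ∃ b, e = s(x, b) ∧ G.Adj x b := by
  induction e with
  | _ a b =>
    rcases Sym2.mem_iff.mp hx with rfl | rfl
    · exact ⟨b, rfl, he⟩
    · exact ⟨a, Sym2.eq_swap, ((SimpleGraph.mem_edgeSet (G:=G)).mp he).symm⟩


lemma not_exposed_iff {M : Finset (Sym2 V)} {x : V} :
    ¬ Exposed M x ↔ ∃ e ∈ M, x ∈ e := by
  simp [Exposed]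

lemma not_exposed_mono (hN : N ⊆ M) (h : ¬ Exposed N x) : ¬ Exposed M x := by
  rw [not_exposed_iff] at h ⊢
  obtain ⟨e, he, hxe⟩ := h
  exact ⟨e, hN he, hxe⟩

lemma exposed_erase_self (hM : IsMatching G M) (he : e ∈ M) (hx : x ∈ e) :
    Exposed (M.erase e) x := by
  intro f hf hxf
  exact (Finset.mem_erase.mp hf).1 (matching_unique hM (Finset.mem_erase.mp hf).2 he hxf hx)

lemma exposed_erase_iff (hq : x ∉ e) : Exposed (M.erase e) x ↔ Exposed M x := by
  constructor
  · intro h f hf hxf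
    rcases eq_or_ne f e with rfl | hne
    · exact hq hxf
    · exact h f (Finset.mem_erase.mpr ⟨hne, hf⟩) hxf
  · exact fun h => exposed_subset h (Finset.erase_subset _ _)

lemma exposed_insert_iff (hq : x ∉ e) : Exposed (insert e M) x ↔ Exposed M x := by
  constructor
  · exact fun h => exposed_subset h (Finset.subset_insert _ _)
  · intro h f hf hxf
    rcases Finset.mem_insert.mp hf with rfl | hf
    · exact hq hxf
    · exact h f hf hxf

lemma not_exposed_of_mem (he : e ∈ M) (hx : x ∈ e) : ¬ Exposed M x :=
  not_exposed_iff.mpr ⟨e, he, hx⟩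

/-- `A △ P` for an alternating edge set `P`: remove `P∩A`, add `P∩B`. -/
def swapM (A B P : Finset (Sym2 V)) : Finset (Sym2 V) := (A \ P) ∪ (B ∩ P)

lemma swapM_subset_union {A B P : Finset (Sym2 V)} : swapM A B P ⊆ A ∪ B := by
  intro e he
  rcases Finset.mem_union.mp he with h | h
  · exact Finset.mem_union_left _ (Finset.mem_sdiff.mp h).1
  · exact Finset.mem_union_right _ (Finset.mem_inter.mp h).1

lemma mem_swapM {A B P : Finset (Sym2 V)} :
    e ∈ swapM A B P ↔ (e ∈ A ∧ e ∉ P) ∨ (e ∈ B ∧ e ∈ P) := by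
  simp [swapM, Finset.mem_union, Finset.mem_sdiff, Finset.mem_inter]

/-- conclusion of the alternating-path master lemma -/
def MasterConc (G : SimpleGraph V) (M1 M2 : Finset (Sym2 V)) (x : V) : Prop :=
  ∃ (P : Finset (Sym2 V)) (p : V),
    P ⊆ M1 ∪ M2 ∧
    (∀ e ∈ P, ¬(e ∈ M1 ∧ e ∈ M2)) ∧
    (P ∩ M1).Nonempty ∧
    p ≠ x ∧ (∃ e ∈ P, p ∈ e) ∧
    IsMatching G (swapM M1 M2 P) ∧ IsMatching G (swapM M2 M1 P) ∧
    (∀ q, q ≠ x → q ≠ p →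
      (Exposed (swapM M1 M2 P) q ↔ Exposed M1 q) ∧
      (Exposed (swapM M2 M1 P) q ↔ Exposed M2 q)) ∧
    Exposed (swapM M1 M2 P) x ∧ ¬ Exposed (swapM M2 M1 P) x ∧
    ((¬ Exposed M1 p ∧ Exposed M2 p ∧ Exposed (swapM M1 M2 P) p ∧
        ¬ Exposed (swapM M2 M1 P) p ∧
        (swapM M1 M2 P).card + 1 = M1.card ∧ (swapM M2 M1 P).card = M2.card + 1)
     ∨ (Exposed M1 p ∧ ¬ Exposed M2 p ∧ ¬ Exposed (swapM M1 M2 P) p ∧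
        Exposed (swapM M2 M1 P) p ∧
        (swapM M1 M2 P).card = M1.card ∧ (swapM M2 M1 P).card = M2.card ∧
        (P ∩ M2).Nonempty))


lemma master_baseA (hM1 : IsMatching G M1) (hM2 : IsMatching G M2)
    (hx2 : Exposed M2 x) {e1 : Sym2 V} {v1 : V}
    (he1 : e1 ∈ M1) (hrep : e1 = s(x, v1)) (hxv : x ≠ v1)
    (hv1 : Exposed M2 v1) : MasterConc G M1 M2 x := by
  have hxe1 : x ∈ e1 := by rw [hrep]; exact Sym2.mem_mk_left _ _
  have hv1e1 : v1 ∈ e1 := by rw [hrep]; exact Sym2.mem_mk_right _ _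
  have he1M2 : e1 ∉ M2 := fun h => hx2 e1 h hxe1
  have hQ1 : swapM M1 M2 {e1} = M1.erase e1 := by
    ext f
    simp only [mem_swapM, Finset.mem_singleton, Finset.mem_erase]
    constructor
    · rintro (⟨h1, h2⟩ | ⟨h1, rfl⟩)
      · exact ⟨h2, h1⟩
      · exact absurd h1 he1M2
    · rintro ⟨h1, h2⟩
      exact Or.inl ⟨h2, h1⟩
  have hQ2 : swapM M2 M1 {e1} = insert e1 M2 := by
    ext f
    simp only [mem_swapM, Finset.mem_singleton, Finset.mem_insert]
    constructor
    · rintro (⟨h1, h2⟩ | ⟨h1, rfl⟩)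
      · exact Or.inr h1
      · exact Or.inl rfl
    · rintro (rfl | h)
      · exact Or.inr ⟨he1, rfl⟩
      · exact Or.inl ⟨h, fun hfe => he1M2 (hfe ▸ h)⟩
  refine ⟨{e1}, v1, ?_, ?_, ?_, hxv.symm, ⟨e1, Finset.mem_singleton_self e1, hv1e1⟩,
    ?_, ?_, ?_, ?_, ?_, Or.inl ⟨?_, hv1, ?_, ?_, ?_, ?_⟩⟩
  · exact Finset.singleton_subset_iff.mpr (Finset.mem_union_left _ he1)
  · intro e he
    rw [Finset.mem_singleton] at he
    subst he
    exact fun h => he1M2 h.2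
  · exact ⟨e1, Finset.mem_inter.mpr ⟨Finset.mem_singleton_self e1, he1⟩⟩
  · rw [hQ1]
    exact matching_subset hM1 (Finset.erase_subset _ _)
  · rw [hQ2]
    refine matching_insert hM2 (hM1.1 e1 he1) ?_
    intro q hq
    rw [hrep] at hq
    rcases Sym2.mem_iff.mp hq with rfl | rfl
    · exact hx2
    · exact hv1
  · intro q hqx hqp
    have hqe1 : q ∉ e1 := by
      rw [hrep, Sym2.mem_iff]
      rintro (rfl | rfl)
      · exact hqx rfl
      · exact hqp rfl
    rw [hQ1, hQ2]
    exact ⟨exposed_erase_iff hqe1, exposed_insert_iff hqe1⟩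
  · rw [hQ1]
    exact exposed_erase_self hM1 he1 hxe1
  · rw [hQ2]
    exact not_exposed_of_mem (Finset.mem_insert_self _ _) hxe1
  · exact not_exposed_of_mem he1 hv1e1
  · rw [hQ1]
    exact exposed_erase_self hM1 he1 hv1e1
  · rw [hQ2]
    exact not_exposed_of_mem (Finset.mem_insert_self _ _) hv1e1
  · rw [hQ1]
    exact Finset.card_erase_add_one he1
  · rw [hQ2]
    exact Finset.card_insert_of_notMem he1M2


lemma master_baseB (hM1 : IsMatching G M1) (hM2 : IsMatching G M2)
    (hx2 : Exposed M2 x) {e1 e2 : Sym2 V} {v1 v2 : V}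
    (he1 : e1 ∈ M1) (hrep1 : e1 = s(x, v1)) (he2 : e2 ∈ M2) (hrep2 : e2 = s(v1, v2))
    (hxv1 : x ≠ v1) (hxv2 : x ≠ v2) (hv12 : v1 ≠ v2)
    (hv2 : Exposed M1 v2) : MasterConc G M1 M2 x := by
  have hxe1 : x ∈ e1 := by rw [hrep1]; exact Sym2.mem_mk_left _ _
  have hv1e1 : v1 ∈ e1 := by rw [hrep1]; exact Sym2.mem_mk_right _ _
  have hv1e2 : v1 ∈ e2 := by rw [hrep2]; exact Sym2.mem_mk_left _ _
  have hv2e2 : v2 ∈ e2 := by rw [hrep2]; exact Sym2.mem_mk_right _ _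
  have he1M2 : e1 ∉ M2 := fun h => hx2 e1 h hxe1
  have he2M1 : e2 ∉ M1 := fun h => hv2 e2 h hv2e2
  have hxe2 : x ∉ e2 := by
    rw [hrep2, Sym2.mem_iff]
    rintro (rfl | rfl)
    · exact hxv1 rfl
    · exact hxv2 rfl
  have hv2e1 : v2 ∉ e1 := by
    rw [hrep1, Sym2.mem_iff]
    rintro (rfl | rfl)
    · exact hxv2 rfl
    · exact hv12 rfl
  have hPmem : ∀ f : Sym2 V, f ∈ (insert e1 {e2} : Finset (Sym2 V)) ↔ f = e1 ∨ f = e2 := by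
    intro f
    simp [Finset.mem_insert, Finset.mem_singleton]
  have hQ1 : swapM M1 M2 (insert e1 {e2}) = insert e2 (M1.erase e1) := by
    ext f
    simp only [mem_swapM, hPmem, Finset.mem_insert, Finset.mem_erase]
    constructor
    · rintro (⟨h1, h2⟩ | ⟨h1, (rfl | rfl)⟩)
      · exact Or.inr ⟨fun hfe1 => h2 (Or.inl hfe1), h1⟩
      · exact absurd h1 he1M2
      · exact Or.inl rfl
    · rintro (rfl | ⟨hne, hf⟩)
      · exact Or.inr ⟨he2, Or.inr rfl⟩
      · refine Or.inl ⟨hf, ?_⟩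
        rintro (rfl | rfl)
        · exact hne rfl
        · exact he2M1 hf
  have hQ2 : swapM M2 M1 (insert e1 {e2}) = insert e1 (M2.erase e2) := by
    ext f
    simp only [mem_swapM, hPmem, Finset.mem_insert, Finset.mem_erase]
    constructor
    · rintro (⟨h1, h2⟩ | ⟨h1, (rfl | rfl)⟩)
      · exact Or.inr ⟨fun hfe2 => h2 (Or.inr hfe2), h1⟩
      · exact Or.inl rfl
      · exact absurd h1 he2M1
    · rintro (rfl | ⟨hne, hf⟩)
      · exact Or.inr ⟨he1, Or.inl rfl⟩
      · refine Or.inl ⟨hf, ?_⟩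
        rintro (rfl | rfl)
        · exact he1M2 hf
        · exact hne rfl
  refine ⟨insert e1 {e2}, v2, ?_, ?_, ?_, hxv2.symm, ⟨e2, (hPmem e2).mpr (Or.inr rfl), hv2e2⟩,
    ?_, ?_, ?_, ?_, ?_, Or.inr ⟨hv2, not_exposed_of_mem he2 hv2e2, ?_, ?_, ?_, ?_, ?_⟩⟩
  · intro f hf
    rcases (hPmem f).mp hf with rfl | rfl
    · exact Finset.mem_union_left _ he1
    · exact Finset.mem_union_right _ he2
  · intro f hf
    rcases (hPmem f).mp hf with rfl | rfl
    · exact fun h => he1M2 h.2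
    · exact fun h => he2M1 h.1
  · exact ⟨e1, Finset.mem_inter.mpr ⟨(hPmem e1).mpr (Or.inl rfl), he1⟩⟩
  · rw [hQ1]
    refine matching_insert (matching_subset hM1 (Finset.erase_subset _ _)) (hM2.1 e2 he2) ?_
    intro q hq
    rw [hrep2] at hq
    rcases Sym2.mem_iff.mp hq with rfl | rfl
    · exact exposed_erase_self hM1 he1 hv1e1
    · exact exposed_subset hv2 (Finset.erase_subset _ _)
  · rw [hQ2]
    refine matching_insert (matching_subset hM2 (Finset.erase_subset _ _)) (hM1.1 e1 he1) ?_
    intro q hq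
    rw [hrep1] at hq
    rcases Sym2.mem_iff.mp hq with rfl | rfl
    · exact exposed_subset hx2 (Finset.erase_subset _ _)
    · exact exposed_erase_self hM2 he2 hv1e2
  · intro q hqx hqp
    by_cases hqv1 : q = v1
    · subst hqv1
      rw [hQ1, hQ2]
      constructor
      · exact iff_of_false (not_exposed_of_mem (Finset.mem_insert_self _ _) hv1e2)
          (not_exposed_of_mem he1 hv1e1)
      · exact iff_of_false (not_exposed_of_mem (Finset.mem_insert_self _ _) hv1e1)
          (not_exposed_of_mem he2 hv1e2)
    · have hqe1 : q ∉ e1 := by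
        rw [hrep1, Sym2.mem_iff]
        rintro (rfl | rfl)
        · exact hqx rfl
        · exact hqv1 rfl
      have hqe2 : q ∉ e2 := by
        rw [hrep2, Sym2.mem_iff]
        rintro (rfl | rfl)
        · exact hqv1 rfl
        · exact hqp rfl
      rw [hQ1, hQ2]
      exact ⟨(exposed_insert_iff hqe2).trans (exposed_erase_iff hqe1),
        (exposed_insert_iff hqe1).trans (exposed_erase_iff hqe2)⟩
  · rw [hQ1]
    exact (exposed_insert_iff hxe2).mpr (exposed_erase_self hM1 he1 hxe1)
  · rw [hQ2]
    exact not_exposed_of_mem (Finset.mem_insert_self _ _) hxe1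
  · rw [hQ1]
    exact not_exposed_of_mem (Finset.mem_insert_self _ _) hv2e2
  · rw [hQ2]
    exact (exposed_insert_iff hv2e1).mpr (exposed_erase_self hM2 he2 hv2e2)
  · rw [hQ1, Finset.card_insert_of_notMem (fun h => he2M1 (Finset.mem_of_mem_erase h))]
    exact Finset.card_erase_add_one he1
  · rw [hQ2, Finset.card_insert_of_notMem (fun h => he1M2 (Finset.mem_of_mem_erase h))]
    exact Finset.card_erase_add_one he2
  · exact ⟨e2, Finset.mem_inter.mpr ⟨(hPmem e2).mpr (Or.inr rfl), he2⟩⟩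


lemma master_step (hM1 : IsMatching G M1) (hM2 : IsMatching G M2)
    (hx2 : Exposed M2 x) {e1 e2 : Sym2 V} {v1 v2 : V}
    (he1 : e1 ∈ M1) (hrep1 : e1 = s(x, v1)) (he2 : e2 ∈ M2) (hrep2 : e2 = s(v1, v2))
    (hxv1 : x ≠ v1) (hxv2 : x ≠ v2) (hv12 : v1 ≠ v2)
    (hv2c : ¬ Exposed M1 v2)
    (IH : MasterConc G (M1.erase e1) (M2.erase e2) v2) : MasterConc G M1 M2 x := by
  obtain ⟨P', p', hP'sub, hP'sh, hP'M1ne, hp'v2, hp'cov, hQ1'm, hQ2'm, h5', h6'a, h6'b, hcase'⟩ :=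
    IH
  set M1' := M1.erase e1 with hM1'def
  set M2' := M2.erase e2 with hM2'def
  set Q1' := swapM M1' M2' P' with hQ1'def
  set Q2' := swapM M2' M1' P' with hQ2'def
  have hxe1 : x ∈ e1 := by rw [hrep1]; exact Sym2.mem_mk_left _ _
  have hv1e1 : v1 ∈ e1 := by rw [hrep1]; exact Sym2.mem_mk_right _ _
  have hv1e2 : v1 ∈ e2 := by rw [hrep2]; exact Sym2.mem_mk_left _ _
  have hv2e2 : v2 ∈ e2 := by rw [hrep2]; exact Sym2.mem_mk_right _ _
  have he1M2 : e1 ∉ M2 := fun h => hx2 e1 h hxe1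
  have he1ne2 : e1 ≠ e2 := fun h => he1M2 (h ▸ he2)
  have he2M1 : e2 ∉ M1 := fun h => he1ne2 (matching_unique hM1 he1 h hv1e1 hv1e2)
  have hxe2 : x ∉ e2 := by
    rw [hrep2, Sym2.mem_iff]
    rintro (rfl | rfl)
    · exact hxv1 rfl
    · exact hxv2 rfl
  have hv2e1 : v2 ∉ e1 := by
    rw [hrep1, Sym2.mem_iff]
    rintro (rfl | rfl)
    · exact hxv2 rfl
    · exact hv12 rfl
  have he1M1' : e1 ∉ M1' := Finset.notMem_erase _ _
  have he2M2' : e2 ∉ M2' := Finset.notMem_erase _ _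
  have he1M2' : e1 ∉ M2' := fun h => he1M2 (Finset.mem_of_mem_erase h)
  have he2M1' : e2 ∉ M1' := fun h => he2M1 (Finset.mem_of_mem_erase h)
  have hP'e1 : e1 ∉ P' := fun h => by
    rcases Finset.mem_union.mp (hP'sub h) with h' | h'
    · exact he1M1' h'
    · exact he1M2' h'
  have hP'e2 : e2 ∉ P' := fun h => by
    rcases Finset.mem_union.mp (hP'sub h) with h' | h'
    · exact he2M1' h'
    · exact he2M2' h'
  have hxM1' : Exposed M1' x := exposed_erase_self hM1 he1 hxe1
  have hxM2' : Exposed M2' x := exposed_subset hx2 (Finset.erase_subset _ _)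
  have hv1M1' : Exposed M1' v1 := exposed_erase_self hM1 he1 hv1e1
  have hv1M2' : Exposed M2' v1 := exposed_erase_self hM2 he2 hv1e2
  have hxP' : Exposed P' x := exposed_union_subset hxM1' hxM2' hP'sub
  have hv1P' : Exposed P' v1 := exposed_union_subset hv1M1' hv1M2' hP'sub
  have hp'x : p' ≠ x := by
    obtain ⟨e', he'P, hp'e'⟩ := hp'cov
    exact fun h => hxP' e' he'P (h ▸ hp'e')
  have hp'v1 : p' ≠ v1 := by
    obtain ⟨e', he'P, hp'e'⟩ := hp'cov
    exact fun h => hv1P' e' he'P (h ▸ hp'e')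
  have hxQ1' : Exposed Q1' x := exposed_union_subset hxM1' hxM2' swapM_subset_union
  have hxQ2' : Exposed Q2' x := exposed_union_subset hxM2' hxM1' swapM_subset_union
  have hv1Q1' : Exposed Q1' v1 := exposed_union_subset hv1M1' hv1M2' swapM_subset_union
  have hv1Q2' : Exposed Q2' v1 := exposed_union_subset hv1M2' hv1M1' swapM_subset_union
  have he2Q1' : e2 ∉ Q1' := fun h => by
    rcases Finset.mem_union.mp (swapM_subset_union h) with h' | h'
    · exact he2M1' h'
    · exact he2M2' h'
  have he1Q2' : e1 ∉ Q2' := fun h => by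
    rcases Finset.mem_union.mp (swapM_subset_union h) with h' | h'
    · exact he1M2' h'
    · exact he1M1' h'
  have hp'e1 : p' ∉ e1 := by
    rw [hrep1, Sym2.mem_iff]
    rintro (rfl | rfl)
    · exact hp'x rfl
    · exact hp'v1 rfl
  have hp'e2 : p' ∉ e2 := by
    rw [hrep2, Sym2.mem_iff]
    rintro (rfl | rfl)
    · exact hp'v1 rfl
    · exact hp'v2 rfl
  have hPmem : ∀ f : Sym2 V, f ∈ insert e1 (insert e2 P') ↔ f = e1 ∨ f = e2 ∨ f ∈ P' := by
    intro f
    simp [Finset.mem_insert]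
  have hQ1 : swapM M1 M2 (insert e1 (insert e2 P')) = insert e2 Q1' := by
    ext f
    constructor
    · intro hf
      rcases mem_swapM.mp hf with ⟨h1, h2⟩ | ⟨h1, h2⟩
      · have hne1 : f ≠ e1 := fun h => h2 ((hPmem f).mpr (Or.inl h))
        have hfP' : f ∉ P' := fun h => h2 ((hPmem f).mpr (Or.inr (Or.inr h)))
        exact Finset.mem_insert.mpr (Or.inr (mem_swapM.mpr
          (Or.inl ⟨Finset.mem_erase.mpr ⟨hne1, h1⟩, hfP'⟩)))
      · rcases (hPmem f).mp h2 with rfl | rfl | hfP'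
        · exact absurd h1 he1M2
        · exact Finset.mem_insert_self _ _
        · have hne2 : f ≠ e2 := fun h => hP'e2 (h ▸ hfP')
          exact Finset.mem_insert.mpr (Or.inr (mem_swapM.mpr
            (Or.inr ⟨Finset.mem_erase.mpr ⟨hne2, h1⟩, hfP'⟩)))
    · intro hf
      rcases Finset.mem_insert.mp hf with rfl | hf
      · exact mem_swapM.mpr (Or.inr ⟨he2, (hPmem _).mpr (Or.inr (Or.inl rfl))⟩)
      · rcases mem_swapM.mp hf with ⟨h1, h2⟩ | ⟨h1, h2⟩
        · refine mem_swapM.mpr (Or.inl ⟨Finset.mem_of_mem_erase h1, fun hP => ?_⟩)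
          rcases (hPmem f).mp hP with rfl | rfl | hfP'
          · exact (Finset.mem_erase.mp h1).1 rfl
          · exact he2M1 (Finset.mem_of_mem_erase h1)
          · exact h2 hfP'
        · exact mem_swapM.mpr (Or.inr ⟨Finset.mem_of_mem_erase h1,
            (hPmem f).mpr (Or.inr (Or.inr h2))⟩)
  have hQ2 : swapM M2 M1 (insert e1 (insert e2 P')) = insert e1 Q2' := by
    ext f
    constructor
    · intro hf
      rcases mem_swapM.mp hf with ⟨h1, h2⟩ | ⟨h1, h2⟩
      · have hne2 : f ≠ e2 := fun h => h2 ((hPmem f).mpr (Or.inr (Or.inl h)))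
        have hfP' : f ∉ P' := fun h => h2 ((hPmem f).mpr (Or.inr (Or.inr h)))
        exact Finset.mem_insert.mpr (Or.inr (mem_swapM.mpr
          (Or.inl ⟨Finset.mem_erase.mpr ⟨hne2, h1⟩, hfP'⟩)))
      · rcases (hPmem f).mp h2 with rfl | rfl | hfP'
        · exact Finset.mem_insert_self _ _
        · exact absurd h1 he2M1
        · have hne1 : f ≠ e1 := fun h => hP'e1 (h ▸ hfP')
          exact Finset.mem_insert.mpr (Or.inr (mem_swapM.mpr
            (Or.inr ⟨Finset.mem_erase.mpr ⟨hne1, h1⟩, hfP'⟩)))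
    · intro hf
      rcases Finset.mem_insert.mp hf with rfl | hf
      · exact mem_swapM.mpr (Or.inr ⟨he1, (hPmem _).mpr (Or.inl rfl)⟩)
      · rcases mem_swapM.mp hf with ⟨h1, h2⟩ | ⟨h1, h2⟩
        · refine mem_swapM.mpr (Or.inl ⟨Finset.mem_of_mem_erase h1, fun hP => ?_⟩)
          rcases (hPmem f).mp hP with rfl | rfl | hfP'
          · exact he1M2 (Finset.mem_of_mem_erase h1)
          · exact (Finset.mem_erase.mp h1).1 rfl
          · exact h2 hfP'
        · exact mem_swapM.mpr (Or.inr ⟨Finset.mem_of_mem_erase h1,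
            (hPmem f).mpr (Or.inr (Or.inr h2))⟩)
  refine ⟨insert e1 (insert e2 P'), p', ?_, ?_, ?_, hp'x, ?_, ?_, ?_, ?_, ?_, ?_, ?_⟩
  · intro f hf
    rcases (hPmem f).mp hf with rfl | rfl | hfP'
    · exact Finset.mem_union_left _ he1
    · exact Finset.mem_union_right _ he2
    · rcases Finset.mem_union.mp (hP'sub hfP') with h' | h'
      · exact Finset.mem_union_left _ (Finset.mem_of_mem_erase h')
      · exact Finset.mem_union_right _ (Finset.mem_of_mem_erase h')
  · intro f hf
    rcases (hPmem f).mp hf with rfl | rfl | hfP'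
    · exact fun h => he1M2 h.2
    · exact fun h => he2M1 h.1
    · rintro ⟨hA, hB⟩
      have hne1 : f ≠ e1 := fun h => hP'e1 (h ▸ hfP')
      have hne2 : f ≠ e2 := fun h => hP'e2 (h ▸ hfP')
      exact hP'sh f hfP' ⟨Finset.mem_erase.mpr ⟨hne1, hA⟩, Finset.mem_erase.mpr ⟨hne2, hB⟩⟩
  · exact ⟨e1, Finset.mem_inter.mpr ⟨(hPmem e1).mpr (Or.inl rfl), he1⟩⟩
  · obtain ⟨e', he'P, hp'e'⟩ := hp'cov
    exact ⟨e', (hPmem e').mpr (Or.inr (Or.inr he'P)), hp'e'⟩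
  · rw [hQ1]
    refine matching_insert hQ1'm (hM2.1 e2 he2) ?_
    intro q hq
    rw [hrep2] at hq
    rcases Sym2.mem_iff.mp hq with rfl | rfl
    · exact hv1Q1'
    · exact h6'a
  · rw [hQ2]
    refine matching_insert hQ2'm (hM1.1 e1 he1) ?_
    intro q hq
    rw [hrep1] at hq
    rcases Sym2.mem_iff.mp hq with rfl | rfl
    · exact hxQ2'
    · exact hv1Q2'
  · intro q hqx hqp
    rw [hQ1, hQ2]
    by_cases hq1 : q = v1
    · subst hq1
      constructor
      · exact iff_of_false (not_exposed_of_mem (Finset.mem_insert_self _ _) hv1e2)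
          (not_exposed_of_mem he1 hv1e1)
      · exact iff_of_false (not_exposed_of_mem (Finset.mem_insert_self _ _) hv1e1)
          (not_exposed_of_mem he2 hv1e2)
    · by_cases hq2 : q = v2
      · subst hq2
        constructor
        · exact iff_of_false (not_exposed_of_mem (Finset.mem_insert_self _ _) hv2e2) hv2c
        · exact iff_of_false (not_exposed_mono (Finset.subset_insert _ _) h6'b)
            (not_exposed_of_mem he2 hv2e2)
      · have hqe1 : q ∉ e1 := by
          rw [hrep1, Sym2.mem_iff]
          rintro (rfl | rfl)
          · exact hqx rfl
          · exact hq1 rfl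
        have hqe2 : q ∉ e2 := by
          rw [hrep2, Sym2.mem_iff]
          rintro (rfl | rfl)
          · exact hq1 rfl
          · exact hq2 rfl
        obtain ⟨hI1, hI2⟩ := h5' q hq2 hqp
        exact ⟨(exposed_insert_iff hqe2).trans (hI1.trans (exposed_erase_iff hqe1)),
          (exposed_insert_iff hqe1).trans (hI2.trans (exposed_erase_iff hqe2))⟩
  · rw [hQ1]
    exact (exposed_insert_iff hxe2).mpr hxQ1'
  · rw [hQ2]
    exact not_exposed_of_mem (Finset.mem_insert_self _ _) hxe1
  · rw [hQ1, hQ2]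
    have hcQ1 : (insert e2 Q1').card = Q1'.card + 1 := Finset.card_insert_of_notMem he2Q1'
    have hcQ2 : (insert e1 Q2').card = Q2'.card + 1 := Finset.card_insert_of_notMem he1Q2'
    have hcM1 : M1'.card + 1 = M1.card := Finset.card_erase_add_one he1
    have hcM2 : M2'.card + 1 = M2.card := Finset.card_erase_add_one he2
    rcases hcase' with ⟨ha1, ha2, ha3, ha4, ha5, ha6⟩ | ⟨hb1, hb2, hb3, hb4, hb5, hb6, hb7⟩
    · refine Or.inl ⟨not_exposed_mono (Finset.erase_subset _ _) ha1,
        (exposed_erase_iff hp'e2).mp ha2,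
        (exposed_insert_iff hp'e2).mpr ha3,
        not_exposed_mono (Finset.subset_insert _ _) ha4, ?_, ?_⟩
      · omega
      · omega
    · refine Or.inr ⟨(exposed_erase_iff hp'e1).mp hb1,
        not_exposed_mono (Finset.erase_subset _ _) hb2,
        not_exposed_mono (Finset.subset_insert _ _) hb3,
        (exposed_insert_iff hp'e1).mpr hb4, ?_, ?_, ?_⟩
      · omega
      · omega
      · exact ⟨e2, Finset.mem_inter.mpr ⟨(hPmem e2).mpr (Or.inr (Or.inl rfl)), he2⟩⟩


theorem master (hM1 : IsMatching G M1) (hM2 : IsMatching G M2)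
    (hx2 : Exposed M2 x) (hx1 : ¬ Exposed M1 x) : MasterConc G M1 M2 x := by
  suffices H : ∀ n (M1 M2 : Finset (Sym2 V)) (x : V), M2.card = n → IsMatching G M1 →
      IsMatching G M2 → Exposed M2 x → ¬ Exposed M1 x → MasterConc G M1 M2 x by
    exact H M2.card M1 M2 x rfl hM1 hM2 hx2 hx1
  intro n
  induction n using Nat.strong_induction_on with
  | _ n IH =>
    intro M1 M2 x hn hM1 hM2 hx2 hx1
    obtain ⟨e1, he1, hxe1⟩ := not_exposed_iff.mp hx1
    obtain ⟨v1, hrep1, hadj1⟩ := exists_other (hM1.1 e1 he1) hxe1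
    have hxv1 : x ≠ v1 := hadj1.ne
    by_cases hv1 : Exposed M2 v1
    · exact master_baseA hM1 hM2 hx2 he1 hrep1 hxv1 hv1
    · obtain ⟨e2, he2, hv1e2⟩ := not_exposed_iff.mp hv1
      obtain ⟨v2, hrep2, hadj2⟩ := exists_other (hM2.1 e2 he2) hv1e2
      have hv12 : v1 ≠ v2 := hadj2.ne
      have hxv2 : x ≠ v2 := by
        rintro rfl
        exact hx2 e2 he2 (by rw [hrep2]; exact Sym2.mem_mk_right _ _)
      by_cases hv2 : Exposed M1 v2
      · exact master_baseB hM1 hM2 hx2 he1 hrep1 he2 hrep2 hxv1 hxv2 hv12 hv2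
      · refine master_step hM1 hM2 hx2 he1 hrep1 he2 hrep2 hxv1 hxv2 hv12 hv2 ?_
        have hv2e2 : v2 ∈ e2 := by rw [hrep2]; exact Sym2.mem_mk_right _ _
        have hv2e1 : v2 ∉ e1 := by
          rw [hrep1, Sym2.mem_iff]
          rintro (rfl | rfl)
          · exact hxv2 rfl
          · exact hv12 rfl
        refine IH (M2.erase e2).card ?_ _ _ v2 rfl
          (matching_subset hM1 (Finset.erase_subset _ _))
          (matching_subset hM2 (Finset.erase_subset _ _))
          (exposed_erase_self hM2 he2 hv2e2) ?_
        · rw [← hn]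
          exact Finset.card_erase_lt_of_mem he2
        · intro h
          obtain ⟨e3, he3, hv2e3⟩ := not_exposed_iff.mp hv2
          have hne : e3 ≠ e1 := fun hh => hv2e1 (hh ▸ hv2e3)
          exact h e3 (Finset.mem_erase.mpr ⟨hne, he3⟩) hv2e3


set_option linter.unusedSectionVars false

section NuIn

variable [Fintype V]

/-- matchings all of whose endpoints lie in `A` -/
def MIn (G : SimpleGraph V) (A : Set V) (M : Finset (Sym2 V)) : Prop :=
  IsMatching G M ∧ ∀ e ∈ M, ∀ x ∈ e, x ∈ A

/-- maximum size of a matching within `A` -/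
def nuIn (G : SimpleGraph V) (A : Set V) : ℕ :=
  sSup {n | ∃ M, MIn G A M ∧ M.card = n}

lemma MIn_empty : MIn G A (∅ : Finset (Sym2 V)) := by
  refine ⟨⟨?_, ?_⟩, ?_⟩ <;> intro e he <;> simp at he

lemma nuIn_bdd (G : SimpleGraph V) (A : Set V) :
    BddAbove {n | ∃ M, MIn G A M ∧ M.card = n} :=
  ⟨Fintype.card (Sym2 V), fun n ⟨M, _, hc⟩ => hc ▸ Finset.card_le_univ M⟩

lemma nuIn_spec (G : SimpleGraph V) (A : Set V) :
    ∃ M, MIn G A M ∧ M.card = nuIn G A := by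
  have h := Nat.sSup_mem (s := {n | ∃ M, MIn G A M ∧ M.card = n})
    ⟨0, ∅, MIn_empty, Finset.card_empty⟩ (nuIn_bdd G A)
  obtain ⟨M, hM, hc⟩ := h
  exact ⟨M, hM, hc⟩

lemma card_le_nuIn (h : MIn G A M) : M.card ≤ nuIn G A :=
  le_csSup (nuIn_bdd G A) ⟨M, h, rfl⟩

lemma MIn_mono {A B : Set V} (hAB : A ⊆ B) (h : MIn G A M) : MIn G B M :=
  ⟨h.1, fun e he x hx => hAB (h.2 e he x hx)⟩

lemma nuIn_mono {A B : Set V} (hAB : A ⊆ B) : nuIn G A ≤ nuIn G B := by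
  obtain ⟨M, hM, hc⟩ := nuIn_spec G A
  exact hc ▸ card_le_nuIn (MIn_mono hAB hM)

lemma MIn_union_subset {A : Set V} (hM1 : MIn G A M1) (hM2 : MIn G A M2)
    (hN : IsMatching G N) (hsub : N ⊆ M1 ∪ M2) : MIn G A N := by
  refine ⟨hN, fun e he x hx => ?_⟩
  rcases Finset.mem_union.mp (hsub he) with h | h
  · exact hM1.2 e h x hx
  · exact hM2.2 e h x hx

lemma exposed_of_MIn_notmem {A : Set V} {z : V} (hM : MIn G A M) (hz : z ∉ A) :
    Exposed M z :=
  fun e he hze => hz (hM.2 e he z hze)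

lemma nuIn_le_erase_add_one {A : Set V} (z : V) :
    nuIn G A ≤ nuIn G (A \ {z}) + 1 := by
  obtain ⟨M, hM, hc⟩ := nuIn_spec G A
  have hNIn : MIn G (A \ {z}) (M.filter (fun e => z ∉ e)) := by
    refine ⟨matching_subset hM.1 (Finset.filter_subset _ _), ?_⟩
    intro e he x hx
    have heM := Finset.mem_filter.mp he
    refine ⟨hM.2 e heM.1 x hx, ?_⟩
    intro hxz
    rw [Set.mem_singleton_iff] at hxz
    subst hxz
    exact heM.2 hx
  have hcard : M.card ≤ (M.filter (fun e => z ∉ e)).card + 1 := by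
    have hsplit := Finset.card_filter_add_card_filter_not
      (s := M) (p := fun e => z ∉ e)
    have hone : (M.filter (fun e => ¬ z ∉ e)).card ≤ 1 := by
      refine Finset.card_le_one.mpr ?_
      intro e he f hf
      have he' := Finset.mem_filter.mp he
      have hf' := Finset.mem_filter.mp hf
      exact matching_unique hM.1 he'.1 hf'.1 (not_not.mp he'.2) (not_not.mp hf'.2)
    omega
  calc nuIn G A = M.card := hc.symm
    _ ≤ (M.filter (fun e => z ∉ e)).card + 1 := hcard
    _ ≤ nuIn G (A \ {z}) + 1 := Nat.add_le_add_right (card_le_nuIn hNIn) 1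

/-- `x` is inessential within `A` -/
def InessIn (G : SimpleGraph V) (A : Set V) (x : V) : Prop :=
  x ∈ A ∧ ∃ M, MIn G A M ∧ M.card = nuIn G A ∧ Exposed M x

lemma ess_nuIn_erase {A : Set V} {z : V} (hzA : z ∈ A) (hzE : ¬ InessIn G A z) :
    nuIn G (A \ {z}) + 1 = nuIn G A := by
  have h1 := nuIn_le_erase_add_one (G := G) (A := A) z
  have h2 : nuIn G (A \ {z}) ≤ nuIn G A := nuIn_mono Set.diff_subset
  rcases eq_or_lt_of_le h2 with heq | hlt
  · exfalso
    obtain ⟨M, hM, hc⟩ := nuIn_spec G (A \ {z})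
    refine hzE ⟨hzA, M, MIn_mono Set.diff_subset hM, by rw [hc, heq], ?_⟩
    exact exposed_of_MIn_notmem hM (fun h => h.2 rfl)
  · omega

/-- The Stability Lemma: deleting an essential vertex with an inessential neighbour
preserves inessentiality of all other vertices. -/
lemma stability {A : Set V} {z u : V} (hzA : z ∈ A) (hzE : ¬ InessIn G A z)
    (hu : InessIn G A u) (hadj : G.Adj z u) :
    ∀ v ∈ A, v ≠ z → (InessIn G (A \ {z}) v ↔ InessIn G A v) := by
  have hnu : nuIn G (A \ {z}) + 1 = nuIn G A := ess_nuIn_erase hzA hzE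
  intro v hvA hvz
  constructor
  · rintro ⟨hvA', M2, hM2In, hM2c, hM2exp⟩
    obtain ⟨huA, M1, hM1In, hM1c, hM1exp⟩ := hu
    have hzM2 : Exposed M2 z := exposed_of_MIn_notmem hM2In (fun h => h.2 rfl)
    have hzM1 : ¬ Exposed M1 z := fun h => hzE ⟨hzA, M1, hM1In, hM1c, h⟩
    obtain ⟨P, p, hPsub, hPsh, hPM1, hpz, hpcov, hQ1m, hQ2m, h5, h6a, h6b, hcase⟩ :=
      master hM1In.1 hM2In.1 hzM2 hzM1
    have hM2In' : MIn G A M2 := MIn_mono Set.diff_subset hM2In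
    have hQ1In : MIn G A (swapM M1 M2 P) :=
      MIn_union_subset hM1In hM2In' hQ1m swapM_subset_union
    have hQ2In : MIn G A (swapM M2 M1 P) :=
      MIn_union_subset hM2In' hM1In hQ2m swapM_subset_union
    rcases hcase with ⟨ha1, ha2, ha3, ha4, ha5, ha6⟩ | ⟨hb1, hb2, hb3, hb4, hb5, hb6, hb7⟩
    · -- terminal exposed by M2 : `swapM M2 M1 P` is maximum in `A`
      by_cases hvp : v = p
      · -- augment `swapM M1 M2 P` with the edge zu
        subst hvp
        have huz : u ≠ z := hadj.ne'
        have hup : u ≠ v := fun h => ha1 (h ▸ hM1exp)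
        have hQ1u : Exposed (swapM M1 M2 P) u := (h5 u huz hup).1.mpr hM1exp
        have hedge : s(z, u) ∈ G.edgeSet := (SimpleGraph.mem_edgeSet (G := G)).mpr hadj
        have hnotmem : s(z, u) ∉ swapM M1 M2 P :=
          fun h => h6a _ h (Sym2.mem_mk_left _ _)
        have hQm : IsMatching G (insert s(z, u) (swapM M1 M2 P)) := by
          refine matching_insert hQ1m hedge ?_
          intro q hq
          rcases Sym2.mem_iff.mp hq with rfl | rfl
          · exact h6a
          · exact hQ1u
        refine ⟨hvA, insert s(z, u) (swapM M1 M2 P), ⟨hQm, ?_⟩, ?_, ?_⟩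
        · intro e he x hx
          rcases Finset.mem_insert.mp he with rfl | he
          · rcases Sym2.mem_iff.mp hx with rfl | rfl
            · exact hzA
            · exact huA
          · exact hQ1In.2 e he x hx
        · rw [Finset.card_insert_of_notMem hnotmem]
          omega
        · intro f hf hpf
          rcases Finset.mem_insert.mp hf with rfl | hf
          · rcases Sym2.mem_iff.mp hpf with rfl | rfl
            · exact hpz rfl
            · exact hup rfl
          · exact ha3 f hf hpf
      · refine ⟨hvA, swapM M2 M1 P, hQ2In, by omega, ?_⟩
        exact (h5 v hvz hvp).2.mpr hM2exp
    · -- `swapM M1 M2 P` is a maximum matching of `A` exposing `z` : contradiction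
      exact absurd ⟨hzA, swapM M1 M2 P, hQ1In, by omega, h6a⟩ hzE
  · rintro ⟨hvA', M, hMIn, hMc, hMexp⟩
    have hzM : ¬ Exposed M z := fun h => hzE ⟨hzA, M, hMIn, hMc, h⟩
    obtain ⟨ez, hez, hzez⟩ := not_exposed_iff.mp hzM
    refine ⟨⟨hvA, hvz⟩, M.erase ez, ⟨matching_subset hMIn.1 (Finset.erase_subset _ _), ?_⟩,
      ?_, exposed_subset hMexp (Finset.erase_subset _ _)⟩
    · intro e he x hx
      have heM := Finset.mem_erase.mp he
      refine ⟨hMIn.2 e heM.2 x hx, ?_⟩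
      rintro rfl
      exact heM.1 (matching_unique hMIn.1 heM.2 hez hx hzez)
    · have := Finset.card_erase_add_one hez
      omega

end NuIn


section Bridge

variable [Fintype V]

lemma MIn_univ_iff : MIn G Set.univ M ↔ IsMatching G M :=
  ⟨fun h => h.1, fun h => ⟨h, fun _ _ _ _ => Set.mem_univ _⟩⟩

lemma nuIn_univ : nuIn G Set.univ = nu G := by
  unfold nuIn nu
  congr 1
  ext n
  constructor
  · rintro ⟨M, hM, hc⟩
    exact ⟨M, hM.1, hc⟩
  · rintro ⟨M, hM, hc⟩
    exact ⟨M, MIn_univ_iff.mpr hM, hc⟩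

lemma isMaxMatching_card (h : IsMaxMatching G M) : M.card = nu G := by
  rw [← nuIn_univ]
  refine le_antisymm (card_le_nuIn (MIn_univ_iff.mpr h.1)) ?_
  obtain ⟨M₀, hM₀, hc₀⟩ := nuIn_spec G (Set.univ : Set V)
  exact hc₀ ▸ h.2 M₀ hM₀.1

lemma inessential_iff {x : V} : Inessential G x ↔ InessIn G Set.univ x := by
  constructor
  · rintro ⟨M, hmax, hexp⟩
    exact ⟨Set.mem_univ x, M, MIn_univ_iff.mpr hmax.1,
      by rw [isMaxMatching_card hmax, nuIn_univ], hexp⟩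
  · rintro ⟨-, M, hM, hc, hexp⟩
    refine ⟨M, ⟨hM.1, fun M' hM' => ?_⟩, hexp⟩
    rw [hc, nuIn_univ]
    rw [← nuIn_univ]
    exact card_le_nuIn (MIn_univ_iff.mpr hM')

lemma geX_geY_disjoint {x : V} (hX : x ∈ geX G) (hY : x ∈ geY G) : False :=
  hY.1 hX

/-- iterated deletion of the Tutte set -/
lemma iterate_removal (S : Finset V) (hS : ↑S ⊆ geY G) :
    nuIn G (Set.univ \ ↑S) + S.card = nu G ∧
    ∀ x : V, x ∉ S → ((InessIn G (Set.univ \ ↑S) x) ↔ InessIn G Set.univ x) := by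
  induction S using Finset.induction_on with
  | empty =>
    constructor
    · simp [nuIn_univ]
    · intro x _
      simp
  | @insert a S haS IH =>
    have hS' : ↑S ⊆ geY G := by
      intro y hy
      exact hS (by exact_mod_cast Finset.mem_insert_of_mem hy)
    obtain ⟨IH1, IH2⟩ := IH hS'
    have haY : a ∈ geY G := hS (by exact_mod_cast Finset.mem_insert_self a S)
    have haA : a ∈ (Set.univ \ ↑S : Set V) := ⟨Set.mem_univ a, by simpa using haS⟩
    have haE : ¬ InessIn G (Set.univ \ ↑S) a := by
      rw [IH2 a haS]
      intro h
      exact haY.1 (inessential_iff.mpr h)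
    obtain ⟨hanX, u, huX, hadj⟩ := haY
    have huS : u ∉ S := fun h => (hS' (by exact_mod_cast h)).1 huX
    have huI : InessIn G (Set.univ \ ↑S) u :=
      (IH2 u huS).mpr (inessential_iff.mp huX)
    have hstab := stability haA haE huI hadj.symm
    have hset : (Set.univ \ ↑S : Set V) \ {a} = Set.univ \ ↑(insert a S) := by
      ext y
      simp only [Set.mem_diff, Set.mem_univ, true_and, Set.mem_singleton_iff,
        Finset.coe_insert, Set.mem_insert_iff, Finset.mem_coe]
      tauto
    have hnu := ess_nuIn_erase haA haE
    rw [hset] at hnu hstab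
    constructor
    · rw [Finset.card_insert_of_notMem haS]
      omega
    · intro x hx
      have hxa : x ≠ a := fun h => hx (h ▸ Finset.mem_insert_self a S)
      have hxS : x ∉ S := fun h => hx (Finset.mem_insert_of_mem h)
      have hxA : x ∈ (Set.univ \ ↑S : Set V) := ⟨Set.mem_univ x, by simpa using hxS⟩
      rw [hstab x hxA hxa]
      exact IH2 x hxS

end Bridge

section Comp

variable [Fintype V]

/-- the ambient set after deleting the Tutte set -/
def Astar (G : SimpleGraph V) : Set V := Set.univ \ geY G

lemma K_subset_Astar {K : Set V} (hK : IsCompOf G (geX G) K) : K ⊆ Astar G :=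
  fun x hx => ⟨Set.mem_univ x, fun hY => hY.1 (hK.1 hx)⟩

lemma isolation {K : Set V} (hK : IsCompOf G (geX G) K) {a b : V}
    (ha : a ∈ K) (hb : b ∈ Astar G) (hbK : b ∉ K) : ¬ G.Adj a b := by
  intro hadj
  by_cases hbX : b ∈ geX G
  · exact hbK (hK.2.2 a ha b hbX hadj)
  · exact hb.2 ⟨hbX, a, hK.1 ha, hadj⟩

lemma edge_in_or_out {K : Set V} (hK : IsCompOf G (geX G) K) {A : Set V}
    (hA : A = Astar G) (hM : MIn G A M) (he : e ∈ M) :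
    (∀ x ∈ e, x ∈ K) ∨ (∀ x ∈ e, x ∉ K) := by
  subst hA
  induction e with
  | _ a b =>
    have hadj : G.Adj a b := (SimpleGraph.mem_edgeSet (G := G)).mp (hM.1.1 _ he)
    have haA : a ∈ Astar G := hM.2 _ he a (Sym2.mem_mk_left _ _)
    have hbA : b ∈ Astar G := hM.2 _ he b (Sym2.mem_mk_right _ _)
    by_cases haK : a ∈ K
    · by_cases hbK : b ∈ K
      · left
        intro x hx
        rcases Sym2.mem_iff.mp hx with rfl | rfl <;> assumption
      · exact absurd hadj (isolation hK haK hbA hbK)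
    · by_cases hbK : b ∈ K
      · exact absurd hadj.symm (isolation hK hbK haA haK)
      · right
        intro x hx
        rcases Sym2.mem_iff.mp hx with rfl | rfl <;> assumption

lemma split_MIn {K : Set V} (hK : IsCompOf G (geX G) K) (hM : MIn G (Astar G) M) :
    MIn G K (M.filter (fun e => ∀ x ∈ e, x ∈ K)) ∧
    MIn G (Astar G \ K) (M.filter (fun e => ¬ ∀ x ∈ e, x ∈ K)) := by
  constructor
  · refine ⟨matching_subset hM.1 (Finset.filter_subset _ _), ?_⟩
    intro e he x hx
    exact (Finset.mem_filter.mp he).2 x hx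
  · refine ⟨matching_subset hM.1 (Finset.filter_subset _ _), ?_⟩
    intro e he x hx
    have he' := Finset.mem_filter.mp he
    rcases edge_in_or_out hK rfl hM he'.1 with h | h
    · exact absurd h he'.2
    · exact ⟨hM.2 e he'.1 x hx, h x hx⟩

lemma union_MIn {K A : Set V} (hKA : K ⊆ A) (h1 : MIn G K N1) (h2 : MIn G (A \ K) N2) :
    MIn G A (N1 ∪ N2) ∧ (N1 ∪ N2).card = N1.card + N2.card := by
  have hdisj : ∀ x : V, x ∈ K → x ∈ A \ K → False := fun x h h' => h'.2 h
  have hcross : ∀ e ∈ N1, ∀ f ∈ N2, ∀ v : V, v ∈ e → v ∉ f := by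
    intro e he f hf v hve hvf
    exact hdisj v (h1.2 e he v hve) (h2.2 f hf v hvf)
  have hne : ∀ e ∈ N1, e ∉ N2 := by
    intro e he he2
    induction e with
    | _ a b => exact hcross _ he _ he2 a (Sym2.mem_mk_left _ _) (Sym2.mem_mk_left _ _)
  constructor
  · refine ⟨⟨?_, ?_⟩, ?_⟩
    · intro e he
      rcases Finset.mem_union.mp he with h | h
      · exact h1.1.1 e h
      · exact h2.1.1 e h
    · intro e he f hf hef v hve hvf
      rcases Finset.mem_union.mp he with he' | he' <;> rcases Finset.mem_union.mp hf with hf' | hf'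
      · exact h1.1.2 e he' f hf' hef v hve hvf
      · exact hcross e he' f hf' v hve hvf
      · exact hcross f hf' e he' v hvf hve
      · exact h2.1.2 e he' f hf' hef v hve hvf
    · intro e he x hx
      rcases Finset.mem_union.mp he with h | h
      · exact hKA (h1.2 e h x hx)
      · exact (h2.2 e h x hx).1
  · exact Finset.card_union_of_disjoint (Finset.disjoint_left.mpr (fun e he => hne e he))

lemma nuIn_split {K : Set V} (hK : IsCompOf G (geX G) K) :
    nuIn G (Astar G) = nuIn G K + nuIn G (Astar G \ K) := by
  refine le_antisymm ?_ ?_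
  · obtain ⟨M, hM, hc⟩ := nuIn_spec G (Astar G)
    obtain ⟨h1, h2⟩ := split_MIn hK hM
    have := Finset.card_filter_add_card_filter_not
      (s := M) (p := fun e => ∀ x ∈ e, x ∈ K)
    have b1 := card_le_nuIn h1
    have b2 := card_le_nuIn h2
    omega
  · obtain ⟨M1, hM1, hc1⟩ := nuIn_spec G K
    obtain ⟨M2, hM2, hc2⟩ := nuIn_spec G (Astar G \ K)
    obtain ⟨hu, hcard⟩ := union_MIn (K_subset_Astar hK) hM1 hM2
    have := card_le_nuIn hu
    omega

lemma restrict_max {K : Set V} (hK : IsCompOf G (geX G) K) (hM : MIn G (Astar G) M)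
    (hc : M.card = nuIn G (Astar G)) :
    (M.filter (fun e => ∀ x ∈ e, x ∈ K)).card = nuIn G K := by
  obtain ⟨h1, h2⟩ := split_MIn hK hM
  have hsplit := Finset.card_filter_add_card_filter_not
    (s := M) (p := fun e => ∀ x ∈ e, x ∈ K)
  have b1 := card_le_nuIn h1
  have b2 := card_le_nuIn h2
  have := nuIn_split (G := G) hK
  omega

lemma iness_restrict {K : Set V} (hK : IsCompOf G (geX G) K) {x : V} (hx : x ∈ K)
    (h : InessIn G (Astar G) x) : InessIn G K x := by
  obtain ⟨-, M, hM, hc, hexp⟩ := h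
  exact ⟨hx, M.filter (fun e => ∀ x ∈ e, x ∈ K), (split_MIn hK hM).1,
    restrict_max hK hM hc, exposed_subset hexp (Finset.filter_subset _ _)⟩

end Comp

section Gallai

variable [Fintype V]

/-- Gallai's lemma (key part): a maximum matching within a connected set of
inessential-within-`K` vertices cannot expose two distinct vertices of `K`. -/
lemma gallai {K : Set V} (hconn : (G.induce K).Connected)
    (hiness : ∀ x ∈ K, InessIn G K x) :
    ∀ N, MIn G K N → N.card = nuIn G K → ∀ x, x ∈ K → ∀ x', x' ∈ K → x ≠ x' →
      Exposed N x → Exposed N x' → False := by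
  intro N₀ hN₀In hN₀c x₀ hx₀ x₀' hx₀' hne₀ hex₀ hex₀'
  set D : Set ℕ := {d | ∃ (N : Finset (Sym2 V)) (x x' : V) (hx : x ∈ K) (hx' : x' ∈ K),
    MIn G K N ∧ N.card = nuIn G K ∧ x ≠ x' ∧ Exposed N x ∧ Exposed N x' ∧
    ∃ W : (G.induce K).Walk ⟨x, hx⟩ ⟨x', hx'⟩, W.length = d} with hD
  have hDne : D.Nonempty := by
    obtain ⟨W⟩ := hconn.preconnected ⟨x₀, hx₀⟩ ⟨x₀', hx₀'⟩
    exact ⟨W.length, N₀, x₀, x₀', hx₀, hx₀', hN₀In, hN₀c, hne₀, hex₀, hex₀', W, rfl⟩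
  have hdmin := Nat.sInf_mem hDne
  set dmin := sInf D with hdmin_def
  have hminimal : ∀ d, d < dmin → d ∉ D := fun d hd hdD => (Nat.sInf_le hdD).not_gt hd
  obtain ⟨N, a, a', ha, ha', hNIn, hNc, hne, hex, hex', W, hWlen⟩ := hdmin
  -- augmenting-edge contradiction, used twice
  have haug : ¬ G.Adj a a' := by
    intro hadj'
    have hedge : s(a, a') ∈ G.edgeSet := (SimpleGraph.mem_edgeSet (G := G)).mpr hadj'
    have hnm : s(a, a') ∉ N := fun hmem => hex _ hmem (Sym2.mem_mk_left _ _)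
    have hNm : IsMatching G (insert s(a, a') N) := by
      refine matching_insert hNIn.1 hedge ?_
      intro q hq
      rcases Sym2.mem_iff.mp hq with rfl | rfl
      · exact hex
      · exact hex'
    have hNIn' : MIn G K (insert s(a, a') N) := by
      refine ⟨hNm, ?_⟩
      intro e he y hy
      rcases Finset.mem_insert.mp he with rfl | he
      · rcases Sym2.mem_iff.mp hy with rfl | rfl
        · exact ha
        · exact ha'
      · exact hNIn.2 e he y hy
    have hle := card_le_nuIn hNIn'
    rw [Finset.card_insert_of_notMem hnm] at hle
    omega
  cases W with
  | nil => exact hne rfl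
  | @cons _ b _ h q =>
    simp only [SimpleGraph.Walk.length_cons] at hWlen
    have hadj_xt : G.Adj a ↑b := by
      have := h
      simp only [SimpleGraph.comap_adj, Function.Embedding.coe_subtype] at this
      exact this
    by_cases hb : b = ⟨a', ha'⟩
    · exact haug (by rw [hb] at hadj_xt; exact hadj_xt)
    · have hta' : (↑b : V) ≠ a' := fun hh => hb (Subtype.ext hh)
      have hq0 : q.length ≠ 0 := fun h0 => hb (SimpleGraph.Walk.eq_of_length_eq_zero h0)
      -- choose a maximum matching of K exposing t := ↑b with maximal overlap with N
      obtain ⟨-, M₀, hM₀In, hM₀c, hM₀exp⟩ := hiness (↑b) b.2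
      set Cand := (Finset.univ : Finset (Finset (Sym2 V))).filter
        (fun M'' => MIn G K M'' ∧ M''.card = nuIn G K ∧ Exposed M'' ↑b) with hCand
      have hCne : Cand.Nonempty :=
        ⟨M₀, Finset.mem_filter.mpr ⟨Finset.mem_univ _, hM₀In, hM₀c, hM₀exp⟩⟩
      obtain ⟨M', hM'C, hmax⟩ := Finset.exists_max_image Cand (fun M'' => (M'' ∩ N).card) hCne
      obtain ⟨-, hM'In, hM'c, hM'exp⟩ := Finset.mem_filter.mp hM'C
      have hacov : ¬ Exposed M' a := by
        intro hexpa
        have h1D : (1 : ℕ) ∈ D :=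
          ⟨M', a, ↑b, ha, b.2, hM'In, hM'c, hadj_xt.ne, hexpa, hM'exp, h.toWalk, by simp⟩
        exact hminimal 1 (by omega) h1D
      obtain ⟨P, p, hPsub, hPsh, hPM1, hpx, hpcov, hQ1m, hQ2m, h5, h6a, h6b, hcase⟩ :=
        master hM'In.1 hNIn.1 hex hacov
      have hQ1In : MIn G K (swapM M' N P) :=
        MIn_union_subset hM'In hNIn hQ1m swapM_subset_union
      have hQ2In : MIn G K (swapM N M' P) :=
        MIn_union_subset hNIn hM'In hQ2m swapM_subset_union
      rcases hcase with ⟨ha1, ha2, ha3, ha4, ha5, ha6⟩ | ⟨hb1, hb2, hb3, hb4, hb5, hb6, hb7⟩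
      · have := card_le_nuIn hQ2In
        omega
      · by_cases htp : (↑b : V) = p
        · have hQ2exp_t : Exposed (swapM N M' P) ↑b := htp ▸ hb4
          have hQ2exp_x' : Exposed (swapM N M' P) a' := by
            refine (h5 a' (fun hh => hne hh.symm) ?_).2.mpr hex'
            exact fun hh => hta' (htp.trans hh.symm)
          have hqD : q.length ∈ D :=
            ⟨swapM N M' P, ↑b, a', b.2, ha', hQ2In, by omega, hta', hQ2exp_t, hQ2exp_x', q, rfl⟩
          exact hminimal q.length (by omega) hqD
        · have hQ1exp_t : Exposed (swapM M' N P) ↑b :=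
            (h5 (↑b) hadj_xt.ne' htp).1.mpr hM'exp
          have hQ1C : swapM M' N P ∈ Cand :=
            Finset.mem_filter.mpr ⟨Finset.mem_univ _, hQ1In, by omega, hQ1exp_t⟩
          have hint : swapM M' N P ∩ N = (M' ∩ N) ∪ (N ∩ P) := by
            ext f
            constructor
            · intro hf
              obtain ⟨hf1, hf2⟩ := Finset.mem_inter.mp hf
              rcases mem_swapM.mp hf1 with ⟨hA, hB⟩ | ⟨hA, hB⟩
              · exact Finset.mem_union_left _ (Finset.mem_inter.mpr ⟨hA, hf2⟩)
              · exact Finset.mem_union_right _ (Finset.mem_inter.mpr ⟨hA, hB⟩)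
            · intro hf
              rcases Finset.mem_union.mp hf with hf | hf
              · obtain ⟨hf1, hf2⟩ := Finset.mem_inter.mp hf
                refine Finset.mem_inter.mpr ⟨mem_swapM.mpr (Or.inl ⟨hf1, ?_⟩), hf2⟩
                exact fun hP => hPsh f hP ⟨hf1, hf2⟩
              · obtain ⟨hf1, hf2⟩ := Finset.mem_inter.mp hf
                exact Finset.mem_inter.mpr ⟨mem_swapM.mpr (Or.inr ⟨hf1, hf2⟩), hf1⟩
          have hdisj2 : Disjoint (M' ∩ N) (N ∩ P) := by
            rw [Finset.disjoint_left]
            intro f hf1 hf2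
            exact hPsh f (Finset.mem_inter.mp hf2).2
              ⟨(Finset.mem_inter.mp hf1).1, (Finset.mem_inter.mp hf1).2⟩
          have hcard2 : (swapM M' N P ∩ N).card = (M' ∩ N).card + (N ∩ P).card := by
            rw [hint]
            exact Finset.card_union_of_disjoint hdisj2
          have hNP : 0 < (N ∩ P).card := by
            obtain ⟨f, hf⟩ := hb7
            exact Finset.card_pos.mpr ⟨f, Finset.mem_inter.mpr
              ⟨(Finset.mem_inter.mp hf).2, (Finset.mem_inter.mp hf).1⟩⟩
          have hle := hmax _ hQ1C
          omega

end Gallai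

section GEiii

variable [Fintype V]

/-- Gallai–Edmonds structure: any maximum matching of `G` matches all vertices of a
component `K` of `G[X]` inside `K`, except exactly one vertex. -/
lemma ge_structure {K : Set V} (hK : IsCompOf G (geX G) K)
    {N : Finset (Sym2 V)} (hN : IsMatching G N) (hNc : N.card = nu G) :
    ∃ z ∈ K, ∀ x ∈ K, x ≠ z → ∃ e ∈ N, x ∈ e ∧ ∀ y ∈ e, y ∈ K := by
  classical
  set Yfin := (geY G).toFinset with hYfin
  have hYcoe : (↑Yfin : Set V) = geY G := Set.coe_toFinset _
  obtain ⟨hnuA, hinv⟩ := iterate_removal (G := G) Yfin (by rw [hYcoe])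
  rw [hYcoe] at hnuA hinv
  have hAstar : (Set.univ \ geY G : Set V) = Astar G := rfl
  set N' := N.filter (fun e => ∀ y ∈ e, y ∉ geY G) with hN'
  have hN'In : MIn G (Astar G) N' := by
    refine ⟨matching_subset hN (Finset.filter_subset _ _), ?_⟩
    intro e he y hy
    exact ⟨Set.mem_univ y, (Finset.mem_filter.mp he).2 y hy⟩
  -- at most |Y| edges of N meet the Tutte set
  have hremove : (N.filter (fun e => ¬ ∀ y ∈ e, y ∉ geY G)).card ≤ Yfin.card := by
    set R := N.filter (fun e => ¬ ∀ y ∈ e, y ∉ geY G) with hR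
    have hw : ∀ e ∈ R, ∃ y, y ∈ e ∧ y ∈ geY G := by
      intro e he
      have h2 := (Finset.mem_filter.mp he).2
      push_neg at h2
      obtain ⟨y, hy1, hy2⟩ := h2
      exact ⟨y, hy1, hy2⟩
    have hcard : R.card = R.attach.card := Finset.card_attach.symm
    rw [hcard]
    refine Finset.card_le_card_of_injOn
      (fun a => Classical.choose (hw a.1 a.2)) ?_ ?_
    · intro a _
      have := Classical.choose_spec (hw a.1 a.2)
      rw [hYfin, Finset.mem_coe, Set.mem_toFinset]
      exact this.2
    · intro a _ a' _ hfa
      have hfa' : Classical.choose (hw a.1 a.2) = Classical.choose (hw a'.1 a'.2) := hfa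
      have h1 := Classical.choose_spec (hw a.1 a.2)
      have h2 := Classical.choose_spec (hw a'.1 a'.2)
      have he1 : a.1 ∈ N := (Finset.mem_filter.mp a.2).1
      have he2 : a'.1 ∈ N := (Finset.mem_filter.mp a'.2).1
      refine Subtype.ext (matching_unique hN he1 he2 h1.1 ?_)
      rw [hfa']
      exact h2.1
  have hsplitN := Finset.card_filter_add_card_filter_not
    (s := N) (p := fun e => ∀ y ∈ e, y ∉ geY G)
  have hN'le := card_le_nuIn hN'In
  have hN'c : N'.card = nuIn G (Astar G) := by
    have h1 : N'.card + (N.filter (fun e => ¬ ∀ y ∈ e, y ∉ geY G)).card = N.card := hsplitN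
    rw [hAstar] at hnuA
    omega
  -- restriction to K is a maximum matching of K
  have hN'Kc := restrict_max hK hN'In hN'c
  have hN'KIn := (split_MIn hK hN'In).1
  have hiness : ∀ x ∈ K, InessIn G K x := by
    intro x hx
    have hxX : x ∈ geX G := hK.1 hx
    have hxY : x ∉ Yfin := by
      rw [hYfin, Set.mem_toFinset]
      exact fun h => h.1 hxX
    refine iness_restrict hK hx ?_
    rw [← hAstar]
    exact (hinv x hxY).mpr (inessential_iff.mp hxX)
  by_contra hcon
  push_neg at hcon
  have hexp : ∀ z ∈ K, ∃ x ∈ K, x ≠ z ∧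
      Exposed (N'.filter (fun e => ∀ y ∈ e, y ∈ K)) x := by
    intro z hz
    obtain ⟨x, hxK, hxz, hxne⟩ := hcon z hz
    refine ⟨x, hxK, hxz, ?_⟩
    intro e he hxe
    have hm := Finset.mem_filter.mp he
    have hm2 := Finset.mem_filter.mp hm.1
    obtain ⟨y, hy, hynK⟩ := hxne e hm2.1 hxe
    exact hynK (hm.2 y hy)
  obtain ⟨b₀⟩ := hK.2.1.nonempty
  obtain ⟨x₁, hx₁K, hx₁ne, hx₁exp⟩ := hexp (↑b₀) b₀.2
  obtain ⟨x₂, hx₂K, hx₂ne, hx₂exp⟩ := hexp x₁ hx₁K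
  exact gallai hK.2.1 hiness _ hN'KIn hN'Kc x₂ hx₂K x₁ hx₁K hx₂ne hx₂exp hx₁exp

end GEiii

section Tight

variable [Fintype V]

/-- sum of `y` over the endpoints of an edge -/
def epSum (y : V → ℝ) (e : Sym2 V) : ℝ := ∑ x ∈ Finset.univ.filter (· ∈ e), y x

lemma pair_filter_eq {a b : V} (hab : a ≠ b) :
    Finset.univ.filter (· ∈ s(a, b)) = ({a, b} : Finset V) := by
  ext x
  simp [Sym2.mem_iff]

lemma epSum_mk {a b : V} (y : V → ℝ) (hab : a ≠ b) : epSum y s(a, b) = y a + y b := by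
  rw [epSum, pair_filter_eq hab, Finset.sum_insert (by simp [hab]), Finset.sum_singleton]

lemma covered_eq_biUnion (hM : IsMatching G M) :
    Finset.univ.filter (fun x => ¬ Exposed M x) =
      M.biUnion (fun e => Finset.univ.filter (· ∈ e)) := by
  ext x
  simp [not_exposed_iff]

lemma matching_pairwiseDisjoint (hM : IsMatching G M) :
    (↑M : Set (Sym2 V)).PairwiseDisjoint (fun e => Finset.univ.filter (· ∈ e)) := by
  intro e he f hf hef
  refine Finset.disjoint_left.mpr ?_
  intro x hx1 hx2
  exact hM.2 e he f hf hef x (Finset.mem_filter.mp hx1).2 (Finset.mem_filter.mp hx2).2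

lemma sum_epSum (hM : IsMatching G M) (y : V → ℝ) :
    ∑ e ∈ M, epSum y e = ∑ x ∈ Finset.univ.filter (fun x => ¬ Exposed M x), y x := by
  rw [covered_eq_biUnion hM, Finset.sum_biUnion (matching_pairwiseDisjoint hM)]
  rfl

lemma covered_card (hM : IsMatching G M) :
    (Finset.univ.filter (fun x => ¬ Exposed M x)).card = 2 * M.card := by
  rw [covered_eq_biUnion hM, Finset.card_biUnion]
  · have h2 : ∀ e ∈ M, (Finset.univ.filter (· ∈ e)).card = 2 := by
      intro e he
      have hedge := hM.1 e he
      induction e with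
      | _ a b =>
        have hadj : G.Adj a b := (SimpleGraph.mem_edgeSet (G := G)).mp hedge
        rw [pair_filter_eq hadj.ne, Finset.card_insert_of_notMem (by simp [hadj.ne]),
          Finset.card_singleton]
    rw [Finset.sum_congr rfl h2, Finset.sum_const, smul_eq_mul, mul_comm]
  · intro e he f hf hef
    refine Finset.disjoint_left.mpr ?_
    intro x hx1 hx2
    exact hM.2 e he f hf hef x (Finset.mem_filter.mp hx1).2 (Finset.mem_filter.mp hx2).2

variable [DecidableEq V]

lemma edge_cover_le {y : V → ℝ} {c : Sym2 V → ℝ}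
    (hcov : ∀ u v : V, G.Adj u v → (1 : ℝ) + c s(u, v) ≤ y u + y v) :
    ∀ e ∈ G.edgeSet, (1 : ℝ) + c e ≤ epSum y e := by
  intro e
  induction e with
  | _ a b =>
    intro hedge
    have hadj : G.Adj a b := (SimpleGraph.mem_edgeSet (G := G)).mp hedge
    rw [epSum_mk y hadj.ne]
    exact hcov a b hadj

lemma matching_tight {M : Finset (Sym2 V)} {y : V → ℝ} {c : Sym2 V → ℝ}
    (hfeas : FeasSol G M y c) :
    (∀ e ∈ M, epSum y e = 1 + c e) ∧ (∀ x : V, Exposed M x → y x = 0) := by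
  obtain ⟨hM, hc0, ⟨hy0, hcov⟩, hsum⟩ := hfeas
  have hpt : ∀ e ∈ M, (1 : ℝ) + c e ≤ epSum y e :=
    fun e he => edge_cover_le hcov e (hM.1 e he)
  have h1 : ∑ e ∈ M, epSum y e = ∑ x ∈ Finset.univ.filter (fun x => ¬ Exposed M x), y x :=
    sum_epSum hM y
  have hsplit := Finset.sum_filter_add_sum_filter_not Finset.univ
    (fun x => ¬ Exposed M x) y
  have hrest_nonneg : (0 : ℝ) ≤ ∑ x ∈ Finset.univ.filter (fun x => ¬¬ Exposed M x), y x :=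
    Finset.sum_nonneg (fun x _ => hy0 x)
  have hle : ∑ e ∈ M, ((1 : ℝ) + c e) ≤ ∑ e ∈ M, epSum y e := Finset.sum_le_sum hpt
  have htotal : ∑ e ∈ M, ((1 : ℝ) + c e) = ∑ x, y x := hsum
  have heq : ∑ e ∈ M, ((1 : ℝ) + c e) = ∑ e ∈ M, epSum y e := by
    rw [h1]
    linarith
  have hrest0 : ∑ x ∈ Finset.univ.filter (fun x => ¬¬ Exposed M x), y x = 0 := by
    rw [h1] at heq
    linarith
  constructor
  · intro e he
    exact ((Finset.sum_eq_sum_iff_of_le hpt).mp heq e he).symm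
  · intro x hx
    have := (Finset.sum_eq_zero_iff_of_nonneg (fun x _ => hy0 x)).mp hrest0 x
      (Finset.mem_filter.mpr ⟨Finset.mem_univ _, not_not_intro hx⟩)
    exact this

end Tight

end Stab

namespace Stab

/-- for a feasible MFASP solution `(M,y,c)` satisfying properties (a)–(d),
if a nontrivial connected component `K` of `G[X]` contains a vertex `u` with `y_u = 0`
and is matched to the Tutte set by an edge `e' = {v,w} ∈ M` with `w ∈ Y` and
`y_w ≥ 1/2`, then `∑_{e ∈ E(K)} c_e + c_{e'} ≥ y_w`. -/
theorem stmt7 {V : Type*} [Fintype V] [DecidableEq V] (G : SimpleGraph V)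
    (M : Finset (Sym2 V)) (y : V → ℝ) (c : Sym2 V → ℝ)
    (hfeas : FeasSol G M y c) (habcd : PropsABCD G M y c)
    (K : Set V) (hK : IsCompOf G (geX G) K) (hnt : K.Nontrivial)
    (hu : ∃ u ∈ K, y u = 0)
    (v w : V) (he' : s(v, w) ∈ M) (hv : v ∈ K) (hw : w ∈ geY G) (hyw : 1 / 2 ≤ y w) :
    y w ≤ (∑ e ∈ edgesIn G K, c e) + c s(v, w) := by
  classical
  obtain ⟨hM, hc0, hfc, hsum⟩ := hfeas
  obtain ⟨hy0, hcovc⟩ := hfc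
  obtain ⟨T1, T2⟩ := matching_tight ⟨hM, hc0, ⟨hy0, hcovc⟩, hsum⟩
  have hadj_vw : G.Adj v w := (SimpleGraph.mem_edgeSet (G := G)).mp (hM.1 _ he')
  have hce' : y v + y w = 1 + c s(v, w) := by
    have h := T1 _ he'
    rwa [epSum_mk y hadj_vw.ne] at h
  obtain ⟨u, huK, hyu⟩ := hu
  obtain ⟨s', hs'K, hs'ne⟩ := hnt.exists_ne u
  obtain ⟨W⟩ := hK.2.1.preconnected ⟨u, huK⟩ ⟨s', hs'K⟩
  cases W with
  | nil => exact absurd rfl hs'ne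
  | @cons _ b _ h q =>
    have hadj_ut : G.Adj u ↑b := by
      have h' := h
      simp only [SimpleGraph.comap_adj, Function.Embedding.coe_subtype] at h'
      exact h'
    have htK : (↑b : V) ∈ K := b.2
    have hc_ut : 0 ≤ c s(u, ↑b) := hc0 _ (Finset.mem_filter.mpr
      ⟨Finset.mem_univ _, (SimpleGraph.mem_edgeSet (G := G)).mpr hadj_ut⟩)
    have hyt : 1 ≤ y ↑b := by
      have hcc := hcovc u ↑b hadj_ut
      simp only at hcc
      linarith [hyu ▸ hcc]
    have hMcard : M.card = nu G := habcd.2.2.1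
    obtain ⟨zM, hzMK, hzM⟩ := ge_structure hK hM hMcard
    have hwK : w ∉ K := fun hwK' => hw.1 (hK.1 hwK')
    have hzMv : zM = v := by
      by_contra hne
      obtain ⟨e, heM, hve, hin⟩ := hzM v hv (fun hh => hne hh.symm)
      have heq : e = s(v, w) := matching_unique hM heM he' hve (Sym2.mem_mk_left _ _)
      exact hwK (hin w (by rw [heq]; exact Sym2.mem_mk_right _ _))
    have hMcover : ∀ x ∈ K, x ≠ v → ∃ e ∈ M, x ∈ e ∧ ∀ y ∈ e, y ∈ K :=
      fun x hx hxv => hzM x hx (by rw [hzMv]; exact hxv)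
    have htX : Inessential G ↑b := hK.1 htK
    obtain ⟨Nt, hNtmax, hNtexp⟩ := htX
    obtain ⟨zT, hzTK, hzT⟩ := ge_structure hK hNtmax.1 (isMaxMatching_card hNtmax)
    have hzTt : zT = ↑b := by
      by_contra hne
      obtain ⟨e, heN, hte, -⟩ := hzT (↑b) htK (fun hh => hne hh.symm)
      exact hNtexp e heN hte
    have hNtcover : ∀ x ∈ K, x ≠ ↑b → ∃ e ∈ Nt, x ∈ e ∧ ∀ y ∈ e, y ∈ K :=
      fun x hx hxt => hzT x hx (by rw [hzTt]; exact hxt)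
    set MK := M.filter (fun e => ∀ x ∈ e, x ∈ K) with hMKdef
    set QT := Nt.filter (fun e => ∀ x ∈ e, x ∈ K) with hQTdef
    have hMKm : IsMatching G MK := matching_subset hM (Finset.filter_subset _ _)
    have hQTm : IsMatching G QT := matching_subset hNtmax.1 (Finset.filter_subset _ _)
    have hMKcov : Finset.univ.filter (fun x => ¬ Exposed MK x) = K.toFinset.erase v := by
      ext x
      simp only [Finset.mem_filter, Finset.mem_univ, true_and, Finset.mem_erase,
        Set.mem_toFinset]
      constructor
      · intro hx
        obtain ⟨e, he, hxe⟩ := not_exposed_iff.mp hx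
        have hm := Finset.mem_filter.mp he
        refine ⟨?_, hm.2 x hxe⟩
        rintro rfl
        have heq : e = s(x, w) := matching_unique hM hm.1 he' hxe (Sym2.mem_mk_left _ _)
        exact hwK (hm.2 w (by rw [heq]; exact Sym2.mem_mk_right _ _))
      · rintro ⟨hxv, hxK⟩
        obtain ⟨e, heM, hxe, hin⟩ := hMcover x hxK hxv
        exact not_exposed_iff.mpr ⟨e, Finset.mem_filter.mpr ⟨heM, hin⟩, hxe⟩
    have hQTcov : Finset.univ.filter (fun x => ¬ Exposed QT x) = K.toFinset.erase ↑b := by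
      ext x
      simp only [Finset.mem_filter, Finset.mem_univ, true_and, Finset.mem_erase,
        Set.mem_toFinset]
      constructor
      · intro hx
        obtain ⟨e, he, hxe⟩ := not_exposed_iff.mp hx
        have hm := Finset.mem_filter.mp he
        refine ⟨?_, hm.2 x hxe⟩
        rintro rfl
        exact hNtexp e hm.1 hxe
      · rintro ⟨hxt, hxK⟩
        obtain ⟨e, heN, hxe, hin⟩ := hNtcover x hxK hxt
        exact not_exposed_iff.mpr ⟨e, Finset.mem_filter.mpr ⟨heN, hin⟩, hxe⟩
    have hvKf : v ∈ K.toFinset := Set.mem_toFinset.mpr hv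
    have htKf : (↑b : V) ∈ K.toFinset := Set.mem_toFinset.mpr htK
    have hcard1 : (K.toFinset.erase v).card + 1 = K.toFinset.card :=
      Finset.card_erase_add_one hvKf
    have hcard2 : (K.toFinset.erase ↑b).card + 1 = K.toFinset.card :=
      Finset.card_erase_add_one htKf
    have hc1 := covered_card hMKm
    have hc2 := covered_card hQTm
    rw [hMKcov] at hc1
    rw [hQTcov] at hc2
    have hQTcard : QT.card = MK.card := by omega
    have hS1 : ∑ e ∈ MK, c e ≤ ∑ e ∈ edgesIn G K, c e := by
      refine Finset.sum_le_sum_of_subset_of_nonneg ?_ ?_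
      · intro e he
        have hm := Finset.mem_filter.mp he
        exact Finset.mem_filter.mpr ⟨Finset.mem_univ _, hM.1 e hm.1, hm.2⟩
      · intro e he _
        exact hc0 e (Finset.mem_filter.mpr ⟨Finset.mem_univ _,
          (Finset.mem_filter.mp he).2.1⟩)
    have hS2 : ∑ e ∈ MK, ((1 : ℝ) + c e) = ∑ x ∈ K.toFinset.erase v, y x := by
      rw [← hMKcov, ← sum_epSum hMKm y]
      exact (Finset.sum_congr rfl (fun e he => T1 e (Finset.mem_filter.mp he).1)).symm
    have hS3 : (QT.card : ℝ) ≤ ∑ x ∈ K.toFinset.erase ↑b, y x := by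
      rw [← hQTcov, ← sum_epSum hQTm y]
      have hone : ∀ e ∈ QT, (1 : ℝ) ≤ epSum y e := by
        intro e he
        have hedge : e ∈ G.edgeSet := hQTm.1 e he
        have h1 := edge_cover_le hcovc e hedge
        have h2 : 0 ≤ c e := hc0 e (Finset.mem_filter.mpr ⟨Finset.mem_univ _, hedge⟩)
        linarith
      calc (QT.card : ℝ) = ∑ _e ∈ QT, (1 : ℝ) := by
            rw [Finset.sum_const, nsmul_eq_mul, mul_one]
        _ ≤ ∑ e ∈ QT, epSum y e := Finset.sum_le_sum hone
    have hsum_erase_v : ∑ x ∈ K.toFinset.erase v, y x + y v = ∑ x ∈ K.toFinset, y x :=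
      Finset.sum_erase_add _ _ hvKf
    have hsum_erase_t : ∑ x ∈ K.toFinset.erase ↑b, y x + y ↑b = ∑ x ∈ K.toFinset, y x :=
      Finset.sum_erase_add _ _ htKf
    have hsum_c : ∑ e ∈ MK, ((1 : ℝ) + c e) = MK.card + ∑ e ∈ MK, c e := by
      rw [Finset.sum_add_distrib, Finset.sum_const, nsmul_eq_mul, mul_one]
    have hQM : (QT.card : ℝ) = (MK.card : ℝ) := by exact_mod_cast congrArg Nat.cast hQTcard
    linarith [hS1, hS2, hS3, hyt, hce', hsum_erase_v, hsum_erase_t, hsum_c, hQM]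

end Stab
end
end

section
/- Let G=(V,E) be a finite simple graph with Gallai–Edmonds decomposition V = X ∪ Y ∪ Z, and let (M,y,c) be a feasible MFASP solution satisfying properties (a)–(d) such that (y,c) minimizes ∑_{e∈E} c_e among all pairs (y',c') for which (M,y',c') is a feasible MFASP solution. If K is a nontrivial connected component of G[X] all of whose vertices are covered by M, then y_v = 1/2 for every v ∈ V(K) and c_e = 0 for every e ∈ E(K). -/
open Finset
open scoped Classical

noncomputable section

set_option linter.unusedSectionVars false
namespace Stab

section Basics

variable {V : Type*} [Fintype V] [DecidableEq V] {G : SimpleGraph V}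

/-- `v` is covered by the matching `N`. -/
def Covered (N : Finset (Sym2 V)) (v : V) : Prop := ∃ e ∈ N, v ∈ e

lemma not_exposed_iff_s8 {N : Finset (Sym2 V)} {v : V} : ¬ Exposed N v ↔ Covered N v := by
  simp [Exposed, Covered]

lemma Covered.mono {N P : Finset (Sym2 V)} {v : V} (h : P ⊆ N) (hv : Covered P v) :
    Covered N v := by obtain ⟨e, he, hve⟩ := hv; exact ⟨e, h he, hve⟩

lemma matching_unique_s8 {N : Finset (Sym2 V)} (hN : IsMatching G N) {e f : Sym2 V}
    (he : e ∈ N) (hf : f ∈ N) {v : V} (hve : v ∈ e) (hvf : v ∈ f) : e = f := by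
  by_contra h; exact hN.2 e he f hf h v hve hvf

lemma matching_subset_s8 {N P : Finset (Sym2 V)} (hP : P ⊆ N) (hN : IsMatching G N) :
    IsMatching G P :=
  ⟨fun e he => hN.1 e (hP he), fun e he f hf hef v hv => hN.2 e (hP he) f (hP hf) hef v hv⟩

lemma empty_matching : IsMatching G (∅ : Finset (Sym2 V)) :=
  ⟨fun e he => absurd he (Finset.notMem_empty e),
   fun e he => absurd he (Finset.notMem_empty e)⟩

lemma edge_eq {e : Sym2 V} (he : e ∈ G.edgeSet) :
    ∃ a b, a ≠ b ∧ e = s(a, b) ∧ G.Adj a b := by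
  induction e with
  | _ a b =>
    rw [SimpleGraph.mem_edgeSet] at he
    exact ⟨a, b, G.ne_of_adj he, rfl, he⟩

lemma matching_edge_ne {N : Finset (Sym2 V)} (hN : IsMatching G N) {a b : V}
    (h : s(a, b) ∈ N) : a ≠ b := by
  have := hN.1 _ h
  rw [SimpleGraph.mem_edgeSet] at this
  exact G.ne_of_adj this

/-- the vertex-sum of `y` over an edge -/
def vsum (y : V → ℝ) : Sym2 V → ℝ :=
  Sym2.lift ⟨fun a b => y a + y b, fun a b => add_comm _ _⟩

@[simp] lemma vsum_mk (y : V → ℝ) (a b : V) : vsum y s(a, b) = y a + y b := rfl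

/-- the finset of vertices covered by `N` -/
def covF (N : Finset (Sym2 V)) : Finset V := Finset.univ.filter (Covered N)

@[simp] lemma mem_covF {N : Finset (Sym2 V)} {v : V} : v ∈ covF N ↔ Covered N v := by
  simp [covF]

lemma covF_biUnion {N : Finset (Sym2 V)} :
    covF N = N.biUnion (fun e => Finset.univ.filter (· ∈ e)) := by
  ext v; simp [covF, Covered]

lemma sum_covF {N : Finset (Sym2 V)} (hN : IsMatching G N) (f : V → ℝ) :
    ∑ v ∈ covF N, f v = ∑ e ∈ N, vsum f e := by
  rw [covF_biUnion, Finset.sum_biUnion]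
  · refine Finset.sum_congr rfl fun e he => ?_
    obtain ⟨a, b, hab, rfl, -⟩ := edge_eq (hN.1 e he)
    have h2 : Finset.univ.filter (· ∈ s(a, b)) = {a, b} := by
      ext v; simp [Sym2.mem_iff]
    rw [h2, Finset.sum_pair hab, vsum_mk]
  · intro e he f hf hef
    simp only [Finset.disjoint_left, Finset.mem_filter, Finset.mem_univ, true_and]
    intro v hve hvf
    exact hN.2 e (Finset.mem_coe.mp he) f (Finset.mem_coe.mp hf) hef v hve hvf

lemma card_covF {N : Finset (Sym2 V)} (hN : IsMatching G N) :
    (covF N).card = 2 * N.card := by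
  have h2 : ∀ e ∈ N, vsum (fun _ => (1 : ℝ)) e = 2 := fun e he => by
    obtain ⟨a, b, hab, rfl, -⟩ := edge_eq (hN.1 e he)
    rw [vsum_mk]; norm_num
  have h := sum_covF hN (fun _ => (1 : ℝ))
  rw [Finset.sum_congr rfl h2, Finset.sum_const, Finset.sum_const] at h
  simp only [nsmul_eq_mul, mul_one] at h
  have : (covF N).card = N.card * 2 := by exact_mod_cast h
  omega

lemma matching_card_le_nu {N : Finset (Sym2 V)} (hN : IsMatching G N) : N.card ≤ nu G := by
  apply le_csSup
  · refine ⟨Fintype.card (Sym2 V), ?_⟩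
    rintro n ⟨P, hP, rfl⟩
    simpa using Finset.card_le_univ P
  · exact ⟨N, hN, rfl⟩

lemma exists_max_matching (G : SimpleGraph V) : ∃ N, IsMatching G N ∧ N.card = nu G := by
  have h : nu G ∈ {n | ∃ P, IsMatching G P ∧ P.card = n} := by
    apply Nat.sSup_mem
    · exact ⟨0, ∅, empty_matching, by simp⟩
    · refine ⟨Fintype.card (Sym2 V), ?_⟩
      rintro n ⟨P, hP, rfl⟩
      simpa using Finset.card_le_univ P
  obtain ⟨P, hP, hc⟩ := h
  exact ⟨P, hP, hc⟩

lemma isMax_of_card_nu {N : Finset (Sym2 V)} (hN : IsMatching G N) (hc : N.card = nu G) :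
    IsMaxMatching G N := by
  refine ⟨hN, fun M' hM' => ?_⟩
  rw [hc]; exact matching_card_le_nu hM'

lemma IsMaxMatching.card_eq {N : Finset (Sym2 V)} (hN : IsMaxMatching G N) :
    N.card = nu G := by
  refine le_antisymm (matching_card_le_nu hN.1) ?_
  obtain ⟨P, hP, hc⟩ := exists_max_matching G
  rw [← hc]; exact hN.2 P hP

/-- essential vertices are covered by every maximum matching -/
lemma essential_covered {v : V} (hv : ¬ Inessential G v) {N : Finset (Sym2 V)}
    (hN : IsMatching G N) (hc : N.card = nu G) : Covered N v := by
  rw [← not_exposed_iff_s8]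
  intro hexp
  exact hv ⟨N, isMax_of_card_nu hN hc, hexp⟩

end Basics

end Stab
namespace Stab

section Trails

variable {V : Type*} [Fintype V] [DecidableEq V] {G : SimpleGraph V}
variable {A B : Finset (Sym2 V)}

/-- alternating trail: edge `i` is in `A` for even `i`, in `B` for odd `i` -/
def STrail (A B : Finset (Sym2 V)) (x : ℕ → V) (k : ℕ) : Prop :=
  ∀ i, i < k → s(x i, x (i + 1)) ∈ (if Even i then A else B)

/-- the trail cannot be extended -/
def Stuck (A B : Finset (Sym2 V)) (x : ℕ → V) (k : ℕ) : Prop :=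
  if Even k then ¬ Covered A (x k) else ¬ Covered B (x k)

lemma trail_mem_edgeSet (hA : IsMatching G A) (hB : IsMatching G B)
    {e : Sym2 V} {i : ℕ} (he : e ∈ (if Even i then A else B)) : e ∈ G.edgeSet := by
  by_cases h : Even i
  · rw [if_pos h] at he; exact hA.1 e he
  · rw [if_neg h] at he; exact hB.1 e he

lemma trail_ne (hA : IsMatching G A) (hB : IsMatching G B)
    {x : ℕ → V} {k : ℕ} (ht : STrail A B x k) {i : ℕ} (hi : i < k) : x i ≠ x (i + 1) := by
  intro heq
  have h := trail_mem_edgeSet hA hB (ht i hi)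
  rw [heq] at h
  rw [SimpleGraph.mem_edgeSet] at h
  exact G.loopless.irrefl _ h

lemma same_parity_unique (hA : IsMatching G A) (hB : IsMatching G B)
    {m m' : ℕ} (hpar : Even m ↔ Even m') {e f : Sym2 V}
    (he : e ∈ (if Even m then A else B)) (hf : f ∈ (if Even m' then A else B))
    {v : V} (hv : v ∈ e) (hv' : v ∈ f) : e = f := by
  by_cases h : Even m
  · rw [if_pos h] at he; rw [if_pos (hpar.mp h)] at hf
    exact matching_unique_s8 hA he hf hv hv'
  · rw [if_neg h] at he; rw [if_neg (fun hh => h (hpar.mpr hh))] at hf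
    exact matching_unique_s8 hB he hf hv hv'

lemma trail_nodup (hA : IsMatching G A) (hB : IsMatching G B)
    {x : ℕ → V} {k : ℕ} (ht : STrail A B x k) (h0 : ¬ Covered B (x 0)) :
    ∀ j, j ≤ k → ∀ i, i < j → x i ≠ x j := by
  intro j
  induction j using Nat.strong_induction_on with
  | _ j IH =>
  intro hjk i hij heq
  obtain ⟨j', rfl⟩ : ∃ j', j = j' + 1 := ⟨j - 1, by omega⟩
  have hj'k : j' < k := by omega
  have hf : s(x j', x (j' + 1)) ∈ (if Even j' then A else B) := ht j' hj'k
  have hxj : x (j' + 1) ∈ s(x j', x (j' + 1)) := Sym2.mem_mk_right _ _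
  rcases Nat.eq_zero_or_pos i with rfl | hi
  · -- i = 0
    have hmem : x 0 ∈ s(x j', x (j' + 1)) := heq ▸ hxj
    by_cases hev : Even j'
    swap
    · rw [if_neg hev] at hf
      exact h0 ⟨_, hf, hmem⟩
    · rw [if_pos hev] at hf
      have h0k : 0 < k := by omega
      have he0 : s(x 0, x 1) ∈ (if Even 0 then A else B) := ht 0 h0k
      rw [if_pos (by norm_num)] at he0
      have hfe0 : s(x j', x (j' + 1)) = s(x 0, x 1) :=
        matching_unique_s8 hA hf he0 hmem (Sym2.mem_mk_left _ _)
      rw [Sym2.eq_iff] at hfe0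
      rcases hfe0 with ⟨h1, h2⟩ | ⟨h1, h2⟩
      · exact (trail_ne hA hB ht h0k) (heq.trans h2)
      · rcases Nat.lt_trichotomy j' 1 with hj1 | hj1 | hj1
        · obtain rfl : j' = 0 := by omega
          exact (trail_ne hA hB ht hj'k) heq
        · rw [hj1] at hev; norm_num at hev
        · exact (IH j' (by omega) (by omega) 1 hj1) h1.symm
  · -- i ≥ 1
    obtain ⟨i', rfl⟩ : ∃ i', i = i' + 1 := ⟨i - 1, by omega⟩
    have hik : i' + 1 < k := by omega
    have hg1 : s(x i', x (i' + 1)) ∈ (if Even i' then A else B) := ht i' (by omega)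
    have hg2 : s(x (i' + 1), x (i' + 2)) ∈ (if Even (i' + 1) then A else B) := ht (i' + 1) hik
    have hmem : x (i' + 1) ∈ s(x j', x (j' + 1)) := heq ▸ hxj
    by_cases hpar : Even j' ↔ Even i'
    · have hfg : s(x j', x (j' + 1)) = s(x i', x (i' + 1)) :=
        same_parity_unique hA hB hpar hf hg1 hmem (Sym2.mem_mk_right _ _)
      rw [Sym2.eq_iff] at hfg
      rcases hfg with ⟨h1, h2⟩ | ⟨h1, h2⟩
      · have hne : i' < j' := by omega
        exact (IH j' (by omega) (by omega) i' hne) h1.symm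
      · exact (trail_ne hA hB ht (show i' < k by omega)) (heq.trans h2).symm
    · have hpar2 : Even j' ↔ Even (i' + 1) := by
        rw [Nat.even_add_one]; tauto
      have hfg : s(x j', x (j' + 1)) = s(x (i' + 1), x (i' + 2)) :=
        same_parity_unique hA hB hpar2 hf hg2 hmem (Sym2.mem_mk_left _ _)
      rw [Sym2.eq_iff] at hfg
      rcases hfg with ⟨h1, h2⟩ | ⟨h1, h2⟩
      · exact (trail_ne hA hB ht hik) (heq.trans h2)
      · rcases Nat.lt_trichotomy (i' + 2) j' with hlt | heq2 | hgt
        · exact (IH j' (by omega) (by omega) (i' + 2) hlt) h1.symm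
        · refine hpar ?_
          rw [← heq2, Nat.even_iff, Nat.even_iff]; omega
        · have hj : i' + 2 = j' + 1 := by omega
          refine (trail_ne hA hB ht hj'k) ?_
          rw [← hj] at *; exact h1
  termination_by j => j

lemma exists_stuck_trail (hA : IsMatching G A) (hB : IsMatching G B)
    (x0 : V) (h0 : ¬ Covered B x0) :
    ∃ (x : ℕ → V) (k : ℕ), x 0 = x0 ∧ STrail A B x k ∧ Stuck A B x k := by
  classical
  set L : Set ℕ := {k | ∃ x : ℕ → V, x 0 = x0 ∧ STrail A B x k} with hL
  have hne : 0 ∈ L := ⟨fun _ => x0, rfl, fun i hi => absurd hi (Nat.not_lt_zero i)⟩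
  have hbdd : BddAbove L := by
    refine ⟨Fintype.card V, ?_⟩
    rintro k ⟨x, hx0, ht⟩
    by_contra hk
    push_neg at hk
    have hinj := trail_nodup hA hB ht (hx0 ▸ h0)
    have hcard : (Finset.range (k + 1)).card ≤ (Finset.univ : Finset V).card := by
      apply Finset.card_le_card_of_injOn x (fun _ _ => Finset.mem_univ _)
      intro a ha b hb hab
      simp only [Finset.coe_range, Set.mem_Iio] at ha hb
      by_contra hne2
      rcases Nat.lt_or_ge a b with h | h
      · exact (hinj b (by omega) a h) hab
      · exact (hinj a (by omega) b (by omega)) hab.symm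
    simp only [Finset.card_range, Finset.card_univ] at hcard
    omega
  obtain ⟨x, hx0, ht⟩ := Nat.sSup_mem ⟨0, hne⟩ hbdd
  refine ⟨x, sSup L, hx0, ht, ?_⟩
  set k := sSup L with hk
  unfold Stuck
  have hext : ¬ Covered (if Even k then A else B) (x k) := by
    rintro ⟨e, heC, hve⟩
    have heG : e ∈ G.edgeSet := trail_mem_edgeSet hA hB heC
    obtain ⟨a, b, hab, rfl, -⟩ := edge_eq heG
    obtain ⟨w, hw⟩ : ∃ w, s(a, b) = s(x k, w) := by
      rw [Sym2.mem_iff] at hve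
      rcases hve with rfl | rfl
      · exact ⟨b, rfl⟩
      · exact ⟨a, Sym2.eq_swap⟩
    rw [hw] at heC
    have hmem : (k + 1) ∈ L := by
      refine ⟨fun i => if i ≤ k then x i else w, ?_, ?_⟩
      · show (if 0 ≤ k then x 0 else w) = x0
        rw [if_pos (Nat.zero_le k)]; exact hx0
      intro i hik
      rcases Nat.lt_or_ge i k with h | h
      · simp only [if_pos (by omega : i ≤ k), if_pos (by omega : i + 1 ≤ k)]
        exact ht i h
      · obtain rfl : i = k := by omega
        simp only [if_pos (le_refl k), if_neg (by omega : ¬ k + 1 ≤ k)]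
        exact heC
    have := le_csSup hbdd hmem
    omega
  by_cases hev : Even k
  · rw [if_pos hev]; rw [if_pos hev] at hext; exact hext
  · rw [if_neg hev]; rw [if_neg hev] at hext; exact hext

lemma trail_unique (hA : IsMatching G A) (hB : IsMatching G B)
    {x : ℕ → V} {k : ℕ} {x' : ℕ → V} {k' : ℕ}
    (ht : STrail A B x k) (hs : Stuck A B x k)
    (ht' : STrail A B x' k') (hs' : Stuck A B x' k')
    (h00 : x 0 = x' 0) : k = k' ∧ ∀ i, i ≤ k → x i = x' i := by
  have key : ∀ i, i ≤ min k k' → x i = x' i := by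
    intro i
    induction i with
    | zero => intro _; exact h00
    | succ n IHn =>
      intro hn
      have hm1 := Nat.min_le_left k k'
      have hm2 := Nat.min_le_right k k'
      have hxn := IHn (by omega)
      have he : s(x n, x (n + 1)) ∈ (if Even n then A else B) := ht n (by omega)
      have he' : s(x' n, x' (n + 1)) ∈ (if Even n then A else B) := ht' n (by omega)
      have hxmem : x n ∈ s(x' n, x' (n + 1)) := by
        rw [hxn]; exact Sym2.mem_mk_left _ _
      have heq : s(x n, x (n + 1)) = s(x' n, x' (n + 1)) :=
        same_parity_unique hA hB Iff.rfl he he' (Sym2.mem_mk_left _ _) hxmem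
      rw [Sym2.eq_iff] at heq
      rcases heq with ⟨h1, h2⟩ | ⟨h1, h2⟩
      · exact h2
      · exact absurd ((h2.trans hxn.symm).symm) (trail_ne hA hB ht (show n < k by omega))
  have hkk : k = k' := by
    by_contra hne
    rcases Nat.lt_or_ge k k' with h | h
    · have he' : s(x' k, x' (k + 1)) ∈ (if Even k then A else B) := ht' k h
      have hxk : x k = x' k := key k (by rw [Nat.min_def]; split <;> omega)
      have hcov : Covered (if Even k then A else B) (x k) :=
        ⟨_, he', by rw [hxk]; exact Sym2.mem_mk_left _ _⟩
      unfold Stuck at hs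
      by_cases hev : Even k
      · rw [if_pos hev] at hs; rw [if_pos hev] at hcov; exact hs hcov
      · rw [if_neg hev] at hs; rw [if_neg hev] at hcov; exact hs hcov
    · have h2 : k' < k := by omega
      have he : s(x k', x (k' + 1)) ∈ (if Even k' then A else B) := ht k' h2
      have hxk : x k' = x' k' := key k' (by rw [Nat.min_def]; split <;> omega)
      have hcov : Covered (if Even k' then A else B) (x' k') :=
        ⟨s(x k', x (k' + 1)), he, by rw [← hxk]; exact Sym2.mem_mk_left _ _⟩
      unfold Stuck at hs'
      by_cases hev : Even k'
      · rw [if_pos hev] at hs'; rw [if_pos hev] at hcov; exact hs' hcov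
      · rw [if_neg hev] at hs'; rw [if_neg hev] at hcov; exact hs' hcov
  subst hkk
  exact ⟨rfl, fun i hi => key i (by rw [Nat.min_self]; exact hi)⟩

lemma trail_reverse_even {x : ℕ → V} {k : ℕ} (hk : Even k) (ht : STrail A B x k) :
    STrail B A (fun i => x (k - i)) k := by
  intro i hi
  have h := ht (k - i - 1) (by omega)
  have e1 : k - i - 1 + 1 = k - i := by omega
  rw [e1] at h
  have e2 : k - (i + 1) = k - i - 1 := by omega
  have hsw : s(x (k - i), x (k - (i + 1))) = s(x (k - i - 1), x (k - i)) := by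
    rw [e2]; exact Sym2.eq_swap
  simp only []
  rw [hsw]
  have hpar : Even (k - i - 1) ↔ ¬ Even i := by
    rw [Nat.even_iff] at hk ⊢; rw [Nat.even_iff]; omega
  by_cases hev : Even i
  · rw [if_pos hev]
    rw [if_neg (by tauto)] at h
    exact h
  · rw [if_neg hev]
    rw [if_pos (hpar.mpr hev)] at h
    exact h

lemma trail_reverse_odd {x : ℕ → V} {k : ℕ} (hk : ¬ Even k) (ht : STrail A B x k) :
    STrail A B (fun i => x (k - i)) k := by
  intro i hi
  have h := ht (k - i - 1) (by omega)
  have e1 : k - i - 1 + 1 = k - i := by omega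
  rw [e1] at h
  have e2 : k - (i + 1) = k - i - 1 := by omega
  have hsw : s(x (k - i), x (k - (i + 1))) = s(x (k - i - 1), x (k - i)) := by
    rw [e2]; exact Sym2.eq_swap
  simp only []
  rw [hsw]
  have hpar : Even (k - i - 1) ↔ Even i := by
    rw [Nat.even_iff] at hk ⊢; rw [Nat.even_iff]; omega
  by_cases hev : Even i
  · rw [if_pos hev]
    rw [if_pos (hpar.mpr hev)] at h
    exact h
  · rw [if_neg hev]
    rw [if_neg (by tauto)] at h
    exact h

end Trails

end Stab
namespace Stab

section Flips

variable {V : Type*} [Fintype V] [DecidableEq V] {G : SimpleGraph V}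
variable {M N : Finset (Sym2 V)} {x : ℕ → V} {k : ℕ}

/-- even-indexed trail edges -/
def evenE (x : ℕ → V) (k : ℕ) : Finset (Sym2 V) :=
  ((Finset.range k).filter (fun i => Even i)).image (fun i => s(x i, x (i + 1)))

/-- odd-indexed trail edges -/
def oddE (x : ℕ → V) (k : ℕ) : Finset (Sym2 V) :=
  ((Finset.range k).filter (fun i => ¬ Even i)).image (fun i => s(x i, x (i + 1)))

lemma flipB (hM : IsMatching G M) (hN : IsMatching G N)
    (ht : STrail (M \ N) (N \ M) x k)
    (h0 : ¬ Covered N (x 0)) (hkodd : ¬ Even k) (hkend : ¬ Covered N (x k)) :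
    ∃ N' : Finset (Sym2 V), IsMatching G N' ∧ N' ⊆ M ∪ N ∧
      N'.card = N.card + 1 ∧ covF N' = insert (x 0) (insert (x k) (covF N)) := by
  have hAm : IsMatching G (M \ N) := matching_subset_s8 Finset.sdiff_subset hM
  have hBm : IsMatching G (N \ M) := matching_subset_s8 Finset.sdiff_subset hN
  have h0' : ¬ Covered (N \ M) (x 0) := fun hc => h0 (hc.mono Finset.sdiff_subset)
  have hnd := trail_nodup hAm hBm ht h0'
  have xne : ∀ (a b : ℕ), a ≤ k → b ≤ k → a ≠ b → x a ≠ x b := by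
    intro a b ha hb hab
    rcases Nat.lt_or_ge a b with h | h
    · exact fun he => (hnd b hb a h) he
    · exact fun he => (hnd a ha b (by omega)) he.symm
  have hk1 : 1 ≤ k := by
    rcases Nat.eq_zero_or_pos k with rfl | h
    · exact absurd Even.zero hkodd
    · omega
  have hmemE : ∀ i, i < k → Even i → s(x i, x (i + 1)) ∈ M \ N := by
    intro i hik hev; have := ht i hik; rwa [if_pos hev] at this
  have hmemO : ∀ i, i < k → ¬ Even i → s(x i, x (i + 1)) ∈ N \ M := by
    intro i hik hev; have := ht i hik; rwa [if_neg hev] at this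
  have L3 : ∀ e ∈ N, ∀ m, m ≤ k → x m ∈ e → e ∈ oddE x k := by
    intro e heN m hmk hv
    rcases Nat.eq_zero_or_pos m with rfl | hm1
    · exact absurd ⟨e, heN, hv⟩ h0
    rcases Nat.lt_or_ge m k with hmk' | hmk'
    swap
    · obtain rfl : m = k := by omega
      exact absurd ⟨e, heN, hv⟩ hkend
    by_cases hmev : Even m
    · obtain ⟨m', rfl⟩ : ∃ m', m = m' + 1 := ⟨m - 1, by omega⟩
      have hodd : ¬ Even m' := by rw [Nat.even_add_one] at hmev; tauto
      have he1 := hmemO m' (by omega) hodd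
      have hee : e = s(x m', x (m' + 1)) :=
        matching_unique_s8 hN heN (Finset.mem_sdiff.mp he1).1 hv (Sym2.mem_mk_right _ _)
      rw [hee]
      simp only [oddE, Finset.mem_image, Finset.mem_filter, Finset.mem_range]
      exact ⟨m', ⟨by omega, hodd⟩, rfl⟩
    · have he1 := hmemO m hmk' hmev
      have hee : e = s(x m, x (m + 1)) :=
        matching_unique_s8 hN heN (Finset.mem_sdiff.mp he1).1 hv (Sym2.mem_mk_left _ _)
      rw [hee]
      simp only [oddE, Finset.mem_image, Finset.mem_filter, Finset.mem_range]
      exact ⟨m, ⟨hmk', hmev⟩, rfl⟩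
  set N' := (N \ oddE x k) ∪ evenE x k with hN'def
  have hEsub : evenE x k ⊆ M := by
    intro e he
    simp only [evenE, Finset.mem_image, Finset.mem_filter, Finset.mem_range] at he
    obtain ⟨i, ⟨hik, hev⟩, rfl⟩ := he
    exact (Finset.mem_sdiff.mp (hmemE i hik hev)).1
  have hEvert : ∀ e ∈ evenE x k, ∀ v ∈ e, ∃ m, m ≤ k ∧ v = x m := by
    intro e he v hv
    simp only [evenE, Finset.mem_image, Finset.mem_filter, Finset.mem_range] at he
    obtain ⟨i, ⟨hik, hev⟩, rfl⟩ := he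
    rw [Sym2.mem_iff] at hv
    rcases hv with rfl | rfl
    exacts [⟨i, by omega, rfl⟩, ⟨i + 1, by omega, rfl⟩]
  have hN'm : IsMatching G N' := by
    constructor
    · intro e he
      rcases Finset.mem_union.mp he with h | h
      · exact hN.1 e (Finset.sdiff_subset h)
      · exact hM.1 e (hEsub h)
    · intro e he f hf hef v hve hvf
      rcases Finset.mem_union.mp he with h1 | h1 <;> rcases Finset.mem_union.mp hf with h2 | h2
      · exact hN.2 e (Finset.sdiff_subset h1) f (Finset.sdiff_subset h2) hef v hve hvf
      · obtain ⟨m, hm, rfl⟩ := hEvert f h2 v hvf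
        exact absurd (L3 e (Finset.mem_sdiff.mp h1).1 m hm hve) (Finset.mem_sdiff.mp h1).2
      · obtain ⟨m, hm, rfl⟩ := hEvert e h1 v hve
        exact absurd (L3 f (Finset.mem_sdiff.mp h2).1 m hm hvf) (Finset.mem_sdiff.mp h2).2
      · exact hM.2 e (hEsub h1) f (hEsub h2) hef v hve hvf
  have interiorN : ∀ m, 0 < m → m < k → Covered N (x m) := by
    intro m hm0 hmk
    by_cases hmev : Even m
    · obtain ⟨m', rfl⟩ : ∃ m', m = m' + 1 := ⟨m - 1, by omega⟩
      have hodd : ¬ Even m' := by rw [Nat.even_add_one] at hmev; tauto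
      exact ⟨_, (Finset.mem_sdiff.mp (hmemO m' (by omega) hodd)).1, Sym2.mem_mk_right _ _⟩
    · exact ⟨_, (Finset.mem_sdiff.mp (hmemO m hmk hmev)).1, Sym2.mem_mk_left _ _⟩
  have hcov : covF N' = insert (x 0) (insert (x k) (covF N)) := by
    ext v
    simp only [mem_covF, Finset.mem_insert]
    constructor
    · rintro ⟨e, he, hv⟩
      rcases Finset.mem_union.mp he with h | h
      · exact Or.inr (Or.inr ⟨e, Finset.sdiff_subset h, hv⟩)
      · obtain ⟨m, hm, rfl⟩ := hEvert e h v hv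
        rcases Nat.eq_zero_or_pos m with rfl | h1
        · exact Or.inl rfl
        rcases Nat.lt_or_ge m k with h2 | h2
        · exact Or.inr (Or.inr (interiorN m h1 h2))
        · obtain rfl : m = k := by omega
          exact Or.inr (Or.inl rfl)
    · rintro (rfl | rfl | ⟨e, heN, hv⟩)
      · refine ⟨s(x 0, x 1), Finset.mem_union_right _ ?_, Sym2.mem_mk_left _ _⟩
        simp only [evenE, Finset.mem_image, Finset.mem_filter, Finset.mem_range]
        exact ⟨0, ⟨by omega, Even.zero⟩, rfl⟩
      · obtain ⟨k', hk'⟩ : ∃ k', k = k' + 1 := ⟨k - 1, by omega⟩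
        refine ⟨s(x k', x (k' + 1)), Finset.mem_union_right _ ?_, ?_⟩
        · simp only [evenE, Finset.mem_image, Finset.mem_filter, Finset.mem_range]
          refine ⟨k', ⟨by omega, ?_⟩, rfl⟩
          rw [hk', Nat.even_add_one] at hkodd; tauto
        · rw [hk']; exact Sym2.mem_mk_right _ _
      · by_cases heO : e ∈ oddE x k
        · simp only [oddE, Finset.mem_image, Finset.mem_filter, Finset.mem_range] at heO
          obtain ⟨m, ⟨hmk, hmev⟩, rfl⟩ := heO
          rw [Sym2.mem_iff] at hv
          rcases hv with rfl | rfl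
          · have hm0' : m ≠ 0 := fun h => hmev (h ▸ Even.zero)
            obtain ⟨m', rfl⟩ : ∃ m', m = m' + 1 := ⟨m - 1, by omega⟩
            refine ⟨s(x m', x (m' + 1)), Finset.mem_union_right _ ?_, Sym2.mem_mk_right _ _⟩
            simp only [evenE, Finset.mem_image, Finset.mem_filter, Finset.mem_range]
            refine ⟨m', ⟨by omega, ?_⟩, rfl⟩
            rw [Nat.even_add_one] at hmev; tauto
          · have hlt : m + 1 < k := by
              rcases Nat.lt_or_ge (m + 1) k with h | h
              · exact h
              · exfalso
                have h' : m + 1 = k := by omega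
                apply hkodd
                rw [← h', Nat.even_add_one]; tauto
            refine ⟨s(x (m + 1), x (m + 2)), Finset.mem_union_right _ ?_, Sym2.mem_mk_left _ _⟩
            simp only [evenE, Finset.mem_image, Finset.mem_filter, Finset.mem_range]
            refine ⟨m + 1, ⟨hlt, ?_⟩, rfl⟩
            rw [Nat.even_add_one]; tauto
        · exact ⟨e, Finset.mem_union_left _ (Finset.mem_sdiff.mpr ⟨heN, heO⟩), hv⟩
  have hx0k : x 0 ≠ x k := xne 0 k (by omega) (le_refl k) (by omega)
  have hx0cov : x 0 ∉ covF N := by rw [mem_covF]; exact h0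
  have hxkcov : x k ∉ covF N := by rw [mem_covF]; exact hkend
  have hcard : N'.card = N.card + 1 := by
    have h1 := card_covF hN'm
    rw [hcov, Finset.card_insert_of_notMem, Finset.card_insert_of_notMem,
      card_covF hN] at h1
    · omega
    · exact hxkcov
    · simp only [Finset.mem_insert]; push_neg; exact ⟨hx0k, hx0cov⟩
  refine ⟨N', hN'm, ?_, hcard, hcov⟩
  exact Finset.union_subset (Finset.sdiff_subset.trans Finset.subset_union_right)
    (hEsub.trans Finset.subset_union_left)

lemma flipA (hM : IsMatching G M) (hN : IsMatching G N)
    (ht : STrail (M \ N) (N \ M) x k)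
    (h0 : ¬ Covered N (x 0)) (hkeven : Even k) (hk1 : 1 ≤ k) (hkend : ¬ Covered M (x k)) :
    ∃ M' : Finset (Sym2 V), IsMatching G M' ∧ M' ⊆ M ∪ N ∧
      M'.card = M.card ∧ covF M' = insert (x k) ((covF M).erase (x 0)) := by
  have hAm : IsMatching G (M \ N) := matching_subset_s8 Finset.sdiff_subset hM
  have hBm : IsMatching G (N \ M) := matching_subset_s8 Finset.sdiff_subset hN
  have h0' : ¬ Covered (N \ M) (x 0) := fun hc => h0 (hc.mono Finset.sdiff_subset)
  have hnd := trail_nodup hAm hBm ht h0'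
  have xne : ∀ (a b : ℕ), a ≤ k → b ≤ k → a ≠ b → x a ≠ x b := by
    intro a b ha hb hab
    rcases Nat.lt_or_ge a b with h | h
    · exact fun he => (hnd b hb a h) he
    · exact fun he => (hnd a ha b (by omega)) he.symm
  have hmemE : ∀ i, i < k → Even i → s(x i, x (i + 1)) ∈ M \ N := by
    intro i hik hev; have := ht i hik; rwa [if_pos hev] at this
  have hmemO : ∀ i, i < k → ¬ Even i → s(x i, x (i + 1)) ∈ N \ M := by
    intro i hik hev; have := ht i hik; rwa [if_neg hev] at this
  have L3 : ∀ e ∈ M, ∀ m, m ≤ k → x m ∈ e → e ∈ evenE x k := by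
    intro e heM m hmk hv
    rcases Nat.lt_or_ge m k with hmk' | hmk'
    swap
    · obtain rfl : m = k := by omega
      exact absurd ⟨e, heM, hv⟩ hkend
    by_cases hmev : Even m
    · have he1 := hmemE m hmk' hmev
      have hee : e = s(x m, x (m + 1)) :=
        matching_unique_s8 hM heM (Finset.mem_sdiff.mp he1).1 hv (Sym2.mem_mk_left _ _)
      rw [hee]
      simp only [evenE, Finset.mem_image, Finset.mem_filter, Finset.mem_range]
      exact ⟨m, ⟨hmk', hmev⟩, rfl⟩
    · have hm0' : m ≠ 0 := fun h => hmev (h ▸ Even.zero)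
      obtain ⟨m', rfl⟩ : ∃ m', m = m' + 1 := ⟨m - 1, by omega⟩
      have hev' : Even m' := by rw [Nat.even_add_one] at hmev; tauto
      have he1 := hmemE m' (by omega) hev'
      have hee : e = s(x m', x (m' + 1)) :=
        matching_unique_s8 hM heM (Finset.mem_sdiff.mp he1).1 hv (Sym2.mem_mk_right _ _)
      rw [hee]
      simp only [evenE, Finset.mem_image, Finset.mem_filter, Finset.mem_range]
      exact ⟨m', ⟨by omega, hev'⟩, rfl⟩
  set M' := (M \ evenE x k) ∪ oddE x k with hM'def
  have hOsub : oddE x k ⊆ N := by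
    intro e he
    simp only [oddE, Finset.mem_image, Finset.mem_filter, Finset.mem_range] at he
    obtain ⟨i, ⟨hik, hev⟩, rfl⟩ := he
    exact (Finset.mem_sdiff.mp (hmemO i hik hev)).1
  have hOvert : ∀ e ∈ oddE x k, ∀ v ∈ e, ∃ m, (1 ≤ m ∧ m ≤ k) ∧ v = x m := by
    intro e he v hv
    simp only [oddE, Finset.mem_image, Finset.mem_filter, Finset.mem_range] at he
    obtain ⟨i, ⟨hik, hev⟩, rfl⟩ := he
    have hi1 : 1 ≤ i := by
      rcases Nat.eq_zero_or_pos i with rfl | h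
      · exact absurd Even.zero hev
      · exact h
    rw [Sym2.mem_iff] at hv
    rcases hv with rfl | rfl
    exacts [⟨i, ⟨hi1, by omega⟩, rfl⟩, ⟨i + 1, ⟨by omega, by omega⟩, rfl⟩]
  have hM'm : IsMatching G M' := by
    constructor
    · intro e he
      rcases Finset.mem_union.mp he with h | h
      · exact hM.1 e (Finset.sdiff_subset h)
      · exact hN.1 e (hOsub h)
    · intro e he f hf hef v hve hvf
      rcases Finset.mem_union.mp he with h1 | h1 <;> rcases Finset.mem_union.mp hf with h2 | h2
      · exact hM.2 e (Finset.sdiff_subset h1) f (Finset.sdiff_subset h2) hef v hve hvf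
      · obtain ⟨m, hm, rfl⟩ := hOvert f h2 v hvf
        exact absurd (L3 e (Finset.mem_sdiff.mp h1).1 m hm.2 hve) (Finset.mem_sdiff.mp h1).2
      · obtain ⟨m, hm, rfl⟩ := hOvert e h1 v hve
        exact absurd (L3 f (Finset.mem_sdiff.mp h2).1 m hm.2 hvf) (Finset.mem_sdiff.mp h2).2
      · exact hN.2 e (hOsub h1) f (hOsub h2) hef v hve hvf
  have interiorM : ∀ m, m < k → Covered M (x m) := by
    intro m hmk
    by_cases hmev : Even m
    · exact ⟨_, (Finset.mem_sdiff.mp (hmemE m hmk hmev)).1, Sym2.mem_mk_left _ _⟩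
    · have hm0' : m ≠ 0 := fun h => hmev (h ▸ Even.zero)
      obtain ⟨m', rfl⟩ : ∃ m', m = m' + 1 := ⟨m - 1, by omega⟩
      have hev' : Even m' := by rw [Nat.even_add_one] at hmev; tauto
      exact ⟨_, (Finset.mem_sdiff.mp (hmemE m' (by omega) hev')).1, Sym2.mem_mk_right _ _⟩
  have hcov : covF M' = insert (x k) ((covF M).erase (x 0)) := by
    ext v
    simp only [mem_covF, Finset.mem_insert, Finset.mem_erase]
    constructor
    · rintro ⟨e, he, hv⟩
      rcases Finset.mem_union.mp he with h | h
      · have hvM : Covered M v := ⟨e, Finset.sdiff_subset h, hv⟩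
        have hvne : v ≠ x 0 := by
          rintro rfl
          exact absurd (L3 e (Finset.mem_sdiff.mp h).1 0 (by omega) hv) (Finset.mem_sdiff.mp h).2
        exact Or.inr ⟨hvne, hvM⟩
      · obtain ⟨m, ⟨hm1, hmk⟩, rfl⟩ := hOvert e h v hv
        rcases Nat.lt_or_ge m k with h2 | h2
        · exact Or.inr ⟨xne m 0 (by omega) (by omega) (by omega), interiorM m h2⟩
        · obtain rfl : m = k := by omega
          exact Or.inl rfl
    · rintro (rfl | ⟨hvne, hvM⟩)
      · obtain ⟨k', hk'⟩ : ∃ k', k = k' + 1 := ⟨k - 1, by omega⟩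
        have hk'odd : ¬ Even k' := by
          rw [hk', Nat.even_add_one] at hkeven; exact hkeven
        refine ⟨s(x k', x (k' + 1)), Finset.mem_union_right _ ?_,
          by rw [hk']; exact Sym2.mem_mk_right _ _⟩
        simp only [oddE, Finset.mem_image, Finset.mem_filter, Finset.mem_range]
        exact ⟨k', ⟨by omega, hk'odd⟩, rfl⟩
      · obtain ⟨f, hfM, hvf⟩ := hvM
        by_cases hfE : f ∈ evenE x k
        · simp only [evenE, Finset.mem_image, Finset.mem_filter, Finset.mem_range] at hfE
          obtain ⟨m, ⟨hmk, hmev⟩, rfl⟩ := hfE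
          rw [Sym2.mem_iff] at hvf
          rcases hvf with rfl | rfl
          · have hm0 : m ≠ 0 := by rintro rfl; exact hvne rfl
            obtain ⟨m', rfl⟩ : ∃ m', m = m' + 1 := ⟨m - 1, by omega⟩
            refine ⟨s(x m', x (m' + 1)), Finset.mem_union_right _ ?_, Sym2.mem_mk_right _ _⟩
            simp only [oddE, Finset.mem_image, Finset.mem_filter, Finset.mem_range]
            refine ⟨m', ⟨by omega, ?_⟩, rfl⟩
            rw [Nat.even_add_one] at hmev; tauto
          · have hlt : m + 1 < k := by
              rcases Nat.lt_or_ge (m + 1) k with h | h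
              · exact h
              · exfalso
                have h' : m + 1 = k := by omega
                rw [← h', Nat.even_add_one] at hkeven; tauto
            refine ⟨s(x (m + 1), x (m + 2)), Finset.mem_union_right _ ?_, Sym2.mem_mk_left _ _⟩
            simp only [oddE, Finset.mem_image, Finset.mem_filter, Finset.mem_range]
            refine ⟨m + 1, ⟨hlt, ?_⟩, rfl⟩
            rw [Nat.even_add_one]; tauto
        · exact ⟨f, Finset.mem_union_left _ (Finset.mem_sdiff.mpr ⟨hfM, hfE⟩), hvf⟩
  have hx0cov : x 0 ∈ covF M := by rw [mem_covF]; exact interiorM 0 (by omega)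
  have hxkcov : x k ∉ (covF M).erase (x 0) := by
    simp only [Finset.mem_erase, mem_covF]
    rintro ⟨-, hc⟩; exact hkend hc
  have hcard : M'.card = M.card := by
    have h1 := card_covF hM'm
    rw [hcov, Finset.card_insert_of_notMem hxkcov, Finset.card_erase_of_mem hx0cov,
      card_covF hM] at h1
    have h2 : 1 ≤ 2 * M.card := by
      have := Finset.card_pos.mpr ⟨x 0, hx0cov⟩
      rw [card_covF hM] at this; omega
    omega
  refine ⟨M', hM'm, ?_, hcard, hcov⟩
  exact Finset.union_subset (Finset.sdiff_subset.trans Finset.subset_union_left)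
    (hOsub.trans Finset.subset_union_right)

end Flips

end Stab
namespace Stab

section Del

variable {V : Type*} [Fintype V] [DecidableEq V] {G : SimpleGraph V}
variable {M N : Finset (Sym2 V)} {x : ℕ → V} {k : ℕ}

lemma not_covered_exposed {N : Finset (Sym2 V)} {v : V} (h : ¬ Covered N v) :
    Exposed N v := fun e he hv => h ⟨e, he, hv⟩

lemma Exposed.not_covered {N : Finset (Sym2 V)} {v : V} (h : Exposed N v) :
    ¬ Covered N v := fun ⟨e, he, hv⟩ => h e he hv

lemma erase_matching {f : Sym2 V} (hN : IsMatching G N) (hf : f ∈ N) {u : V} (huf : u ∈ f) :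
    IsMatching G (N.erase f) ∧ ∀ e ∈ N.erase f, ∀ v ∈ e, v ≠ u := by
  refine ⟨matching_subset_s8 (Finset.erase_subset f N) hN, ?_⟩
  intro e he v hv hvu
  have he' := Finset.mem_of_mem_erase he
  have : e = f := matching_unique_s8 hN he' hf hv (by rw [hvu]; exact huf)
  exact (Finset.ne_of_mem_erase he) this

lemma insert_matching (hN : IsMatching G N) {a b : V} (hadj : G.Adj a b)
    (ha : ¬ Covered N a) (hb : ¬ Covered N b) :
    IsMatching G (insert s(a, b) N) ∧ s(a, b) ∉ N := by
  have hnm : s(a, b) ∉ N := fun h => ha ⟨_, h, Sym2.mem_mk_left _ _⟩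
  refine ⟨⟨?_, ?_⟩, hnm⟩
  · intro e he
    rcases Finset.mem_insert.mp he with rfl | h
    · rwa [SimpleGraph.mem_edgeSet]
    · exact hN.1 e h
  · intro e he f hf hef v hve hvf
    rcases Finset.mem_insert.mp he with rfl | h1 <;> rcases Finset.mem_insert.mp hf with rfl | h2
    · exact hef rfl
    · rw [Sym2.mem_iff] at hve
      rcases hve with rfl | rfl
      · exact ha ⟨f, h2, hvf⟩
      · exact hb ⟨f, h2, hvf⟩
    · rw [Sym2.mem_iff] at hvf
      rcases hvf with rfl | rfl
      · exact ha ⟨e, h1, hve⟩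
      · exact hb ⟨e, h1, hve⟩
    · exact hN.2 e h1 f h2 hef v hve hvf

/-- delete a finset of vertices (keeping them as isolated vertices) -/
def delG (G : SimpleGraph V) (S : Finset V) : SimpleGraph V where
  Adj a b := G.Adj a b ∧ a ∉ S ∧ b ∉ S
  symm := ⟨by rintro a b ⟨h, ha, hb⟩; exact ⟨h.symm, hb, ha⟩⟩
  loopless := ⟨by rintro a ⟨h, _, _⟩; exact G.loopless.irrefl a h⟩

lemma delG_adj {S : Finset V} {a b : V} :
    (delG G S).Adj a b ↔ G.Adj a b ∧ a ∉ S ∧ b ∉ S := Iff.rfl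

lemma delG_le {S : Finset V} {a b : V} (h : (delG G S).Adj a b) : G.Adj a b := h.1

lemma delG_matching_iff {S : Finset V} {N : Finset (Sym2 V)} :
    IsMatching (delG G S) N ↔ IsMatching G N ∧ ∀ e ∈ N, ∀ v ∈ e, v ∉ S := by
  constructor
  · intro h
    refine ⟨⟨fun e he => ?_, h.2⟩, fun e he v hv => ?_⟩
    · obtain ⟨a, b, hab, rfl, hadj⟩ := edge_eq (h.1 e he)
      rw [SimpleGraph.mem_edgeSet]; exact hadj.1
    · obtain ⟨a, b, hab, rfl, hadj⟩ := edge_eq (h.1 e he)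
      rw [Sym2.mem_iff] at hv
      rcases hv with rfl | rfl
      · exact hadj.2.1
      · exact hadj.2.2
  · rintro ⟨h, hS⟩
    refine ⟨fun e he => ?_, h.2⟩
    obtain ⟨a, b, hab, rfl, hadj⟩ := edge_eq (h.1 e he)
    rw [SimpleGraph.mem_edgeSet]
    exact ⟨hadj, hS _ he a (Sym2.mem_mk_left _ _), hS _ he b (Sym2.mem_mk_right _ _)⟩

lemma delG_delG {S T : Finset V} : delG (delG G S) T = delG G (S ∪ T) := by
  ext a b
  simp only [delG_adj, Finset.mem_union]
  tauto

lemma stuck_upgradeB (hM : IsMatching G M) (hN : IsMatching G N)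
    (ht : STrail (M \ N) (N \ M) x k) (hk : ¬ Even k)
    (hs : ¬ Covered (N \ M) (x k)) : ¬ Covered N (x k) := by
  rintro ⟨f, hfN, hvf⟩
  obtain ⟨k', rfl⟩ : ∃ k', k = k' + 1 := ⟨k - 1, by
    have : k ≠ 0 := fun h => hk (h ▸ Even.zero); omega⟩
  have hev : Even k' := by rw [Nat.even_add_one] at hk; tauto
  have harr : s(x k', x (k' + 1)) ∈ M \ N := by
    have := ht k' (by omega); rwa [if_pos hev] at this
  have hfM : f ∈ M := by
    by_contra hfM
    exact hs ⟨f, Finset.mem_sdiff.mpr ⟨hfN, hfM⟩, hvf⟩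
  have hfe : f = s(x k', x (k' + 1)) :=
    matching_unique_s8 hM hfM (Finset.mem_sdiff.mp harr).1 hvf (Sym2.mem_mk_right _ _)
  rw [hfe] at hfN
  exact (Finset.mem_sdiff.mp harr).2 hfN

lemma stuck_upgradeA (hM : IsMatching G M) (hN : IsMatching G N)
    (ht : STrail (M \ N) (N \ M) x k) (hk : Even k) (hk1 : 1 ≤ k)
    (hs : ¬ Covered (M \ N) (x k)) : ¬ Covered M (x k) := by
  rintro ⟨f, hfM, hvf⟩
  obtain ⟨k', rfl⟩ : ∃ k', k = k' + 1 := ⟨k - 1, by omega⟩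
  have hev : ¬ Even k' := by rw [Nat.even_add_one] at hk; tauto
  have harr : s(x k', x (k' + 1)) ∈ N \ M := by
    have := ht k' (by omega); rwa [if_neg hev] at this
  have hfN : f ∈ N := by
    by_contra hfN
    exact hs ⟨f, Finset.mem_sdiff.mpr ⟨hfM, hfN⟩, hvf⟩
  have hfe : f = s(x k', x (k' + 1)) :=
    matching_unique_s8 hN hfN (Finset.mem_sdiff.mp harr).1 hvf (Sym2.mem_mk_right _ _)
  rw [hfe] at hfM
  exact (Finset.mem_sdiff.mp harr).2 hfM

end Del

end Stab
namespace Stab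

section Stability

variable {V : Type*} [Fintype V] [DecidableEq V] {G : SimpleGraph V}

lemma stability_s8 {u : V} (hu : u ∈ geY G) :
    geX (delG G {u}) = insert u (geX G) ∧ nu (delG G {u}) + 1 = nu G := by
  obtain ⟨huX, d, hdX, hdadj⟩ := hu
  obtain ⟨Md, hMdmax, hMdexp⟩ := hdX
  have hMd := hMdmax.1
  have hMdcard := IsMaxMatching.card_eq hMdmax
  have hdX' : Inessential G d := ⟨Md, hMdmax, hMdexp⟩
  have huMd : Covered Md u := essential_covered huX hMd hMdcard
  obtain ⟨fu, hfu, hufu⟩ := huMd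
  obtain ⟨hMe, hMeav⟩ := erase_matching hMd hfu hufu
  have hMe1 : IsMatching (delG G {u}) (Md.erase fu) := by
    rw [delG_matching_iff]
    refine ⟨hMe, fun e he v hv => ?_⟩
    rw [Finset.mem_singleton]
    exact hMeav e he v hv
  have hMdpos : 1 ≤ Md.card := Finset.card_pos.mpr ⟨fu, hfu⟩
  have hnupos : 1 ≤ nu G := by rw [← hMdcard]; exact hMdpos
  have hnu_le : nu (delG G {u}) + 1 ≤ nu G := by
    obtain ⟨N1, hN1, hN1card⟩ := exists_max_matching (delG G {u})
    obtain ⟨hN1G, hN1av⟩ := delG_matching_iff.mp hN1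
    have hexp : Exposed N1 u := fun e he hv => hN1av e he u hv (Finset.mem_singleton_self u)
    have hle : N1.card ≤ nu G := matching_card_le_nu hN1G
    rcases Nat.lt_or_ge N1.card (nu G) with h | h
    · omega
    · exact absurd ⟨N1, isMax_of_card_nu hN1G (by omega), hexp⟩ huX
  have hnu_ge : nu G ≤ nu (delG G {u}) + 1 := by
    have h1 := matching_card_le_nu hMe1
    have h2 : (Md.erase fu).card = Md.card - 1 := Finset.card_erase_of_mem hfu
    omega
  have hnu : nu (delG G {u}) + 1 = nu G := by omega
  refine ⟨?_, hnu⟩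
  ext w
  simp only [Set.mem_insert_iff]
  constructor
  swap
  · rintro (hwu | hwX)
    · obtain ⟨N1, hN1, hN1card⟩ := exists_max_matching (delG G {u})
      refine ⟨N1, isMax_of_card_nu hN1 hN1card, ?_⟩
      obtain ⟨hN1G, hN1av⟩ := delG_matching_iff.mp hN1
      exact fun e he hv => hN1av e he w hv (Finset.mem_singleton.mpr hwu)
    · obtain ⟨Mw, hMwmax, hMwexp⟩ := hwX
      have hMwcard := IsMaxMatching.card_eq hMwmax
      have huMw : Covered Mw u := essential_covered huX hMwmax.1 hMwcard
      obtain ⟨f, hf, huf⟩ := huMw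
      obtain ⟨hme, hmav⟩ := erase_matching hMwmax.1 hf huf
      have hm1 : IsMatching (delG G {u}) (Mw.erase f) := by
        rw [delG_matching_iff]
        exact ⟨hme, fun e he v hv => by rw [Finset.mem_singleton]; exact hmav e he v hv⟩
      refine ⟨Mw.erase f, isMax_of_card_nu hm1 ?_,
        fun e he hv => hMwexp e (Finset.mem_of_mem_erase he) hv⟩
      rw [Finset.card_erase_of_mem hf, hMwcard]
      omega
  · intro hw
    by_cases hwu : w = u
    · exact Or.inl hwu
    right
    by_contra hwX
    obtain ⟨N, hNmax, hNexp⟩ := hw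
    have hNdel := hNmax.1
    obtain ⟨hNG, hNav⟩ := delG_matching_iff.mp hNdel
    have hNcard : N.card = nu G - 1 := by
      have := IsMaxMatching.card_eq hNmax; omega
    have hNuexp : Exposed N u := fun e he hv => hNav e he u hv (Finset.mem_singleton_self u)
    have huN : ¬ Covered N u := hNuexp.not_covered
    have hwNexp : ¬ Covered N w := hNexp.not_covered
    have hwMd : Covered Md w := essential_covered hwX hMd hMdcard
    have hdu : d ≠ u := fun h => huX (h ▸ hdX')
    have hwd : w ≠ d := fun h => hwX (h ▸ hdX')
    by_cases hdN : Covered N d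
    swap
    · obtain ⟨hins, hnm⟩ := insert_matching hNG hdadj hdN (hNuexp.not_covered)
      have hcard : (insert s(d, u) N).card = nu G := by
        rw [Finset.card_insert_of_notMem hnm]; omega
      refine hwX ⟨insert s(d, u) N, isMax_of_card_nu hins hcard, ?_⟩
      intro e he hv
      rcases Finset.mem_insert.mp he with rfl | h
      · rw [Sym2.mem_iff] at hv
        rcases hv with rfl | rfl
        · exact hwd rfl
        · exact hwu rfl
      · exact hNexp e h hv
    have hAm : IsMatching G (Md \ N) := matching_subset_s8 Finset.sdiff_subset hMd
    have hBm : IsMatching G (N \ Md) := matching_subset_s8 Finset.sdiff_subset hNG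
    have hwNexp' : ¬ Covered (N \ Md) w := fun hc => hwNexp (hc.mono Finset.sdiff_subset)
    have hdMd : ¬ Covered Md d := hMdexp.not_covered
    have hdMd' : ¬ Covered (Md \ N) d := fun hc => hdMd (hc.mono Finset.sdiff_subset)
    obtain ⟨xw, kw, hxw0, htw, hsw⟩ := exists_stuck_trail hAm hBm w hwNexp'
    have hwA : Covered (Md \ N) w := by
      obtain ⟨f, hf, hwf⟩ := hwMd
      exact ⟨f, Finset.mem_sdiff.mpr ⟨hf, fun hfN => hwNexp ⟨f, hfN, hwf⟩⟩, hwf⟩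
    have hkw1 : 1 ≤ kw := by
      rcases Nat.eq_zero_or_pos kw with h0 | h
      swap
      · exact h
      exfalso
      unfold Stuck at hsw
      rw [h0, if_pos Even.zero, hxw0] at hsw
      exact hsw hwA
    have hnodupw := trail_nodup hAm hBm htw (by rw [hxw0]; exact hwNexp')
    have h0full : ¬ Covered N (xw 0) := by rw [hxw0]; exact hwNexp
    by_cases hkwev : Even kw
    · -- case β : flip Md, get max matching exposing w
      have hsw' : ¬ Covered (Md \ N) (xw kw) := by
        unfold Stuck at hsw; rwa [if_pos hkwev] at hsw
      have hkend : ¬ Covered Md (xw kw) := stuck_upgradeA hMd hNG htw hkwev hkw1 hsw'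
      obtain ⟨M', hM'm, hM'sub, hM'card, hM'cov⟩ := flipA hMd hNG htw h0full hkwev hkw1 hkend
      have hx0k : xw 0 ≠ xw kw := fun h => (hnodupw kw (le_refl kw) 0 (by omega)) h
      have hwM' : xw 0 ∉ covF M' := by
        rw [hM'cov]
        simp only [Finset.mem_insert, Finset.mem_erase]
        push_neg
        exact ⟨hx0k, fun h => absurd rfl h⟩
      refine hwX ⟨M', isMax_of_card_nu hM'm (by rw [hM'card]; exact hMdcard), ?_⟩
      rw [← hxw0]
      exact not_covered_exposed (fun hc => hwM' (mem_covF.mpr hc))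
    · -- kw odd : flip N, get N' of full size
      have hsw' : ¬ Covered (N \ Md) (xw kw) := by
        unfold Stuck at hsw; rwa [if_neg hkwev] at hsw
      have hkend : ¬ Covered N (xw kw) := stuck_upgradeB hMd hNG htw hkwev hsw'
      obtain ⟨N', hN'm, hN'sub, hN'card, hN'cov⟩ := flipB hMd hNG htw h0full hkwev hkend
      have hN'max : N'.card = nu G := by omega
      by_cases hxkwu : xw kw = u
      swap
      · have huN' : u ∉ covF N' := by
          rw [hN'cov]
          simp only [Finset.mem_insert, mem_covF]
          push_neg
          exact ⟨fun h => hwu ((h.trans hxw0).symm), fun h => hxkwu h.symm, huN⟩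
        exact huX ⟨N', isMax_of_card_nu hN'm hN'max,
          not_covered_exposed (fun hc => huN' (mem_covF.mpr hc))⟩
      · -- T_d stage
        obtain ⟨xd, kd, hxd0, htd, hsd⟩ := exists_stuck_trail hBm hAm d hdMd'
        have hdN' : Covered (N \ Md) d := by
          obtain ⟨f, hf, hdf⟩ := hdN
          exact ⟨f, Finset.mem_sdiff.mpr ⟨hf, fun hfMd => hdMd ⟨f, hfMd, hdf⟩⟩, hdf⟩
        have hkd1 : 1 ≤ kd := by
          rcases Nat.eq_zero_or_pos kd with h0 | h
          swap
          · exact h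
          exfalso
          unfold Stuck at hsd
          rw [h0, if_pos Even.zero, hxd0] at hsd
          exact hsd hdN'
        have hnodupd := trail_nodup hBm hAm htd (by rw [hxd0]; exact hdMd')
        have h0full2 : ¬ Covered Md (xd 0) := by rw [hxd0]; exact hdMd
        by_cases hkdev : Even kd
        · -- case δ : flip N along T_d
          have hsd' : ¬ Covered (N \ Md) (xd kd) := by
            unfold Stuck at hsd; rwa [if_pos hkdev] at hsd
          have hkend2 : ¬ Covered N (xd kd) := stuck_upgradeA hNG hMd htd hkdev hkd1 hsd'
          obtain ⟨N2, hN2m, hN2sub, hN2card, hN2cov⟩ :=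
            flipA hNG hMd htd h0full2 hkdev hkd1 hkend2
          by_cases hxkdu : xd kd = u
          · -- reversal: both reversed trails start at u, parity contradiction
            have htwr : STrail (Md \ N) (N \ Md) (fun i => xw (kw - i)) kw :=
              trail_reverse_odd hkwev htw
            have htdr : STrail (Md \ N) (N \ Md) (fun i => xd (kd - i)) kd :=
              trail_reverse_even hkdev htd
            have hswr : Stuck (Md \ N) (N \ Md) (fun i => xw (kw - i)) kw := by
              unfold Stuck
              rw [if_neg hkwev]
              show ¬ Covered (N \ Md) (xw (kw - kw))
              rw [Nat.sub_self, hxw0]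
              exact hwNexp'
            have hsdr : Stuck (Md \ N) (N \ Md) (fun i => xd (kd - i)) kd := by
              unfold Stuck
              rw [if_pos hkdev]
              show ¬ Covered (Md \ N) (xd (kd - kd))
              rw [Nat.sub_self, hxd0]
              exact hdMd'
            have h00 : (fun i => xw (kw - i)) 0 = (fun i => xd (kd - i)) 0 := by
              show xw (kw - 0) = xd (kd - 0)
              rw [Nat.sub_zero, Nat.sub_zero, hxkwu, hxkdu]
            obtain ⟨hkk, -⟩ := trail_unique hAm hBm htwr hswr htdr hsdr h00
            rw [hkk] at hkwev
            exact hkwev hkdev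
          by_cases hxkdw : xd kd = w
          · -- reversal of T_d vs T_w : both from w, parity contradiction
            have htdr : STrail (Md \ N) (N \ Md) (fun i => xd (kd - i)) kd :=
              trail_reverse_even hkdev htd
            have hsdr : Stuck (Md \ N) (N \ Md) (fun i => xd (kd - i)) kd := by
              unfold Stuck
              rw [if_pos hkdev]
              show ¬ Covered (Md \ N) (xd (kd - kd))
              rw [Nat.sub_self, hxd0]
              exact hdMd'
            have h00 : xw 0 = (fun i => xd (kd - i)) 0 := by
              show xw 0 = xd (kd - 0)
              rw [Nat.sub_zero, hxw0, hxkdw]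
            obtain ⟨hkk, -⟩ := trail_unique hAm hBm htw hsw htdr hsdr h00
            rw [hkk] at hkwev
            exact hkwev hkdev
          · -- main : insert edge du into N2, expose w : contradiction
            have hd0k : xd 0 ≠ xd kd := fun h => (hnodupd kd (le_refl kd) 0 (by omega)) h
            have hdN2 : ¬ Covered N2 d := by
              intro hc
              have : d ∈ covF N2 := mem_covF.mpr hc
              rw [hN2cov] at this
              simp only [Finset.mem_insert, Finset.mem_erase] at this
              rcases this with h | ⟨h1, -⟩
              · exact hd0k (by rw [hxd0]; exact h)
              · exact h1 hxd0.symm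
            have huN2 : ¬ Covered N2 u := by
              intro hc
              have : u ∈ covF N2 := mem_covF.mpr hc
              rw [hN2cov] at this
              simp only [Finset.mem_insert, Finset.mem_erase, mem_covF] at this
              rcases this with h | ⟨-, h2⟩
              · exact hxkdu h.symm
              · exact huN h2
            obtain ⟨hins, hnm⟩ := insert_matching hN2m hdadj hdN2 huN2
            have hcard3 : (insert s(d, u) N2).card = nu G := by
              rw [Finset.card_insert_of_notMem hnm, hN2card]
              omega
            refine hwX ⟨insert s(d, u) N2, isMax_of_card_nu hins hcard3, ?_⟩
            intro e he hv
            rcases Finset.mem_insert.mp he with rfl | h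
            · rw [Sym2.mem_iff] at hv
              rcases hv with rfl | rfl
              · exact hwd rfl
              · exact hwu rfl
            · -- e ∈ N2 : w not covered by N2
              have : w ∈ covF N2 := mem_covF.mpr ⟨e, h, hv⟩
              rw [hN2cov] at this
              simp only [Finset.mem_insert, Finset.mem_erase, mem_covF] at this
              rcases this with h' | ⟨-, h2⟩
              · exact hxkdw h'.symm
              · exact hwNexp h2
        · -- kd odd : flip Md along T_d, matching of size nu G + 1 : contradiction
          have hsd' : ¬ Covered (Md \ N) (xd kd) := by
            unfold Stuck at hsd; rwa [if_neg hkdev] at hsd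
          have hkend2 : ¬ Covered Md (xd kd) := stuck_upgradeB hNG hMd htd hkdev hsd'
          obtain ⟨Md2, hMd2m, -, hMd2card, -⟩ := flipB hNG hMd htd h0full2 hkdev hkend2
          have := matching_card_le_nu hMd2m
          omega

end Stability

end Stab
namespace Stab

section Iter

variable {V : Type*} [Fintype V] [DecidableEq V] {G : SimpleGraph V}

lemma geY_del {u : V} (hu : u ∈ geY G) :
    geY (delG G {u}) = geY G \ {u} := by
  have hstab := (stability_s8 hu).1
  ext v
  simp only [Set.mem_diff, Set.mem_singleton_iff]
  constructor
  · rintro ⟨hvX, x, hxX, hadj⟩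
    rw [hstab] at hvX hxX
    have hvu : v ≠ u := fun h => hadj.2.2 (by rw [h]; exact Finset.mem_singleton_self u)
    have hxu : x ≠ u := fun h => hadj.2.1 (by rw [h]; exact Finset.mem_singleton_self u)
    have hxX' : x ∈ geX G := by
      rcases Set.mem_insert_iff.mp hxX with h | h
      · exact absurd h hxu
      · exact h
    refine ⟨⟨fun h => hvX (Set.mem_insert_iff.mpr (Or.inr h)), x, hxX', hadj.1⟩, hvu⟩
  · rintro ⟨⟨hvX, x, hxX, hadj⟩, hvu⟩
    have hxu : x ≠ u := fun h => hu.1 (h ▸ hxX)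
    refine ⟨?_, x, ?_, ?_⟩
    · rw [hstab]
      rintro (h | h)
      · exact hvu h
      · exact hvX h
    · rw [hstab]; exact Set.mem_insert_iff.mpr (Or.inr hxX)
    · exact ⟨hadj, by rwa [Finset.mem_singleton], by rwa [Finset.mem_singleton]⟩

lemma delG_empty : delG G (∅ : Finset V) = G := by
  ext a b
  simp [delG_adj]

lemma del_iter (S : Finset V) (hS : ↑S ⊆ geY G) :
    geX (delG G S) = geX G ∪ ↑S ∧ geY (delG G S) = geY G \ ↑S ∧
      nu (delG G S) + S.card = nu G := by
  induction S using Finset.induction_on with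
  | empty => simp [delG_empty]
  | @insert a S ha IH =>
    have hS' : ↑S ⊆ geY G := by
      intro x hx; exact hS (by exact_mod_cast Finset.mem_insert_of_mem hx)
    obtain ⟨IH1, IH2, IH3⟩ := IH hS'
    have haY : a ∈ geY (delG G S) := by
      rw [IH2]
      refine ⟨hS (by exact_mod_cast Finset.mem_insert_self a S), ?_⟩
      exact_mod_cast ha
    have hstab := stability_s8 haY
    have hgy := geY_del haY
    have hdel : delG (delG G S) {a} = delG G (insert a S) := by
      rw [delG_delG]
      congr 1
      rw [Finset.union_comm]
      exact (Finset.insert_eq a S).symm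
    rw [hdel] at hstab hgy
    refine ⟨?_, ?_, ?_⟩
    · rw [hstab.1, IH1, Finset.coe_insert, Set.union_insert]
    · rw [hgy, IH2, Finset.coe_insert, Set.diff_diff]
      congr 1
      rw [Set.union_comm, Set.insert_eq]
    · rw [Finset.card_insert_of_notMem ha]
      omega

end Iter

end Stab
namespace Stab

section Internal

variable {V : Type*} [Fintype V] [DecidableEq V] {G : SimpleGraph V} {K : Set V}

/-- a matching all of whose edges lie inside `K` -/
def InternalM (G : SimpleGraph V) (K : Set V) (P : Finset (Sym2 V)) : Prop :=
  IsMatching G P ∧ ∀ e ∈ P, ∀ v ∈ e, v ∈ K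

lemma KY_disj (hK : IsCompOf G (geX G) K) {a : V} (ha : a ∈ K) : a ∉ geY G :=
  fun h => h.1 (hK.1 ha)

lemma K_closed (hK : IsCompOf G (geX G) K) {a b : V} (ha : a ∈ K)
    (hadj : G.Adj a b) (hbY : b ∉ geY G) : b ∈ K := by
  by_cases hbX : b ∈ geX G
  · exact hK.2.2 a ha b hbX hadj
  · exact absurd ⟨hbX, a, hK.1 ha, hadj⟩ hbY

lemma exists_max_internal (hK : IsCompOf G (geX G) K) {v : V} (hv : v ∈ K) :
    ∃ P, InternalM G K P ∧ Exposed P v ∧ ∀ T, InternalM G K T → T.card ≤ P.card := by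
  classical
  set Yfin := (Set.toFinite (geY G)).toFinset with hYfin
  have hYmem : ∀ x, x ∈ Yfin ↔ x ∈ geY G := fun x => Set.Finite.mem_toFinset _
  set GD := delG G Yfin with hGD
  obtain ⟨hXD, hYD, hnuD⟩ := del_iter (G := G) Yfin (by
    intro x hx
    rw [Finset.mem_coe, hYmem] at hx
    exact hx)
  have hvXD : v ∈ geX GD := by
    rw [hXD]; exact Set.mem_union_left _ (hK.1 hv)
  obtain ⟨N, hNmax, hNexp⟩ := hvXD
  have hNG : IsMatching G N := (delG_matching_iff.mp hNmax.1).1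
  have hNav : ∀ e ∈ N, ∀ x ∈ e, x ∉ Yfin := (delG_matching_iff.mp hNmax.1).2
  -- any GD-edge touching K lies in K
  have hKedge : ∀ e ∈ N, ∀ x ∈ e, x ∈ K → ∀ y ∈ e, y ∈ K := by
    intro e he x hx hxK y hy
    obtain ⟨c, b, hcb, rfl, hadjD⟩ := edge_eq (hNmax.1.1 e he)
    have hadjG : G.Adj c b := hadjD.1
    rw [Sym2.mem_iff] at hx hy
    have hcbK : c ∈ K → b ∈ K := fun hc =>
      K_closed hK hc hadjG (fun hY => (hNav _ he b (Sym2.mem_mk_right _ _)) ((hYmem b).mpr hY))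
    have hbcK : b ∈ K → c ∈ K := fun hc =>
      K_closed hK hc hadjG.symm (fun hY => (hNav _ he c (Sym2.mem_mk_left _ _)) ((hYmem c).mpr hY))
    rcases hx with rfl | rfl <;> rcases hy with rfl | rfl
    · exact hxK
    · exact hcbK hxK
    · exact hbcK hxK
    · exact hxK
  set P := N.filter (fun e => ∀ x ∈ e, x ∈ K) with hP
  have hPsub : P ⊆ N := Finset.filter_subset _ _
  have hPint : InternalM G K P :=
    ⟨matching_subset_s8 hPsub hNG, fun e he => (Finset.mem_filter.mp he).2⟩
  refine ⟨P, hPint, fun e he hv' => hNexp e (hPsub he) hv', ?_⟩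
  intro T hT
  by_contra hTP
  push_neg at hTP
  -- N' := (N \ P) ∪ T is a bigger matching of GD
  have hNPavoid : ∀ e ∈ N \ P, ∀ x ∈ e, x ∉ K := by
    intro e he x hx hxK
    obtain ⟨heN, heP⟩ := Finset.mem_sdiff.mp he
    exact heP (Finset.mem_filter.mpr ⟨heN, hKedge e heN x hx hxK⟩)
  have hTD : ∀ e ∈ T, e ∈ GD.edgeSet := by
    intro e he
    obtain ⟨c, b, hcb, rfl, hadj⟩ := edge_eq (hT.1.1 e he)
    rw [SimpleGraph.mem_edgeSet, delG_adj]
    refine ⟨hadj, ?_, ?_⟩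
    · intro hY
      exact KY_disj hK (hT.2 _ he c (Sym2.mem_mk_left _ _)) ((hYmem c).mp hY)
    · intro hY
      exact KY_disj hK (hT.2 _ he b (Sym2.mem_mk_right _ _)) ((hYmem b).mp hY)
  have hN'm : IsMatching GD ((N \ P) ∪ T) := by
    constructor
    · intro e he
      rcases Finset.mem_union.mp he with h | h
      · exact hNmax.1.1 e (Finset.sdiff_subset h)
      · exact hTD e h
    · intro e he f hf hef x hxe hxf
      rcases Finset.mem_union.mp he with h1 | h1 <;> rcases Finset.mem_union.mp hf with h2 | h2
      · exact hNG.2 e (Finset.sdiff_subset h1) f (Finset.sdiff_subset h2) hef x hxe hxf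
      · exact hNPavoid e h1 x hxe (hT.2 f h2 x hxf)
      · exact hNPavoid f h2 x hxf (hT.2 e h1 x hxe)
      · exact hT.1.2 e h1 f h2 hef x hxe hxf
  have hdisj : Disjoint (N \ P) T := by
    rw [Finset.disjoint_left]
    intro e he heT
    obtain ⟨c, b, hcb, rfl, -⟩ := edge_eq (hT.1.1 e heT)
    exact hNPavoid _ he c (Sym2.mem_mk_left _ _) (hT.2 _ heT c (Sym2.mem_mk_left _ _))
  have hcard : ((N \ P) ∪ T).card = N.card - P.card + T.card := by
    rw [Finset.card_union_of_disjoint hdisj, Finset.card_sdiff_of_subset hPsub]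
  have hle := matching_card_le_nu hN'm
  have hNcard := IsMaxMatching.card_eq hNmax
  have hPle : P.card ≤ N.card := Finset.card_le_card hPsub
  omega

end Internal

end Stab
namespace Stab

section Gallai

variable {V : Type*} [Fintype V] [DecidableEq V] {G : SimpleGraph V} {K : Set V}

lemma gallai_s8 (hK : IsCompOf G (geX G) K) :
    ∀ (P : Finset (Sym2 V)) (u w : V), InternalM G K P →
      (∀ T, InternalM G K T → T.card ≤ P.card) →
      u ∈ K → w ∈ K → u ≠ w → Exposed P u → Exposed P w → False := by
  classical
  have hconn := hK.2.1
  set Bad : Set ℕ := {n | ∃ (Q : Finset (Sym2 V)) (a b : V), ∃ (ha : a ∈ K) (hb : b ∈ K),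
    InternalM G K Q ∧ (∀ T, InternalM G K T → T.card ≤ Q.card) ∧ a ≠ b ∧
    Exposed Q a ∧ Exposed Q b ∧ (G.induce K).dist ⟨a, ha⟩ ⟨b, hb⟩ = n} with hBad
  intro P u w hP hPmax hu hw huw heu hew
  have hne : (G.induce K).dist ⟨u, hu⟩ ⟨w, hw⟩ ∈ Bad :=
    ⟨P, u, w, hu, hw, hP, hPmax, huw, heu, hew, rfl⟩
  obtain ⟨Q, a, b, ha, hb, hQ, hQmax, hab, hea, heb, hdist⟩ := Nat.sInf_mem ⟨_, hne⟩
  set d0 := sInf Bad with hd0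
  have hmin : ∀ n ∈ Bad, d0 ≤ n := fun n hn => Nat.sInf_le hn
  have hnadj : ¬ G.Adj a b := by
    intro hadj
    obtain ⟨hins, hnm⟩ := insert_matching hQ.1 hadj hea.not_covered heb.not_covered
    have hint : InternalM G K (insert s(a, b) Q) := by
      refine ⟨hins, fun e he x hx => ?_⟩
      rcases Finset.mem_insert.mp he with rfl | h
      · rw [Sym2.mem_iff] at hx
        rcases hx with rfl | rfl
        exacts [ha, hb]
      · exact hQ.2 e h x hx
    have := hQmax _ hint
    rw [Finset.card_insert_of_notMem hnm] at this
    omega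
  have habs : (⟨a, ha⟩ : ↥K) ≠ ⟨b, hb⟩ := fun h => hab (congrArg Subtype.val h)
  have hreach : (G.induce K).Reachable ⟨a, ha⟩ ⟨b, hb⟩ := hconn ⟨a, ha⟩ ⟨b, hb⟩
  have hd0pos : 0 < d0 := by
    rw [← hdist]
    exact hreach.pos_dist_of_ne habs
  have hd0ne1 : d0 ≠ 1 := by
    intro h1
    rw [← hdist] at h1
    have hadj2 := SimpleGraph.dist_eq_one_iff_adj.mp h1
    exact hnadj hadj2
  have hd02 : 2 ≤ d0 := by omega
  obtain ⟨p, hp⟩ := SimpleGraph.exists_walk_of_dist_ne_zero (by rw [hdist]; omega :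
    (G.induce K).dist ⟨a, ha⟩ ⟨b, hb⟩ ≠ 0)
  rw [hdist] at hp
  cases p with
  | nil => rw [SimpleGraph.Walk.length_nil] at hp; omega
  | @cons _ t' _ hadj q =>
    rw [SimpleGraph.Walk.length_cons] at hp
    have ht : (t' : V) ∈ K := t'.2
    set t : V := ↑t' with htdef
    have ht' : t' = ⟨t, ht⟩ := Subtype.ext rfl
    have hat : a ≠ t := by
      intro h
      have h2 : (⟨a, ha⟩ : ↥K) = t' := Subtype.ext h
      rw [← h2] at hadj
      exact (G.induce K).loopless.irrefl _ hadj
    have hdist_at : (G.induce K).dist ⟨a, ha⟩ ⟨t, ht⟩ ≤ 1 := by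
      rw [← ht']
      have := SimpleGraph.dist_le (SimpleGraph.Walk.cons hadj SimpleGraph.Walk.nil)
      simpa using this
    have hdist_tb : (G.induce K).dist ⟨t, ht⟩ ⟨b, hb⟩ ≤ d0 - 1 := by
      rw [← ht']
      have := SimpleGraph.dist_le q
      omega
    have htb : t ≠ b := by
      intro h
      have ht'b : t' = ⟨b, hb⟩ := Subtype.ext h
      rw [ht'b] at hadj
      have : (G.induce K).dist ⟨a, ha⟩ ⟨b, hb⟩ ≤ 1 := by
        have := SimpleGraph.dist_le (SimpleGraph.Walk.cons hadj SimpleGraph.Walk.nil)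
        simpa using this
      omega
    obtain ⟨M', hM', hM'exp, hM'max⟩ := exists_max_internal hK ht
    have haM' : Covered M' a := by
      by_contra hc
      have hmem : (G.induce K).dist ⟨a, ha⟩ ⟨t, ht⟩ ∈ Bad :=
        ⟨M', a, t, ha, ht, hM', hM'max, hat, not_covered_exposed hc, hM'exp, rfl⟩
      have := hmin _ hmem
      omega
    have hbM' : Covered M' b := by
      by_contra hc
      have hmem : (G.induce K).dist ⟨t, ht⟩ ⟨b, hb⟩ ∈ Bad :=
        ⟨M', t, b, ht, hb, hM', hM'max, fun h => htb h, hM'exp, not_covered_exposed hc, rfl⟩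
      have := hmin _ hmem
      omega
    have htQ : Covered Q t := by
      by_contra hc
      have hmem : (G.induce K).dist ⟨a, ha⟩ ⟨t, ht⟩ ∈ Bad :=
        ⟨Q, a, t, ha, ht, hQ, hQmax, hat, hea, not_covered_exposed hc, rfl⟩
      have := hmin _ hmem
      omega
    have hAm : IsMatching G (M' \ Q) := matching_subset_s8 Finset.sdiff_subset hM'.1
    have hBm : IsMatching G (Q \ M') := matching_subset_s8 Finset.sdiff_subset hQ.1
    have htM' : ¬ Covered M' t := hM'exp.not_covered
    have main : ∀ (c : V), ∀ (hc : c ∈ K), c ≠ t → Exposed Q c → Covered M' c →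
        (G.induce K).dist ⟨c, hc⟩ ⟨t, ht⟩ < d0 →
        ∃ (y : ℕ → V) (k : ℕ), Even k ∧ STrail (Q \ M') (M' \ Q) y k ∧
          Stuck (Q \ M') (M' \ Q) y k ∧ y 0 = t ∧ y k = c := by
      intro c hc hct heQc hcM' hdlt
      have hcQ' : ¬ Covered (Q \ M') c := fun h => heQc.not_covered (h.mono Finset.sdiff_subset)
      obtain ⟨x, k, hx0, htr, hs⟩ := exists_stuck_trail hAm hBm c hcQ'
      have hcA : Covered (M' \ Q) c := by
        obtain ⟨f, hf, hcf⟩ := hcM'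
        exact ⟨f, Finset.mem_sdiff.mpr ⟨hf, fun hfQ => heQc.not_covered ⟨f, hfQ, hcf⟩⟩, hcf⟩
      have hk1 : 1 ≤ k := by
        rcases Nat.eq_zero_or_pos k with h0 | h
        swap
        · exact h
        exfalso
        unfold Stuck at hs
        rw [h0, if_pos Even.zero, hx0] at hs
        exact hs hcA
      have h0full : ¬ Covered Q (x 0) := by rw [hx0]; exact heQc.not_covered
      have hnodup := trail_nodup hAm hBm htr (by rw [hx0]; exact hcQ')
      by_cases hkev : Even k
      swap
      · exfalso
        have hs' : ¬ Covered (Q \ M') (x k) := by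
          unfold Stuck at hs; rwa [if_neg hkev] at hs
        have hkend : ¬ Covered Q (x k) := stuck_upgradeB hM'.1 hQ.1 htr hkev hs'
        obtain ⟨Q2, hQ2m, hQ2sub, hQ2card, -⟩ := flipB hM'.1 hQ.1 htr h0full hkev hkend
        have hQ2int : InternalM G K Q2 := by
          refine ⟨hQ2m, fun e he => ?_⟩
          rcases Finset.mem_union.mp (hQ2sub he) with h | h
          · exact hM'.2 e h
          · exact hQ.2 e h
        have := hQmax _ hQ2int
        omega
      · have hs' : ¬ Covered (M' \ Q) (x k) := by
          unfold Stuck at hs; rwa [if_pos hkev] at hs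
        have hkend : ¬ Covered M' (x k) := stuck_upgradeA hM'.1 hQ.1 htr hkev hk1 hs'
        by_cases hxkt : x k = t
        swap
        · exfalso
          obtain ⟨M2, hM2m, hM2sub, hM2card, hM2cov⟩ := flipA hM'.1 hQ.1 htr h0full hkev hk1 hkend
          have hM2int : InternalM G K M2 := by
            refine ⟨hM2m, fun e he => ?_⟩
            rcases Finset.mem_union.mp (hM2sub he) with h | h
            · exact hM'.2 e h
            · exact hQ.2 e h
          have hM2max : ∀ T, InternalM G K T → T.card ≤ M2.card := by
            intro T hT; rw [hM2card]; exact hM'max T hT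
          have hcexp : ¬ Covered M2 c := by
            intro hcov
            have hmem2 : c ∈ covF M2 := mem_covF.mpr hcov
            rw [hM2cov] at hmem2
            simp only [Finset.mem_insert, Finset.mem_erase] at hmem2
            rcases hmem2 with h | ⟨h1, -⟩
            · exact (hnodup k (le_refl k) 0 (by omega)) (by rw [hx0, h])
            · exact h1 hx0.symm
          have htexp : ¬ Covered M2 t := by
            intro hcov
            have hmem2 : t ∈ covF M2 := mem_covF.mpr hcov
            rw [hM2cov] at hmem2
            simp only [Finset.mem_insert, Finset.mem_erase, mem_covF] at hmem2
            rcases hmem2 with h | ⟨-, h2⟩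
            · exact hxkt h.symm
            · exact htM' h2
          have hmem : (G.induce K).dist ⟨c, hc⟩ ⟨t, ht⟩ ∈ Bad :=
            ⟨M2, c, t, hc, ht, hM2int, hM2max, hct,
              not_covered_exposed hcexp, not_covered_exposed htexp, rfl⟩
          have := hmin _ hmem
          omega
        · refine ⟨fun i => x (k - i), k, hkev, trail_reverse_even hkev htr, ?_, ?_, ?_⟩
          · unfold Stuck
            rw [if_pos hkev]
            show ¬ Covered (Q \ M') (x (k - k))
            rw [Nat.sub_self, hx0]
            exact hcQ'
          · show x (k - 0) = t
            rw [Nat.sub_zero, hxkt]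
          · show x (k - k) = c
            rw [Nat.sub_self, hx0]
    -- apply main to a and b, then uniqueness
    obtain ⟨ya, ka, hkaev, htya, hsya, hya0, hyak⟩ :=
      main a ha hat hea haM' (by omega)
    obtain ⟨yb, kb, hkbev, htyb, hsyb, hyb0, hybk⟩ :=
      main b hb (fun h => htb h.symm) heb hbM' (by
        rw [SimpleGraph.dist_comm]
        omega)
    obtain ⟨hkk, hpt⟩ := trail_unique hBm hAm htya hsya htyb hsyb (by rw [hya0, hyb0])
    apply hab
    rw [← hyak, ← hybk, hkk]
    exact hpt kb (by omega)

end Gallai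

end Stab
namespace Stab

section Cycle

variable {V : Type*} [Fintype V] [DecidableEq V] {G : SimpleGraph V} {K : Set V}

lemma factor_critical (hK : IsCompOf G (geX G) K) {v : V} (hv : v ∈ K) :
    ∃ P, InternalM G K P ∧ ¬ Covered P v ∧ ∀ z ∈ K, z ≠ v → Covered P z := by
  obtain ⟨P, hP, hexp, hmax⟩ := exists_max_internal hK hv
  refine ⟨P, hP, hexp.not_covered, ?_⟩
  intro z hz hzv
  by_contra hc
  exact gallai_s8 hK P v z hP hmax hv hz (fun h => hzv h.symm) hexp (not_covered_exposed hc)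

lemma odd_cycle_struct (hK : IsCompOf G (geX G) K) (hnt : K.Nontrivial)
    {Kfin : Finset V} (hKfin : ∀ z, z ∈ Kfin ↔ z ∈ K) {v : V} (hv : v ∈ K) :
    ∃ (x : ℕ → V) (k : ℕ) (W : Finset (Sym2 V)),
      Even k ∧ 1 ≤ k ∧ x 0 = v ∧
      (∀ i, i ≤ k → x i ∈ K) ∧
      (∀ i j, i ≤ k → j ≤ k → i ≠ j → x i ≠ x j) ∧
      (∀ i, i < k → G.Adj (x i) (x (i + 1))) ∧
      G.Adj (x k) (x 0) ∧
      IsMatching G W ∧ (∀ e ∈ W, ∀ z ∈ e, z ∈ K) ∧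
      covF W = Kfin \ (Finset.range (k + 1)).image x := by
  classical
  -- a neighbour u of v inside K
  obtain ⟨b0, hb0K, hb0v⟩ : ∃ b0 ∈ K, b0 ≠ v := by
    obtain ⟨p, hp, q, hq, hpq⟩ := hnt
    by_cases h : p = v
    · exact ⟨q, hq, fun hh => hpq (by rw [h, hh])⟩
    · exact ⟨p, hp, h⟩
  have hreach : (G.induce K).Reachable ⟨v, hv⟩ ⟨b0, hb0K⟩ := hK.2.1 ⟨v, hv⟩ ⟨b0, hb0K⟩
  have hdpos : 0 < (G.induce K).dist ⟨v, hv⟩ ⟨b0, hb0K⟩ :=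
    hreach.pos_dist_of_ne (fun h => hb0v (congrArg Subtype.val h).symm)
  obtain ⟨pw, hpw⟩ := SimpleGraph.exists_walk_of_dist_ne_zero
    (by omega : (G.induce K).dist ⟨v, hv⟩ ⟨b0, hb0K⟩ ≠ 0)
  obtain ⟨u, hu, hadj, huv⟩ : ∃ u, u ∈ K ∧ G.Adj v u ∧ u ≠ v := by
    cases pw with
    | nil =>
      rw [SimpleGraph.Walk.length_nil] at hpw
      omega
    | @cons _ t' _ hadj q =>
      exact ⟨↑t', t'.2, hadj, fun h => (G.induce K).loopless.irrefl ⟨v, hv⟩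
        (by rwa [show t' = ⟨v, hv⟩ from Subtype.ext h] at hadj)⟩
  obtain ⟨Pv, hPv, hPvexp, hPvcov⟩ := factor_critical hK hv
  obtain ⟨Pu, hPu, hPuexp, hPucov⟩ := factor_critical hK hu
  have hAm : IsMatching G (Pu \ Pv) := matching_subset_s8 Finset.sdiff_subset hPu.1
  have hBm : IsMatching G (Pv \ Pu) := matching_subset_s8 Finset.sdiff_subset hPv.1
  have hvB : ¬ Covered (Pv \ Pu) v := fun h => hPvexp (h.mono Finset.sdiff_subset)
  obtain ⟨x, k, hx0, htr, hs⟩ := exists_stuck_trail hAm hBm v hvB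
  have hvPu : Covered Pu v := hPucov v hv (fun h => huv h.symm)
  have hvA : Covered (Pu \ Pv) v := by
    obtain ⟨f, hf, hvf⟩ := hvPu
    exact ⟨f, Finset.mem_sdiff.mpr ⟨hf, fun hfPv => hPvexp ⟨f, hfPv, hvf⟩⟩, hvf⟩
  have hk1 : 1 ≤ k := by
    rcases Nat.eq_zero_or_pos k with h0 | h
    swap
    · exact h
    exfalso
    unfold Stuck at hs
    rw [h0, if_pos Even.zero, hx0] at hs
    exact hs hvA
  have hnodup := trail_nodup hAm hBm htr (by rw [hx0]; exact hvB)
  have hmemE : ∀ i, i < k → Even i → s(x i, x (i + 1)) ∈ Pu \ Pv := by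
    intro i hik hev; have := htr i hik; rwa [if_pos hev] at this
  have hmemO : ∀ i, i < k → ¬ Even i → s(x i, x (i + 1)) ∈ Pv \ Pu := by
    intro i hik hev; have := htr i hik; rwa [if_neg hev] at this
  have hxK : ∀ i, i ≤ k → x i ∈ K := by
    intro i
    induction i with
    | zero => intro _; rw [hx0]; exact hv
    | succ n IH =>
      intro hn
      have he : s(x n, x (n + 1)) ∈ Pu ∪ Pv := by
        by_cases hev : Even n
        · exact Finset.mem_union_left _ (Finset.mem_sdiff.mp (hmemE n (by omega) hev)).1
        · exact Finset.mem_union_right _ (Finset.mem_sdiff.mp (hmemO n (by omega) hev)).1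
      rcases Finset.mem_union.mp he with h | h
      · exact hPu.2 _ h _ (Sym2.mem_mk_right _ _)
      · exact hPv.2 _ h _ (Sym2.mem_mk_right _ _)
  -- k is even and x k = u
  have hkev : Even k := by
    by_contra hkodd
    have hs' : ¬ Covered (Pv \ Pu) (x k) := by
      unfold Stuck at hs; rwa [if_neg hkodd] at hs
    have hkend : ¬ Covered Pv (x k) := stuck_upgradeB hPu.1 hPv.1 htr hkodd hs'
    have : x k = v := by
      by_contra hne
      exact hkend (hPvcov (x k) (hxK k (le_refl k)) hne)
    exact (hnodup k (le_refl k) 0 (by omega)) (by rw [hx0, this])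
  have hs' : ¬ Covered (Pu \ Pv) (x k) := by
    unfold Stuck at hs; rwa [if_pos hkev] at hs
  have hkend : ¬ Covered Pu (x k) := stuck_upgradeA hPu.1 hPv.1 htr hkev hk1 hs'
  have hxku : x k = u := by
    by_contra hne
    exact hkend (hPucov (x k) (hxK k (le_refl k)) hne)
  have xne : ∀ i j, i ≤ k → j ≤ k → i ≠ j → x i ≠ x j := by
    intro i j hi hj hij
    rcases Nat.lt_or_ge i j with h | h
    · exact fun he => (hnodup j hj i h) he
    · exact fun he => (hnodup i hi j (by omega)) he.symm
  refine ⟨x, k, Pv \ oddE x k, hkev, hk1, hx0, hxK, xne, ?_, ?_, ?_, ?_, ?_⟩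
  · intro i hik
    have he : s(x i, x (i + 1)) ∈ Pu ∪ Pv := by
      by_cases hev : Even i
      · exact Finset.mem_union_left _ (Finset.mem_sdiff.mp (hmemE i hik hev)).1
      · exact Finset.mem_union_right _ (Finset.mem_sdiff.mp (hmemO i hik hev)).1
    rcases Finset.mem_union.mp he with h | h
    · exact (SimpleGraph.mem_edgeSet G).mp (hPu.1.1 _ h)
    · exact (SimpleGraph.mem_edgeSet G).mp (hPv.1.1 _ h)
  · rw [hxku, hx0]; exact hadj.symm
  · exact matching_subset_s8 Finset.sdiff_subset hPv.1
  · exact fun e he z hz => hPv.2 e (Finset.sdiff_subset he) z hz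
  · -- covF (Pv \ oddE) = Kfin \ trail vertices
    have hPvedge_trail : ∀ (f : Sym2 V), f ∈ Pv → ∀ m, m ≤ k → x m ∈ f → f ∈ oddE x k := by
      intro f hf m hm hxf
      rcases Nat.eq_zero_or_pos m with rfl | hm1
      · exact absurd ⟨f, hf, by rwa [hx0] at hxf⟩ hPvexp
      by_cases hmev : Even m
      · obtain ⟨m', rfl⟩ : ∃ m', m = m' + 1 := ⟨m - 1, by omega⟩
        have hodd : ¬ Even m' := by rw [Nat.even_add_one] at hmev; tauto
        have he1 := hmemO m' (by omega) hodd
        have : f = s(x m', x (m' + 1)) :=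
          matching_unique_s8 hPv.1 hf (Finset.mem_sdiff.mp he1).1 hxf (Sym2.mem_mk_right _ _)
        rw [this]
        simp only [oddE, Finset.mem_image, Finset.mem_filter, Finset.mem_range]
        exact ⟨m', ⟨by omega, hodd⟩, rfl⟩
      · have hmk : m < k := by
          rcases Nat.lt_or_ge m k with h | h
          · exact h
          · exfalso
            have : m = k := by omega
            rw [this] at hmev
            exact hmev hkev
        have he1 := hmemO m hmk hmev
        have : f = s(x m, x (m + 1)) :=
          matching_unique_s8 hPv.1 hf (Finset.mem_sdiff.mp he1).1 hxf (Sym2.mem_mk_left _ _)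
        rw [this]
        simp only [oddE, Finset.mem_image, Finset.mem_filter, Finset.mem_range]
        exact ⟨m, ⟨hmk, hmev⟩, rfl⟩
    ext z
    simp only [mem_covF, Finset.mem_sdiff, Finset.mem_image, Finset.mem_range, hKfin]
    constructor
    · rintro ⟨e, he, hze⟩
      obtain ⟨heP, heO⟩ := Finset.mem_sdiff.mp he
      refine ⟨hPv.2 e heP z hze, ?_⟩
      rintro ⟨m, hm, rfl⟩
      exact heO (hPvedge_trail e heP m (by omega) hze)
    · rintro ⟨hzK, hznot⟩
      have hzv : z ≠ v := by
        intro h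
        exact hznot ⟨0, by omega, by rw [hx0, h]⟩
      obtain ⟨f, hf, hzf⟩ := hPvcov z hzK hzv
      refine ⟨f, Finset.mem_sdiff.mpr ⟨hf, ?_⟩, hzf⟩
      intro hfO
      simp only [oddE, Finset.mem_image, Finset.mem_filter, Finset.mem_range] at hfO
      obtain ⟨m, ⟨hmk, hmev⟩, hfe⟩ := hfO
      rw [← hfe] at hzf
      rw [Sym2.mem_iff] at hzf
      rcases hzf with rfl | rfl
      · exact hznot ⟨m, by omega, rfl⟩
      · exact hznot ⟨m + 1, by omega, rfl⟩

end Cycle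

end Stab
namespace Stab

section PartA

variable {V : Type*} [Fintype V] [DecidableEq V] {G : SimpleGraph V}

lemma M_sub_edgeFin {M : Finset (Sym2 V)} (hM : IsMatching G M) : M ⊆ edgeFin G :=
  fun e he => Finset.mem_filter.mpr ⟨Finset.mem_univ e, hM.1 e he⟩

lemma tightness {M : Finset (Sym2 V)} {y : V → ℝ} {c : Sym2 V → ℝ}
    (hfeas : FeasSol G M y c) :
    (∀ v, ¬ Covered M v → y v = 0) ∧ (∀ e ∈ M, vsum y e = 1 + c e) := by
  obtain ⟨hM, hcnn, ⟨hynn, hfc⟩, hsum⟩ := hfeas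
  have hedge : ∀ e ∈ M, 1 + c e ≤ vsum y e := by
    intro e he
    obtain ⟨a, b, hab, rfl, hadj⟩ := edge_eq (hM.1 e he)
    rw [vsum_mk]
    exact hfc a b hadj
  have hsplit : ∑ v ∈ covF M, y v + ∑ v ∈ Finset.univ.filter (fun v => ¬ Covered M v), y v
      = ∑ v, y v := by
    rw [← Finset.sum_filter_add_sum_filter_not Finset.univ (fun v => Covered M v) y]
    rfl
  have hCL : ∑ v ∈ covF M, y v = ∑ e ∈ M, vsum y e := sum_covF hM y
  have hzero : (∑ e ∈ M, (vsum y e - (1 + c e))) +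
      ∑ v ∈ Finset.univ.filter (fun v => ¬ Covered M v), y v = 0 := by
    rw [Finset.sum_sub_distrib]
    have := hsum
    linarith [hsplit, hCL]
  have h1 : (0 : ℝ) ≤ ∑ e ∈ M, (vsum y e - (1 + c e)) :=
    Finset.sum_nonneg (fun e he => by linarith [hedge e he])
  have h2 : (0 : ℝ) ≤ ∑ v ∈ Finset.univ.filter (fun v => ¬ Covered M v), y v :=
    Finset.sum_nonneg (fun v _ => hynn v)
  have hz1 : ∑ e ∈ M, (vsum y e - (1 + c e)) = 0 := by linarith
  have hz2 : ∑ v ∈ Finset.univ.filter (fun v => ¬ Covered M v), y v = 0 := by linarith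
  constructor
  · intro v hv
    have := (Finset.sum_eq_zero_iff_of_nonneg (fun v _ => hynn v)).mp hz2 v
      (Finset.mem_filter.mpr ⟨Finset.mem_univ v, hv⟩)
    exact this
  · intro e he
    have := (Finset.sum_eq_zero_iff_of_nonneg
      (fun e he => by linarith [hedge e he])).mp hz1 e he
    linarith

lemma sum_two (f : ℕ → ℝ) (k : ℕ) :
    2 * (∑ i ∈ Finset.range (k + 1), f i) =
      (∑ i ∈ Finset.range k, (f i + f (i + 1))) + f 0 + f k := by
  induction k with
  | zero => simp; ring
  | succ n IH =>
    rw [Finset.sum_range_succ, Finset.sum_range_succ (fun i => f i + f (i + 1))]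
    ring_nf
    ring_nf at IH
    linarith

end PartA

end Stab
namespace Stab

theorem stmt8' {V : Type*} [Fintype V] [DecidableEq V] (G : SimpleGraph V)
    (M : Finset (Sym2 V)) (y : V → ℝ) (c : Sym2 V → ℝ)
    (hfeas : FeasSol G M y c) (habcd : PropsABCD G M y c)
    (hmin : ∀ (y' : V → ℝ) (c' : Sym2 V → ℝ), FeasSol G M y' c' → cost G c ≤ cost G c')
    (K : Set V) (hK : IsCompOf G (geX G) K) (hnt : K.Nontrivial)
    (hcov : ∀ v ∈ K, ¬ Exposed M v) :
    (∀ v ∈ K, y v = 1 / 2) ∧ (∀ e ∈ edgesIn G K, c e = 0) := by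
  classical
  obtain ⟨hexp0, htight⟩ := tightness hfeas
  obtain ⟨hMmat, hcnn, ⟨hynn, hfc⟩, hsum⟩ := hfeas
  obtain ⟨hA0, hB0, hC0, hD0, hE0, hFY⟩ := habcd
  set Kfin := (Set.toFinite K).toFinset with hKfindef
  have hKfin : ∀ z, z ∈ Kfin ↔ z ∈ K := fun z => Set.Finite.mem_toFinset _
  have hKcov : ∀ z ∈ K, Covered M z := fun z hz => not_exposed_iff_s8.mp (hcov z hz)
  have hKfinsub : Kfin ⊆ covF M := fun z hz => mem_covF.mpr (hKcov z ((hKfin z).mp hz))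
  have hvsum1 : ∀ e ∈ G.edgeSet, (1 : ℝ) ≤ vsum y e := by
    intro e he
    obtain ⟨a, b, hab, rfl, hadj⟩ := edge_eq he
    have h1 := hfc a b hadj
    have h2 := hcnn s(a, b) (Finset.mem_filter.mpr ⟨Finset.mem_univ _, he⟩)
    rw [vsum_mk]
    dsimp only at h1
    linarith
  have hYnb : ∀ a b, a ∈ K → b ∉ K → G.Adj a b → (1 : ℝ) / 2 ≤ y b := by
    intro a b haK hbK hadj
    refine hFY b ?_
    by_contra hbY
    exact hbK (K_closed hK haK hadj hbY)
  -- the move: y' is 1/2 on K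
  set y' : V → ℝ := fun z => if z ∈ K then 1 / 2 else y z with hy'def
  set c' : Sym2 V → ℝ := fun e => if e ∈ M then vsum y' e - 1 else 0 with hc'def
  have hy'edge : ∀ e ∈ G.edgeSet, (1 : ℝ) ≤ vsum y' e := by
    intro e he
    obtain ⟨a, b, hab, rfl, hadj⟩ := edge_eq he
    rw [vsum_mk]
    by_cases haK : a ∈ K <;> by_cases hbK : b ∈ K
    · simp only [hy'def, if_pos haK, if_pos hbK]; norm_num
    · have := hYnb a b haK hbK hadj
      simp only [hy'def, if_pos haK, if_neg hbK]; linarith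
    · have := hYnb b a hbK haK hadj.symm
      simp only [hy'def, if_neg haK, if_pos hbK]; linarith
    · have h1 := hfc a b hadj
      have h2 := hcnn s(a, b) (Finset.mem_filter.mpr ⟨Finset.mem_univ _, he⟩)
      simp only [hy'def, if_neg haK, if_neg hbK]
      dsimp only at h1
      linarith
  have hfeas' : FeasSol G M y' c' := by
    refine ⟨hMmat, ?_, ⟨?_, ?_⟩, ?_⟩
    · intro e he
      by_cases heM : e ∈ M
      · simp only [hc'def, if_pos heM]
        have := hy'edge e (Finset.mem_filter.mp he).2
        linarith
      · simp only [hc'def, if_neg heM]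
        exact le_refl 0
    · intro z
      by_cases hz : z ∈ K
      · simp only [hy'def, if_pos hz]; norm_num
      · simp only [hy'def, if_neg hz]; exact hynn z
    · intro a b hadj
      by_cases heM : s(a, b) ∈ M
      · have hv : vsum y' s(a, b) = y' a + y' b := rfl
        simp only [hc'def, if_pos heM]
        rw [hv]
        linarith
      · simp only [hc'def, if_neg heM]
        have := hy'edge s(a, b) (by rwa [SimpleGraph.mem_edgeSet])
        rw [vsum_mk] at this
        linarith
    · have hL : ∑ e ∈ M, (1 + c' e) = ∑ e ∈ M, vsum y' e := by
        refine Finset.sum_congr rfl fun e he => ?_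
        simp only [hc'def, if_pos he]; ring
      have hsplit : ∑ v ∈ Finset.univ, y' v
          = ∑ v ∈ covF M, y' v + ∑ v ∈ Finset.univ.filter (fun v => ¬ Covered M v), y' v := by
        rw [← Finset.sum_filter_add_sum_filter_not Finset.univ (fun v => Covered M v) y']
        rfl
      have hz : ∑ v ∈ Finset.univ.filter (fun v => ¬ Covered M v), y' v = 0 := by
        apply Finset.sum_eq_zero
        intro z hz
        obtain ⟨-, hnc⟩ := Finset.mem_filter.mp hz
        have hzK : z ∉ K := fun hh => hnc (hKcov z hh)
        simp only [hy'def, if_neg hzK]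
        exact hexp0 z hnc
      rw [hL, ← sum_covF hMmat, hsplit, hz, add_zero]
  have hcost := hmin y' c' hfeas'
  have hcostc : cost G c = ∑ e ∈ M, c e :=
    (Finset.sum_subset (M_sub_edgeFin hMmat) (fun e heE heM => hA0 e heE heM)).symm
  have hcostc' : cost G c' = ∑ e ∈ M, c' e :=
    (Finset.sum_subset (M_sub_edgeFin hMmat)
      (fun e heE heM => by simp only [hc'def, if_neg heM])).symm
  have h1 : ∑ e ∈ M, c e = ∑ v ∈ covF M, y v - M.card := by
    have hcon : ∀ e ∈ M, c e = vsum y e - 1 := fun e he => by linarith [htight e he]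
    rw [Finset.sum_congr rfl hcon, Finset.sum_sub_distrib, sum_covF hMmat]
    simp
  have h2 : ∑ e ∈ M, c' e = ∑ v ∈ covF M, y' v - M.card := by
    have hcon : ∀ e ∈ M, c' e = vsum y' e - 1 := fun e he => by
      simp only [hc'def, if_pos he]
    rw [Finset.sum_congr rfl hcon, Finset.sum_sub_distrib, sum_covF hMmat]
    simp
  have hcovle : ∑ v ∈ covF M, y v ≤ ∑ v ∈ covF M, y' v := by
    rw [hcostc, hcostc', h1, h2] at hcost
    linarith
  have hupper : ∑ v ∈ Kfin, y v ≤ (Kfin.card : ℝ) / 2 := by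
    have hdiff : ∑ v ∈ covF M, (y' v - y v) = ∑ v ∈ Kfin, (y' v - y v) := by
      symm
      apply Finset.sum_subset hKfinsub
      intro z hz hzK
      have hzK' : z ∉ K := fun hh => hzK ((hKfin z).mpr hh)
      simp only [hy'def, if_neg hzK']
      ring
    have hKdiff : ∑ v ∈ Kfin, (y' v - y v) = (Kfin.card : ℝ) / 2 - ∑ v ∈ Kfin, y v := by
      have hcon : ∀ z ∈ Kfin, y' z - y z = 1 / 2 - y z := fun z hz => by
        simp only [hy'def, if_pos ((hKfin z).mp hz)]
      rw [Finset.sum_congr rfl hcon, Finset.sum_sub_distrib, Finset.sum_const, nsmul_eq_mul]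
      ring
    have hge : (0 : ℝ) ≤ ∑ v ∈ covF M, (y' v - y v) := by
      rw [Finset.sum_sub_distrib]
      linarith
    rw [hdiff, hKdiff] at hge
    linarith
  -- per-vertex: y = 1/2 on K
  have hyhalf : ∀ v ∈ K, y v = 1 / 2 := by
    intro v hv
    obtain ⟨x, k, W, hkev, hk1, hx0, hxK, hxne, hadjs, hadjclose, hWm, hWint, hWcov⟩ :=
      odd_cycle_struct hK hnt hKfin hv
    set trailFin := (Finset.range (k + 1)).image x with htf
    have htfsub : trailFin ⊆ Kfin := by
      intro z hz
      simp only [htf, Finset.mem_image, Finset.mem_range] at hz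
      obtain ⟨i, hi, rfl⟩ := hz
      exact (hKfin _).mpr (hxK i (by omega))
    have htfcard : trailFin.card = k + 1 := by
      rw [htf, Finset.card_image_of_injOn, Finset.card_range]
      intro i hi j hj hij
      by_contra hne
      exact (hxne i j (by simp only [Finset.coe_range, Set.mem_Iio] at hi; omega)
        (by simp only [Finset.coe_range, Set.mem_Iio] at hj; omega) hne) hij
    have hWcard := card_covF hWm
    rw [hWcov, Finset.card_sdiff_of_subset htfsub] at hWcard
    have htfK : trailFin.card ≤ Kfin.card := Finset.card_le_card htfsub
    have hKcard : Kfin.card = (k + 1) + 2 * W.card := by omega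
    have hsplitK : ∑ z ∈ Kfin, y z = ∑ z ∈ Kfin \ trailFin, y z + ∑ z ∈ trailFin, y z :=
      (Finset.sum_sdiff htfsub).symm
    have hT : ∑ z ∈ trailFin, y z = ∑ i ∈ Finset.range (k + 1), y (x i) := by
      rw [htf, Finset.sum_image]
      intro i hi j hj hij
      by_contra hne
      exact (hxne i j (by simp only [Finset.mem_coe, Finset.mem_range] at hi; omega)
        (by simp only [Finset.mem_coe, Finset.mem_range] at hj; omega) hne) hij
    have hSW : ∑ z ∈ Kfin \ trailFin, y z = ∑ e ∈ W, vsum y e := by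
      rw [← hWcov, sum_covF hWm]
    have hSWge : (W.card : ℝ) ≤ ∑ e ∈ W, vsum y e := by
      have : ∀ e ∈ W, (1 : ℝ) ≤ vsum y e := fun e he => hvsum1 e (hWm.1 e he)
      calc (W.card : ℝ) = ∑ _e ∈ W, (1 : ℝ) := by simp
        _ ≤ ∑ e ∈ W, vsum y e := Finset.sum_le_sum this
    have hpair : ∀ i ∈ Finset.range k, (1 : ℝ) ≤ y (x i) + y (x (i + 1)) := by
      intro i hi
      have hadj := hadjs i (Finset.mem_range.mp hi)
      have := hvsum1 s(x i, x (i + 1)) (SimpleGraph.mem_edgeSet G |>.mpr hadj)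
      rwa [vsum_mk] at this
    have hclose : (1 : ℝ) ≤ y (x k) + y (x 0) := by
      have := hvsum1 s(x k, x 0) (SimpleGraph.mem_edgeSet G |>.mpr hadjclose)
      rwa [vsum_mk] at this
    have h2T := sum_two (fun i => y (x i)) k
    have hpairsge : (k : ℝ) ≤ ∑ i ∈ Finset.range k, (y (x i) + y (x (i + 1))) := by
      calc (k : ℝ) = ∑ _i ∈ Finset.range k, (1 : ℝ) := by simp
        _ ≤ _ := Finset.sum_le_sum hpair
    have hTge : ((k : ℝ) + 1) / 2 ≤ ∑ i ∈ Finset.range (k + 1), y (x i) := by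
      linarith
    -- equality
    have hupK : ∑ z ∈ Kfin, y z ≤ ((k : ℝ) + 1) / 2 + W.card := by
      have : (Kfin.card : ℝ) = (k : ℝ) + 1 + 2 * W.card := by exact_mod_cast hKcard
      rw [this] at hupper
      linarith
    have hTeq : ∑ i ∈ Finset.range (k + 1), y (x i) = ((k : ℝ) + 1) / 2 := by
      rw [hsplitK, hT, hSW] at hupK
      linarith
    have hsum_terms : ∑ i ∈ Finset.range k, (y (x i) + y (x (i + 1))) + (y (x k) + y (x 0))
        = (k : ℝ) + 1 := by
      linarith
    have hclose_eq : y (x k) + y (x 0) = 1 := by linarith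
    have hpairs_sum : ∑ i ∈ Finset.range k, (y (x i) + y (x (i + 1))) = (k : ℝ) := by linarith
    have hallpairs : ∀ i ∈ Finset.range k, y (x i) + y (x (i + 1)) = 1 := by
      have hzz : ∑ i ∈ Finset.range k, (y (x i) + y (x (i + 1)) - 1) = 0 := by
        rw [Finset.sum_sub_distrib]
        simp only [Finset.sum_const, Finset.card_range, nsmul_eq_mul, mul_one]
        linarith
      intro i hi
      have := (Finset.sum_eq_zero_iff_of_nonneg
        (fun i hi => by linarith [hpair i hi])).mp hzz i hi
      linarith
    have hparit : ∀ i, i ≤ k → y (x i) = if Even i then y (x 0) else 1 - y (x 0) := by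
      intro i
      induction i with
      | zero => intro _; simp
      | succ n IH =>
        intro hn
        have hpn := hallpairs n (Finset.mem_range.mpr (by omega))
        have hyn := IH (by omega)
        by_cases hev : Even n
        · rw [if_neg (by rw [Nat.even_add_one]; tauto)]
          rw [if_pos hev] at hyn
          linarith
        · rw [if_pos (by rw [Nat.even_add_one]; tauto)]
          rw [if_neg hev] at hyn
          linarith
    have hyk := hparit k (le_refl k)
    rw [if_pos hkev] at hyk
    rw [← hx0]
    linarith
  refine ⟨hyhalf, ?_⟩
  intro e heI
  obtain ⟨-, heG, heK⟩ : e ∈ Finset.univ ∧ e ∈ G.edgeSet ∧ ∀ z ∈ e, z ∈ K := by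
    have := Finset.mem_filter.mp heI
    exact ⟨this.1, this.2.1, this.2.2⟩
  by_cases heM : e ∈ M
  · have htt := htight e heM
    obtain ⟨a, b, hab, rfl, hadj⟩ := edge_eq heG
    rw [vsum_mk] at htt
    have hya := hyhalf a (heK a (Sym2.mem_mk_left _ _))
    have hyb := hyhalf b (heK b (Sym2.mem_mk_right _ _))
    linarith
  · exact hA0 e (Finset.mem_filter.mpr ⟨Finset.mem_univ _, heG⟩) heM

end Stab

namespace Stab

/-- for a feasible MFASP solution `(M,y,c)` satisfying properties (a)–(d)
in which `(y,c)` minimizes the cost among all pairs forming a feasible solution with the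
same matching `M`, every nontrivial connected component `K` of `G[X]` all of whose
vertices are covered by `M` has `y ≡ 1/2` on `V(K)` and `c ≡ 0` on `E(K)`. -/
theorem stmt8 {V : Type*} [Fintype V] [DecidableEq V] (G : SimpleGraph V)
    (M : Finset (Sym2 V)) (y : V → ℝ) (c : Sym2 V → ℝ)
    (hfeas : FeasSol G M y c) (habcd : PropsABCD G M y c)
    (hmin : ∀ (y' : V → ℝ) (c' : Sym2 V → ℝ), FeasSol G M y' c' → cost G c ≤ cost G c')
    (K : Set V) (hK : IsCompOf G (geX G) K) (hnt : K.Nontrivial)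
    (hcov : ∀ v ∈ K, ¬ Exposed M v) :
    (∀ v ∈ K, y v = 1 / 2) ∧ (∀ e ∈ edgesIn G K, c e = 0) := by
  exact stmt8' G M y c hfeas habcd hmin K hK hnt hcov

end Stab
end
end
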